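/- arXiv:1707.09208 — 13 statements merged into one kernel-verified Lean document; each statement's English description precedes it below -/
import Mathlib

section
/- Let f : ℝ^n → [0,∞) be a convex function and ℒ ⊆ ℝ^n an affine subspace such that the set 𝒞* := argmin_{x∈ℒ} f(x) is nonempty. Let x* be the unique element of 𝒞* of smallest Euclidean norm, i.e. x* = argmin{‖x‖² : x ∈ 𝒞*}. For each α > 0 the problem min_{x∈ℒ} f(x) + (α/2)‖x‖² has a unique minimizer x_α. Then lim_{α→0⁺} x_α = x*. -/
open Filter Topology

/-
The regularized minimizers stay in the ball of radius `‖x*‖`: comparing with `x*` gives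
`f xₐ + (α/2)‖xₐ‖² ≤ f x* + (α/2)‖x*‖²` while `f x* ≤ f xₐ`. The same comparison gives
`f xₐ ≤ f x* + (α/2)‖x*‖²`, so every cluster point of `xₐ` as `α → 0⁺` is a minimizer of `f`
on `ℒ` of norm at most `‖x*‖`. The minimizers of `f` on `ℒ` form a convex set, and in a strictly
convex space a convex set has at most one point of minimal norm, so that cluster point is `x*`.
By compactness of the ball, `xₐ → x*`.
-/

lemma norm_le_of_add_sq_norm_le {E : Type*} [SeminormedAddGroup E] {f : E → ℝ} {α : ℝ} (hα : 0 < α)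
    {x y : E} (hyx : f y ≤ f x) (h : f x + α / 2 * ‖x‖ ^ 2 ≤ f y + α / 2 * ‖y‖ ^ 2) :
    ‖x‖ ≤ ‖y‖ := by
  have hsq : ‖x‖ ^ 2 ≤ ‖y‖ ^ 2 := le_of_mul_le_mul_left (by linarith) (by positivity : 0 < α / 2)
  exact pow_le_pow_iff_left₀ (norm_nonneg x) (norm_nonneg y) two_ne_zero |>.mp hsq

lemma Convex.eq_of_isMinOn_norm {E : Type*} [NormedAddCommGroup E] [NormedSpace ℝ E]
    [StrictConvexSpace ℝ E] {S : Set E} (hS : Convex ℝ S) {x y : E} (hy : y ∈ S)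
    (hmin : IsMinOn (‖·‖) S y) (hx : x ∈ S) (hxy : ‖x‖ ≤ ‖y‖) : x = y := by
  by_contra hne
  have hmid : (1 / 2 : ℝ) • x + (1 / 2 : ℝ) • y ∈ S :=
    hS hx hy (by norm_num) (by norm_num) (by norm_num)
  have hlt := norm_combo_lt_of_ne hxy le_rfl hne (by norm_num : (0 : ℝ) < 1 / 2)
    (by norm_num : (0 : ℝ) < 1 / 2) (by norm_num)
  exact (hmin hmid).not_gt hlt

lemma Continuous.le_of_mapClusterPt {X ι : Type*} [TopologicalSpace X] {f : X → ℝ}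
    (hf : Continuous f) {u : ι → X} {g : ι → ℝ} {l : Filter ι} {x : X} {c : ℝ}
    (hx : MapClusterPt x l u) (hg : Tendsto g l (𝓝 c)) (hle : ∀ᶠ i in l, f (u i) ≤ g i) :
    f x ≤ c := by
  refine le_of_forall_pos_le_add fun ε hε => ?_
  refine (isClosed_le hf continuous_const).mem_of_mapClusterPt hx ?_
  filter_upwards [hle, hg.eventually (ge_mem_nhds (lt_add_of_pos_right c hε))] with i h1 h2
  exact h1.trans h2

theorem statement0_general (n : ℕ) (f : EuclideanSpace ℝ (Fin n) → ℝ)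
    (hconv : ConvexOn ℝ Set.univ f)
    (L : AffineSubspace ℝ (EuclideanSpace ℝ (Fin n)))
    (xstar : EuclideanSpace ℝ (Fin n))
    (hxstarL : xstar ∈ L)
    (hxstarmin : ∀ y ∈ L, f xstar ≤ f y)
    (hxstarnorm : ∀ y ∈ L, (∀ z ∈ L, f y ≤ f z) → ‖xstar‖ ≤ ‖y‖)
    (xa : ℝ → EuclideanSpace ℝ (Fin n))
    (hxa : ∀ α : ℝ, 0 < α → xa α ∈ L ∧
      ∀ y ∈ L, f (xa α) + (α / 2) * ‖xa α‖ ^ 2 ≤ f y + (α / 2) * ‖y‖ ^ 2) :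
    Tendsto xa (nhdsWithin 0 (Set.Ioi 0)) (nhds xstar) := by
  have hfc : Continuous f := continuousOn_univ.mp (hconv.continuousOn isOpen_univ)
  have hpos : ∀ᶠ α in 𝓝[>] (0 : ℝ), 0 < α := self_mem_nhdsWithin
  set S := (L : Set (EuclideanSpace ℝ (Fin n))) ∩ {y | f y ≤ f xstar}
  have hS : Convex ℝ S := L.convex.inter (by simpa using hconv.convex_le (f xstar))
  have hSmin : IsMinOn (‖·‖) S xstar := fun y ⟨hyL, hy⟩ =>
    hxstarnorm y hyL fun z hz => hy.trans (hxstarmin z hz)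
  refine (isCompact_closedBall 0 ‖xstar‖).tendsto_nhds_of_unique_mapClusterPt ?_ ?_
  · filter_upwards [hpos] with α hα
    rw [mem_closedBall_zero_iff]
    exact norm_le_of_add_sq_norm_le hα (hxstarmin _ (hxa α hα).1) ((hxa α hα).2 xstar hxstarL)
  · intro x hxball hx
    have hxL : x ∈ L := L.closed_of_finiteDimensional.mem_of_mapClusterPt hx <| by
      filter_upwards [hpos] with α hα using (hxa α hα).1
    have hlim : Tendsto (fun α : ℝ => f xstar + α / 2 * ‖xstar‖ ^ 2) (𝓝[>] 0) (𝓝 (f xstar)) := by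
      have : Continuous fun α : ℝ => f xstar + α / 2 * ‖xstar‖ ^ 2 := by fun_prop
      simpa using this.continuousWithinAt.tendsto (x := 0) (s := Set.Ioi 0)
    have hfx : f x ≤ f xstar := hfc.le_of_mapClusterPt hx hlim <| by
      filter_upwards [hpos] with α hα
      have := (hxa α hα).2 xstar hxstarL
      nlinarith [sq_nonneg ‖xa α‖]
    exact hS.eq_of_isMinOn_norm ⟨hxstarL, le_refl (f xstar)⟩ hSmin ⟨hxL, hfx⟩
      (mem_closedBall_zero_iff.mp hxball)

/-- Let `f : ℝⁿ → [0,∞)` be convex and `L ⊆ ℝⁿ` an affine subspace on which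
`f` attains its minimum. Let `xstar` be the minimum-norm element of the argmin set `𝒞*`, and for
each `α > 0` let `xa α` be the (unique) minimizer over `L` of `f x + (α/2)‖x‖²`.
Then `xa α → xstar` as `α → 0⁺`. -/
theorem statement0 (n : ℕ) (f : EuclideanSpace ℝ (Fin n) → ℝ)
    (hconv : ConvexOn ℝ Set.univ f) (hnonneg : ∀ x, 0 ≤ f x)
    (L : AffineSubspace ℝ (EuclideanSpace ℝ (Fin n)))
    (xstar : EuclideanSpace ℝ (Fin n))
    (hxstarL : xstar ∈ L)
    (hxstarmin : ∀ y ∈ L, f xstar ≤ f y)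
    (hxstarnorm : ∀ y ∈ L, (∀ z ∈ L, f y ≤ f z) → ‖xstar‖ ≤ ‖y‖)
    (xa : ℝ → EuclideanSpace ℝ (Fin n))
    (hxa : ∀ α : ℝ, 0 < α → xa α ∈ L ∧
      ∀ y ∈ L, f (xa α) + (α / 2) * ‖xa α‖ ^ 2 ≤ f y + (α / 2) * ‖y‖ ^ 2) :
    Tendsto xa (nhdsWithin 0 (Set.Ioi 0)) (nhds xstar) :=
  statement0_general n f hconv L xstar hxstarL hxstarmin hxstarnorm xa hxa
end

section
/- Let f : ℝ^n → [0,∞) be a convex function and ℒ ⊆ ℝ^n an affine subspace such that 𝒞* := argmin_{x∈ℒ} f(x) is nonempty, and let x* be the element of 𝒞* of smallest Euclidean norm. For α > 0 write f(x,α) := f(x) + (α/2)‖x‖² and let x_α be the unique minimizer of f(·,α) over ℒ. Then lim_{α→0⁺} ( f(x_α,α) − f(x*,α) ) / α = 0. -/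
open Filter

/-- With `f` convex and nonnegative on ℝⁿ, `L` an affine subspace, `xstar` the
minimum-norm element of the argmin set of `f` over `L`, and `xa α` the minimizer over `L` of
`f(x,α) := f x + (α/2)‖x‖²`, we have `(f(x_α,α) − f(x*,α))/α → 0` as `α → 0⁺`. -/
theorem statement1 (n : ℕ) (f : EuclideanSpace ℝ (Fin n) → ℝ)
    (hconv : ConvexOn ℝ Set.univ f) (hnonneg : ∀ x, 0 ≤ f x)
    (L : AffineSubspace ℝ (EuclideanSpace ℝ (Fin n)))
    (xstar : EuclideanSpace ℝ (Fin n))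
    (hxstarL : xstar ∈ L)
    (hxstarmin : ∀ y ∈ L, f xstar ≤ f y)
    (hxstarnorm : ∀ y ∈ L, (∀ z ∈ L, f y ≤ f z) → ‖xstar‖ ≤ ‖y‖)
    (xa : ℝ → EuclideanSpace ℝ (Fin n))
    (hxa : ∀ α : ℝ, 0 < α → xa α ∈ L ∧
      ∀ y ∈ L, f (xa α) + (α / 2) * ‖xa α‖ ^ 2 ≤ f y + (α / 2) * ‖y‖ ^ 2) :
    Tendsto
      (fun α : ℝ =>
        ((f (xa α) + (α / 2) * ‖xa α‖ ^ 2) - (f xstar + (α / 2) * ‖xstar‖ ^ 2)) / α)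
      (nhdsWithin 0 (Set.Ioi 0)) (nhds 0) := by
  set l : Filter ℝ := nhdsWithin 0 (Set.Ioi 0) with hl
  have hcont : Continuous f := hconv.locallyLipschitz.continuous
  -- basic facts for α > 0
  have hle : ∀ α : ℝ, 0 < α → f xstar ≤ f (xa α) := fun α hα =>
    hxstarmin _ (hxa α hα).1
  have hkey : ∀ α : ℝ, 0 < α →
      f (xa α) + (α / 2) * ‖xa α‖ ^ 2 ≤ f xstar + (α / 2) * ‖xstar‖ ^ 2 := fun α hα =>
    (hxa α hα).2 xstar hxstarL
  have hsq : ∀ α : ℝ, 0 < α → ‖xa α‖ ^ 2 ≤ ‖xstar‖ ^ 2 := by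
    intro α hα
    have h1 := hkey α hα
    have h2 := hle α hα
    nlinarith
  have hnle : ∀ α : ℝ, 0 < α → ‖xa α‖ ≤ ‖xstar‖ := by
    intro α hα
    nlinarith [hsq α hα, norm_nonneg (xa α), norm_nonneg xstar]
  -- f (xa α) → f xstar
  have hf_tend : Tendsto (fun α => f (xa α)) l (nhds (f xstar)) := by
    have hupper : Tendsto (fun α : ℝ => f xstar + (α / 2) * ‖xstar‖ ^ 2) l
        (nhds (f xstar)) := by
      have : Tendsto (fun α : ℝ => f xstar + (α / 2) * ‖xstar‖ ^ 2) (nhds 0)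
          (nhds (f xstar + ((0:ℝ) / 2) * ‖xstar‖ ^ 2)) :=
        (continuous_const.add ((continuous_id.div_const 2).mul continuous_const)).tendsto 0
      simpa using this.mono_left nhdsWithin_le_nhds
    refine tendsto_of_tendsto_of_tendsto_of_le_of_le' tendsto_const_nhds hupper ?_ ?_
    · filter_upwards [self_mem_nhdsWithin] with α hα using hle α hα
    · filter_upwards [self_mem_nhdsWithin] with α hα
      have h1 := hkey α hα
      have hα' : (0:ℝ) < α := hα
      nlinarith [sq_nonneg ‖xa α‖]
  -- ‖xa α‖² → ‖xstar‖²
  have hnorm_tend : Tendsto (fun α => ‖xa α‖ ^ 2) l (nhds (‖xstar‖ ^ 2)) := by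
    rw [tendsto_order]
    constructor
    · intro c hc
      by_contra hcon
      rw [not_eventually] at hcon
      have hNB : (l ⊓ Filter.principal {α | ¬ c < ‖xa α‖ ^ 2}).NeBot :=
        Filter.frequently_iff_neBot.mp hcon
      set l' := l ⊓ Filter.principal {α | ¬ c < ‖xa α‖ ^ 2} with hl'
      have hl'pos : ∀ᶠ α in l', 0 < α := by
        have : ∀ᶠ α in l, 0 < α := self_mem_nhdsWithin
        exact this.filter_mono inf_le_left
      have hF : Filter.map xa l' ≤ Filter.principal (Metric.closedBall 0 ‖xstar‖) := by
        rw [Filter.le_principal_iff, Filter.mem_map]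
        filter_upwards [hl'pos] with α hα
        simpa [Metric.mem_closedBall, dist_zero_right] using hnle α hα
      haveI : (Filter.map xa l').NeBot := Filter.NeBot.map hNB xa
      obtain ⟨xbar, hxbar_mem, hxbar⟩ :=
        (isCompact_closedBall (0 : EuclideanSpace ℝ (Fin n)) ‖xstar‖).exists_clusterPt hF
      -- xbar ∈ L
      have hxbarL : xbar ∈ L := by
        have hclosed : IsClosed (L : Set (EuclideanSpace ℝ (Fin n))) :=
          L.closed_of_finiteDimensional
        have hle' : Filter.map xa l' ≤ Filter.principal (L : Set (EuclideanSpace ℝ (Fin n))) := by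
          rw [Filter.le_principal_iff, Filter.mem_map]
          filter_upwards [hl'pos] with α hα using (hxa α hα).1
        have : ClusterPt xbar (Filter.principal (L : Set (EuclideanSpace ℝ (Fin n)))) :=
          hxbar.mono hle'
        rwa [← mem_closure_iff_clusterPt, hclosed.closure_eq] at this
      -- ‖xbar‖² ≤ c
      have hxbar_sq : ‖xbar‖ ^ 2 ≤ c := by
        have hclosed : IsClosed {x : EuclideanSpace ℝ (Fin n) | ‖x‖ ^ 2 ≤ c} :=
          isClosed_le (by fun_prop) continuous_const
        have hle' : Filter.map xa l' ≤
            Filter.principal {x : EuclideanSpace ℝ (Fin n) | ‖x‖ ^ 2 ≤ c} := by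
          rw [Filter.le_principal_iff, Filter.mem_map]
          have : {α : ℝ | ¬ c < ‖xa α‖ ^ 2} ∈ l' :=
            Filter.mem_inf_of_right (Filter.mem_principal_self _)
          filter_upwards [this] with α hα
          exact le_of_not_gt hα
        have : ClusterPt xbar (Filter.principal {x : EuclideanSpace ℝ (Fin n) | ‖x‖ ^ 2 ≤ c}) :=
          hxbar.mono hle'
        rw [← mem_closure_iff_clusterPt, hclosed.closure_eq] at this
        exact this
      -- f xbar = f xstar
      have hfxbar : f xbar = f xstar := by
        have h1 : ClusterPt (f xbar) (Filter.map f (Filter.map xa l')) :=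
          hxbar.map hcont.continuousAt Filter.tendsto_map
        have h2 : Filter.map f (Filter.map xa l') ≤ nhds (f xstar) := by
          rw [Filter.map_map]
          exact Filter.Tendsto.mono_left hf_tend inf_le_left
        haveI : (Filter.map f (Filter.map xa l')).NeBot := Filter.NeBot.map inferInstance f
        have h3 : NeBot (nhds (f xbar) ⊓ nhds (f xstar)) :=
          (h1.mono h2)
        exact eq_of_nhds_neBot h3
      have hmin : ∀ z ∈ L, f xbar ≤ f z := fun z hz => hfxbar ▸ hxstarmin z hz
      have hns := hxstarnorm xbar hxbarL hmin
      nlinarith [norm_nonneg xbar, norm_nonneg xstar]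
    · intro c hc
      filter_upwards [self_mem_nhdsWithin] with α hα
      exact lt_of_le_of_lt (hsq α hα) hc
  -- squeeze
  have hg : Tendsto (fun α => (‖xa α‖ ^ 2 - ‖xstar‖ ^ 2) / 2) l (nhds 0) := by
    have := (hnorm_tend.sub (tendsto_const_nhds (x := ‖xstar‖ ^ 2))).div_const 2
    simpa using this
  refine tendsto_of_tendsto_of_tendsto_of_le_of_le' hg tendsto_const_nhds ?_ ?_
  · filter_upwards [self_mem_nhdsWithin] with α hα
    have hα' : (0:ℝ) < α := hα
    rw [le_div_iff₀ hα']
    have := hle α hα'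
    nlinarith
  · filter_upwards [self_mem_nhdsWithin] with α hα
    have hα' : (0:ℝ) < α := hα
    apply div_nonpos_of_nonpos_of_nonneg
    · linarith [hkey α hα']
    · exact le_of_lt hα'
end

section
/- Let f : ℝ^n → [0,∞) be a convex function and ℒ ⊆ ℝ^n an affine subspace such that 𝒞* := argmin_{x∈ℒ} f(x) is nonempty, with minimum value f* := min_{x∈ℒ} f(x), and let x* be the element of 𝒞* of smallest Euclidean norm. For λ ≥ 0 define g(λ) := min_{x∈ℒ} ( ‖x‖² + λ(f(x) − f*) ). Then sup_{λ≥0} g(λ) = ‖x*‖², and consequently lim_{λ→∞} g(λ) = ‖x*‖². -/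
/-!
Every penalized value `g l` is at most `‖xstar‖²` (evaluate at `xstar`), and `g` is monotone because
the penalty `f - fstar` is nonnegative on `L`. Conversely, if `M` bounds all `g l`, pick for each
`k : ℕ` a point `x k ∈ L` with `‖x k‖² + k (f (x k) - fstar) ≤ M`. These lie in a compact ball, and
`k (f (x k) - fstar) ≤ M` forces every cluster point `a` to minimize `f` on `L` (which is closed, and
`f` is continuous since it is convex in finite dimension). Hence `‖xstar‖² ≤ ‖a‖² ≤ M`.
-/

open Filter Set

theorem tendsto_atTop_of_monotoneOn_Ici_of_isLUB {α β : Type*} [SemilatticeSup α]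
    [TopologicalSpace β] [Preorder β] [SupConvergenceClass β] {g : α → β} {a : α} {c : β}
    (hmono : MonotoneOn g (Ici a)) (hlub : IsLUB (g '' Ici a) c) :
    Tendsto g atTop (nhds c) := by
  rw [← tendsto_comp_val_Ici_atTop (a := a)]
  refine tendsto_atTop_isLUB (fun x y hxy => hmono x.2 y.2 hxy) ?_
  rwa [← image_eq_range]

theorem monotoneOn_Ici_of_isLeast_penalized {α : Type*} {S : Set α} {q p : α → ℝ}
    (hp : ∀ x ∈ S, 0 ≤ p x) {g : ℝ → ℝ}
    (hg : ∀ l : ℝ, 0 ≤ l → IsLeast ((fun x => q x + l * p x) '' S) (g l)) :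
    MonotoneOn g (Ici 0) := by
  intro a ha b hb hab
  obtain ⟨x, hxS, hx⟩ := (hg b hb).1
  calc g a ≤ q x + a * p x := (hg a ha).2 ⟨x, hxS, rfl⟩
    _ ≤ q x + b * p x := by gcongr; exact hp x hxS
    _ = g b := hx

theorem exists_penalty_nonpos_norm_sq_le_of_penalized_le {E : Type*} [NormedAddCommGroup E]
    [ProperSpace E] {S : Set E} (hS : IsClosed S) {p : E → ℝ} (hp : LowerSemicontinuous p)
    (hp_nonneg : ∀ x ∈ S, 0 ≤ p x) {M : ℝ}
    (hM : ∀ l : ℝ, 0 ≤ l → ∃ x ∈ S, ‖x‖ ^ 2 + l * p x ≤ M) :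
    ∃ a ∈ S, p a ≤ 0 ∧ ‖a‖ ^ 2 ≤ M := by
  choose x hxS hxM using fun k : ℕ => hM k k.cast_nonneg
  have hpenalty : ∀ k : ℕ, (k : ℝ) * p (x k) ≤ M := fun k => by
    nlinarith [hxM k, sq_nonneg ‖x k‖]
  have hnorm : ∀ k : ℕ, ‖x k‖ ^ 2 ≤ M := fun k => by
    nlinarith [hxM k, mul_nonneg k.cast_nonneg (hp_nonneg _ (hxS k))]
  have hM0 : 0 ≤ M := (sq_nonneg _).trans (hnorm 0)
  have hball : ∀ k, x k ∈ Metric.closedBall (0 : E) √M := fun k => by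
    rw [mem_closedBall_zero_iff]
    exact Real.le_sqrt_of_sq_le (hnorm k)
  obtain ⟨a, ha, φ, hφ, hlim⟩ := (isCompact_closedBall (0 : E) √M).tendsto_subseq hball
  refine ⟨a, hS.mem_of_tendsto hlim (.of_forall fun k => hxS (φ k)), ?_, ?_⟩
  · by_contra! hpa
    obtain ⟨c, hc0, hca⟩ := exists_between hpa
    have hp_gt : ∀ᶠ k in atTop, c < p (x (φ k)) := hlim.eventually (hp a c hca)
    have hφc_gt : ∀ᶠ k in atTop, M < (φ k : ℝ) * c :=
      ((tendsto_natCast_atTop_atTop.comp hφ.tendsto_atTop).atTop_mul_const hc0).eventually_gt_atTop M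
    obtain ⟨k, hpk, hφk⟩ := (hp_gt.and hφc_gt).exists
    nlinarith [hpenalty (φ k), (φ k).cast_nonneg (α := ℝ)]
  · calc ‖a‖ ^ 2 ≤ √M ^ 2 := by gcongr; exact mem_closedBall_zero_iff.1 ha
      _ = M := Real.sq_sqrt hM0

theorem statement3_general (n : ℕ) (f : EuclideanSpace ℝ (Fin n) → ℝ)
    (hconv : ConvexOn ℝ Set.univ f)
    (L : AffineSubspace ℝ (EuclideanSpace ℝ (Fin n)))
    (fstar : ℝ)
    (hfstar : IsLeast (f '' (L : Set (EuclideanSpace ℝ (Fin n)))) fstar)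
    (xstar : EuclideanSpace ℝ (Fin n))
    (hxstarL : xstar ∈ L)
    (hxstarmin : ∀ y ∈ L, f xstar ≤ f y)
    (hxstarnorm : ∀ y ∈ L, (∀ z ∈ L, f y ≤ f z) → ‖xstar‖ ≤ ‖y‖)
    (g : ℝ → ℝ)
    (hg : ∀ l : ℝ, 0 ≤ l →
      IsLeast ((fun x => ‖x‖ ^ 2 + l * (f x - fstar)) ''
        (L : Set (EuclideanSpace ℝ (Fin n)))) (g l)) :
    IsLUB (g '' Set.Ici 0) (‖xstar‖ ^ 2) ∧
      Tendsto g atTop (nhds (‖xstar‖ ^ 2)) := by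
  have hfstar_le : ∀ y ∈ L, fstar ≤ f y := fun y hy => hfstar.2 ⟨y, hy, rfl⟩
  have hfxstar : f xstar = fstar := by
    obtain ⟨y, hy, rfl⟩ := hfstar.1
    exact (hxstarmin y hy).antisymm (hfstar_le xstar hxstarL)
  have hpenalty_nonneg : ∀ y ∈ L, 0 ≤ f y - fstar := fun y hy => sub_nonneg.2 (hfstar_le y hy)
  have hlub : IsLUB (g '' Ici 0) (‖xstar‖ ^ 2) := by
    refine ⟨?_, fun M hM => ?_⟩
    · rintro _ ⟨l, hl, rfl⟩
      simpa [hfxstar] using (hg l hl).2 ⟨xstar, hxstarL, rfl⟩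
    · have hfc : Continuous f := continuousOn_univ.1 (hconv.continuousOn isOpen_univ)
      obtain ⟨a, haL, hfa, haM⟩ := exists_penalty_nonpos_norm_sq_le_of_penalized_le
        L.closed_of_finiteDimensional (hfc.sub continuous_const).lowerSemicontinuous hpenalty_nonneg
        fun l hl => (hg l hl).1.imp fun x ⟨hxL, hx⟩ => ⟨hxL, hx.le.trans (hM ⟨l, hl, rfl⟩)⟩
      have hxa : ‖xstar‖ ≤ ‖a‖ :=
        hxstarnorm a haL fun z hz => (sub_nonpos.1 hfa).trans (hfstar_le z hz)
      exact (pow_le_pow_left₀ (norm_nonneg _) hxa 2).trans haM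
  exact ⟨hlub, tendsto_atTop_of_monotoneOn_Ici_of_isLUB
    (monotoneOn_Ici_of_isLeast_penalized hpenalty_nonneg hg) hlub⟩

/-- Let `f` be convex and nonnegative on ℝⁿ, `L` an affine subspace on which `f`
attains its minimum value `fstar`, and let `xstar` be the minimum-norm element of the argmin set.
For `l ≥ 0` let `g l` be the minimum over `L` of `‖x‖² + l (f x − fstar)`. Then
`sup_{l ≥ 0} g l = ‖xstar‖²`, and consequently `g l → ‖xstar‖²` as `l → ∞`. -/
theorem statement3 (n : ℕ) (f : EuclideanSpace ℝ (Fin n) → ℝ)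
    (hconv : ConvexOn ℝ Set.univ f) (hnonneg : ∀ x, 0 ≤ f x)
    (L : AffineSubspace ℝ (EuclideanSpace ℝ (Fin n)))
    (fstar : ℝ)
    (hfstar : IsLeast (f '' (L : Set (EuclideanSpace ℝ (Fin n)))) fstar)
    (xstar : EuclideanSpace ℝ (Fin n))
    (hxstarL : xstar ∈ L)
    (hxstarmin : ∀ y ∈ L, f xstar ≤ f y)
    (hxstarnorm : ∀ y ∈ L, (∀ z ∈ L, f y ≤ f z) → ‖xstar‖ ≤ ‖y‖)
    (g : ℝ → ℝ)
    (hg : ∀ l : ℝ, 0 ≤ l →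
      IsLeast ((fun x => ‖x‖ ^ 2 + l * (f x - fstar)) ''
        (L : Set (EuclideanSpace ℝ (Fin n)))) (g l)) :
    IsLUB (g '' Set.Ici 0) (‖xstar‖ ^ 2) ∧
      Tendsto g atTop (nhds (‖xstar‖ ^ 2)) :=
  statement3_general n f hconv L fstar hfstar xstar hxstarL hxstarmin hxstarnorm g hg
end

section
/- Let Σ ∈ ℝ^{d̄×d̄} be a nonzero positive semidefinite matrix with smallest eigenvalue Λ_min(Σ) = 0, and let ρ ∈ ℝ^{d̄} lie in the column space of Σ. Fix α > 0 and let β*^{(α)} := argmin{ f_α(β) : Σβ = ρ }, where f_α(β) := ‖β‖₁ + (α/2)‖β‖². Let X ∈ ℝ^{N×d̄}, ε ∈ ℝ^N, y = Xβ*^{(α)} + ε, let n > 0, and let β̂^{(α)} be a minimizer of (1/n)‖y − Xβ‖² + λ f_α(β) over {β : ‖β‖₁ ≤ M}, where M ≥ ‖β*^{(α)}‖₁. Then for any λ ≥ 2‖Xᵀε/n‖_∞, the in-sample prediction error satisfies (1/n)‖Xβ̂^{(α)} − Xβ*^{(α)}‖² ≤ λ(2M + αM²/2). -/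
namespace Statement5

/-- The ℓ₁-norm of a vector. -/
noncomputable def l1norm {m : ℕ} (v : Fin m → ℝ) : ℝ := ∑ i, |v i|

/-- The squared Euclidean norm of a vector. -/
def sqnorm {m : ℕ} (v : Fin m → ℝ) : ℝ := ∑ i, (v i) ^ 2

lemma l1_nonneg {m : ℕ} (v : Fin m → ℝ) : 0 ≤ l1norm v :=
  Finset.sum_nonneg fun i _ => abs_nonneg _

lemma sq_nonneg' {m : ℕ} (v : Fin m → ℝ) : 0 ≤ sqnorm v :=
  Finset.sum_nonneg fun i _ => sq_nonneg _

lemma l1_sub_le {m : ℕ} (a b : Fin m → ℝ) : l1norm (a - b) ≤ l1norm a + l1norm b := by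
  simp only [l1norm, ← Finset.sum_add_distrib]
  exact Finset.sum_le_sum fun i _ => by simpa using abs_sub (a i) (b i)

lemma sq_le_l1_sq {m : ℕ} (v : Fin m → ℝ) : sqnorm v ≤ (l1norm v) ^ 2 := by
  have h : ∀ i ∈ Finset.univ, (v i)^2 ≤ |v i| * l1norm v := by
    intro i _
    have : |v i| ≤ l1norm v := Finset.single_le_sum (fun j _ => abs_nonneg (v j)) (Finset.mem_univ i)
    calc (v i)^2 = |v i| * |v i| := by rw [sq, ← abs_mul_abs_self]
    _ ≤ |v i| * l1norm v := mul_le_mul_of_nonneg_left this (abs_nonneg _)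
  calc sqnorm v ≤ ∑ i, |v i| * l1norm v := Finset.sum_le_sum h
  _ = (l1norm v)^2 := by rw [← Finset.sum_mul, l1norm]; ring

lemma sqnorm_add {m : ℕ} (a b : Fin m → ℝ) :
    sqnorm (a + b) = sqnorm a + 2 * (∑ i, a i * b i) + sqnorm b := by
  simp only [sqnorm, Pi.add_apply, Finset.mul_sum, ← Finset.sum_add_distrib]
  exact Finset.sum_congr rfl fun i _ => by ring

lemma swap_sum {N dbar : ℕ} (X : Matrix (Fin N) (Fin dbar) ℝ) (w : Fin dbar → ℝ)
    (ε : Fin N → ℝ) : ∑ i, X.mulVec w i * ε i = ∑ j, w j * X.transpose.mulVec ε j := by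
  simp only [Matrix.mulVec, dotProduct, Matrix.transpose_apply, Finset.sum_mul,
    Finset.mul_sum]
  rw [Finset.sum_comm]
  exact Finset.sum_congr rfl fun j _ => Finset.sum_congr rfl fun i _ => by ring

/-- In-sample prediction error bound for the elastic-net estimator under a
singular population covariance: if `λ ≥ 2‖Xᵀε/n‖_∞` then
`(1/n)‖X β̂ − X β*‖² ≤ λ (2M + αM²/2)`. -/
theorem statement5 (dbar N : ℕ)
    (S : Matrix (Fin dbar) (Fin dbar) ℝ) (hSpsd : S.PosSemidef) (hSne : S ≠ 0)
    (hSmin : ∃ v : Fin dbar → ℝ, v ≠ 0 ∧ S.mulVec v = 0)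
    (ρ : Fin dbar → ℝ) (hρ : ∃ w, S.mulVec w = ρ)
    (α : ℝ) (hα : 0 < α)
    (βstar : Fin dbar → ℝ)
    (hβstarFeas : S.mulVec βstar = ρ)
    (hβstarMin : ∀ β : Fin dbar → ℝ, S.mulVec β = ρ →
      l1norm βstar + α / 2 * sqnorm βstar ≤ l1norm β + α / 2 * sqnorm β)
    (X : Matrix (Fin N) (Fin dbar) ℝ) (ε : Fin N → ℝ) (y : Fin N → ℝ)
    (hy : y = X.mulVec βstar + ε)
    (n : ℝ) (hn : 0 < n)
    (M lam : ℝ) (hM : l1norm βstar ≤ M)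
    (βhat : Fin dbar → ℝ)
    (hβhatM : l1norm βhat ≤ M)
    (hβhatMin : ∀ β : Fin dbar → ℝ, l1norm β ≤ M →
      sqnorm (y - X.mulVec βhat) / n + lam * (l1norm βhat + α / 2 * sqnorm βhat)
        ≤ sqnorm (y - X.mulVec β) / n + lam * (l1norm β + α / 2 * sqnorm β))
    (hlam : ∀ j, 2 * |X.transpose.mulVec ε j / n| ≤ lam) :
    sqnorm (X.mulVec βhat - X.mulVec βstar) / n ≤ lam * (2 * M + α * M ^ 2 / 2) := by
  -- dbar is positive
  obtain ⟨v0, hv0ne, -⟩ := hSmin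
  have hd : 0 < dbar := by
    rcases Nat.eq_zero_or_pos dbar with h0 | h
    · exact absurd (funext fun i => (h0 ▸ i).elim0) hv0ne
    · exact h
  have hlam0 : 0 ≤ lam :=
    le_trans (by positivity) (hlam ⟨0, hd⟩)
  set u := X.mulVec βhat with hu
  set v := X.mulVec βstar with hv
  have h1 := hβhatMin βstar hM
  have hyv : y - v = ε := by rw [hy]; abel
  have hyu : y - u = (v - u) + ε := by rw [hy]; abel
  rw [hyv, hyu, sqnorm_add] at h1
  have hvu : sqnorm (v - u) = sqnorm (u - v) := by
    exact Finset.sum_congr rfl fun i _ => by simp only [Pi.sub_apply]; ring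
  rw [hvu] at h1
  have hsum : ∑ i, (v - u) i * ε i = -∑ j, (βhat - βstar) j * X.transpose.mulVec ε j := by
    rw [← swap_sum X (βhat - βstar) ε, ← Finset.sum_neg_distrib]
    exact Finset.sum_congr rfl fun i _ => by
      simp only [Pi.sub_apply, Matrix.mulVec_sub, hu, hv]; ring
  rw [hsum] at h1
  -- bound the cross term
  have hcross : 2 * (∑ j, (βhat - βstar) j * X.transpose.mulVec ε j) / n
      ≤ lam * l1norm (βhat - βstar) := by
    rw [Finset.mul_sum, Finset.sum_div, l1norm, Finset.mul_sum]
    refine Finset.sum_le_sum fun j _ => ?_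
    have h2 := hlam j
    have : 2 * ((βhat - βstar) j * X.transpose.mulVec ε j) / n
        = (βhat - βstar) j * (2 * (X.transpose.mulVec ε j / n)) := by ring
    rw [this]
    calc (βhat - βstar) j * (2 * (X.transpose.mulVec ε j / n))
        ≤ |(βhat - βstar) j * (2 * (X.transpose.mulVec ε j / n))| := le_abs_self _
      _ = |(βhat - βstar) j| * (2 * |X.transpose.mulVec ε j / n|) := by
          rw [abs_mul, abs_mul, abs_two]
      _ ≤ |(βhat - βstar) j| * lam := mul_le_mul_of_nonneg_left h2 (abs_nonneg _)
      _ = lam * |(βhat - βstar) j| := mul_comm _ _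
  have hΔ : l1norm (βhat - βstar) ≤ l1norm βhat + l1norm βstar := l1_sub_le _ _
  have hsqhat : 0 ≤ sqnorm βhat := sq_nonneg' _
  have hsqstar : sqnorm βstar ≤ (l1norm βstar)^2 := sq_le_l1_sq _
  have hl1star : 0 ≤ l1norm βstar := l1_nonneg _
  have hl1hat : 0 ≤ l1norm βhat := l1_nonneg _
  have hM2 : (l1norm βstar)^2 ≤ M^2 := pow_le_pow_left₀ hl1star hM 2
  -- combine
  have h1' : sqnorm (u - v) / n ≤
      2 * (∑ j, (βhat - βstar) j * X.transpose.mulVec ε j) / n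
        + lam * ((l1norm βstar + α / 2 * sqnorm βstar)
            - (l1norm βhat + α / 2 * sqnorm βhat)) := by
    rw [add_div, add_div] at h1
    have hne : 2 * -(∑ j, (βhat - βstar) j * X.transpose.mulVec ε j) / n
        = -(2 * (∑ j, (βhat - βstar) j * X.transpose.mulVec ε j) / n) := by ring
    rw [hne] at h1
    linarith
  nlinarith [mul_le_mul_of_nonneg_left hΔ hlam0,
    mul_le_mul_of_nonneg_left (le_trans hsqstar hM2) (mul_nonneg hlam0 hα.le),
    mul_le_mul_of_nonneg_left hM hlam0,
    mul_nonneg (mul_nonneg hlam0 hα.le) hsqhat]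

end Statement5
end

section
/- Let Σ ∈ ℝ^{d̄×d̄} be a nonzero positive semidefinite matrix with smallest eigenvalue Λ_min(Σ) = 0, and let ρ ∈ ℝ^{d̄} lie in the column space of Σ. Fix α > 0 and let β*^{(α)} := argmin{ f_α(β) : Σβ = ρ }, where f_α(β) := ‖β‖₁ + (α/2)‖β‖². Let X ∈ ℝ^{N×d̄}, ε ∈ ℝ^N, y = Xβ*^{(α)} + ε, let n > 0, and let β̂^{(α)} be a minimizer of (1/n)‖y − Xβ‖² + λ f_α(β) over {β : ‖β‖₁ ≤ M}, where M ≥ ‖β*^{(α)}‖₁. Then for any λ ≥ 2‖Xᵀε/n‖_∞ and any q_n ≥ ‖XᵀX/n − Σ‖_∞, the distance of β̂^{(α)} from the set of data-generating vectors satisfies min_{β : Σβ = ρ} ‖β̂^{(α)} − β‖² ≤ ( 4 q_n M² + λ(2M + αM²/2) ) / Λ_min⁺(Σ), where Λ_min⁺(Σ) denotes the smallest nonzero eigenvalue of Σ. -/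
open Matrix
namespace Statement6

noncomputable def l1norm {m : ℕ} (v : Fin m → ℝ) : ℝ := ∑ i, |v i|
def sqnorm {m : ℕ} (v : Fin m → ℝ) : ℝ := ∑ i, (v i) ^ 2
noncomputable def lamMinPos {m : ℕ} (S : Matrix (Fin m) (Fin m) ℝ) : ℝ :=
  sInf {c : ℝ | c ≠ 0 ∧ ∃ v : Fin m → ℝ, v ≠ 0 ∧ S.mulVec v = c • v}

lemma dot_transfer {d e : ℕ} (A : Matrix (Fin e) (Fin d) ℝ) (v : Fin e → ℝ) (w : Fin d → ℝ) :
    v ⬝ᵥ (A *ᵥ w) = (Aᵀ *ᵥ v) ⬝ᵥ w := by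
  rw [Matrix.dotProduct_mulVec, ← Matrix.mulVec_transpose]

lemma sqnorm_eq_dot {m : ℕ} (v : Fin m → ℝ) : sqnorm v = v ⬝ᵥ v := by
  simp [sqnorm, dotProduct, sq]

lemma sqnorm_nonneg {m : ℕ} (v : Fin m → ℝ) : 0 ≤ sqnorm v :=
  Finset.sum_nonneg fun _ _ => sq_nonneg _

lemma l1norm_nonneg {m : ℕ} (v : Fin m → ℝ) : 0 ≤ l1norm v :=
  Finset.sum_nonneg fun _ _ => abs_nonneg _

lemma sqnorm_le_l1_sq {m : ℕ} (v : Fin m → ℝ) : sqnorm v ≤ (l1norm v) ^ 2 := by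
  have h1 : sqnorm v ≤ ∑ i, |v i| * l1norm v := by
    apply Finset.sum_le_sum
    intro i _
    have : (v i)^2 = |v i| * |v i| := by rw [sq]; exact (abs_mul_abs_self (v i)).symm
    rw [this]
    exact mul_le_mul_of_nonneg_left (Finset.single_le_sum (f := fun j => |v j|)
      (fun j _ => abs_nonneg _) (Finset.mem_univ i)) (abs_nonneg _)
  calc sqnorm v ≤ ∑ i, |v i| * l1norm v := h1
    _ = (l1norm v)^2 := by rw [← Finset.sum_mul]; rw [sq]; rfl

lemma l1_sub_le {m : ℕ} (a b : Fin m → ℝ) : l1norm (a - b) ≤ l1norm a + l1norm b := by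
  rw [l1norm, l1norm, l1norm, ← Finset.sum_add_distrib]
  exact Finset.sum_le_sum fun i _ => abs_sub (a i) (b i)

lemma unitary_facts {d : ℕ} (U : Matrix (Fin d) (Fin d) ℝ) (hU : U ∈ Matrix.unitaryGroup (Fin d) ℝ) :
    (∀ w, star U *ᵥ (U *ᵥ w) = w) ∧ (∀ w, U *ᵥ (star U *ᵥ w) = w) := by
  have h1 : star U * U = 1 := Matrix.UnitaryGroup.star_mul_self ⟨U, hU⟩
  have h2 : U * star U = 1 := Matrix.mem_unitaryGroup_iff.mp hU
  constructor <;> intro w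
  · rw [Matrix.mulVec_mulVec, h1, Matrix.one_mulVec]
  · rw [Matrix.mulVec_mulVec, h2, Matrix.one_mulVec]

set_option maxHeartbeats 2000000 in
/-- Partially-identified estimation bound for the elastic-net estimator under a
singular population covariance: the squared Euclidean distance of `β̂^{(α)}` from the solution set
`{β : Σβ = ρ}` is at most `(4 qₙ M² + λ(2M + αM²/2)) / Λ_min⁺(Σ)`. -/
theorem statement6 (dbar N : ℕ)
    (S : Matrix (Fin dbar) (Fin dbar) ℝ) (hSpsd : S.PosSemidef) (hSne : S ≠ 0)
    (hSmin : ∃ v : Fin dbar → ℝ, v ≠ 0 ∧ S.mulVec v = 0)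
    (ρ : Fin dbar → ℝ) (hρ : ∃ w, S.mulVec w = ρ)
    (α : ℝ) (hα : 0 < α)
    (βstar : Fin dbar → ℝ)
    (hβstarFeas : S.mulVec βstar = ρ)
    (hβstarMin : ∀ β : Fin dbar → ℝ, S.mulVec β = ρ →
      l1norm βstar + α / 2 * sqnorm βstar ≤ l1norm β + α / 2 * sqnorm β)
    (X : Matrix (Fin N) (Fin dbar) ℝ) (ε : Fin N → ℝ) (y : Fin N → ℝ)
    (hy : y = X.mulVec βstar + ε)
    (n : ℝ) (hn : 0 < n)
    (M lam qn : ℝ) (hM : l1norm βstar ≤ M)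
    (βhat : Fin dbar → ℝ)
    (hβhatM : l1norm βhat ≤ M)
    (hβhatMin : ∀ β : Fin dbar → ℝ, l1norm β ≤ M →
      sqnorm (y - X.mulVec βhat) / n + lam * (l1norm βhat + α / 2 * sqnorm βhat)
        ≤ sqnorm (y - X.mulVec β) / n + lam * (l1norm β + α / 2 * sqnorm β))
    (hlam : ∀ j, 2 * |X.transpose.mulVec ε j / n| ≤ lam)
    (hqn : ∀ i j, |(∑ k, X k i * X k j) / n - S i j| ≤ qn) :
    ∃ β : Fin dbar → ℝ, S.mulVec β = ρ ∧
      sqnorm (βhat - β)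
        ≤ (4 * qn * M ^ 2 + lam * (2 * M + α * M ^ 2 / 2)) / lamMinPos S := by
  classical
  -- dimension positive
  have hd : 0 < dbar := by
    rcases Nat.eq_zero_or_pos dbar with h0 | h
    · exfalso; apply hSne; subst h0; ext i; exact i.elim0
    · exact h
  have j0 : Fin dbar := ⟨0, hd⟩
  -- spectral setup
  have H : S.IsHermitian := hSpsd.1
  set U : Matrix (Fin dbar) (Fin dbar) ℝ := (H.eigenvectorUnitary : Matrix (Fin dbar) (Fin dbar) ℝ) with hUdef
  set μ : Fin dbar → ℝ := H.eigenvalues with hμdef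
  have hspec : S = U * Matrix.diagonal μ * star U := by simpa using H.spectral_theorem
  obtain ⟨hUv, hUv'⟩ := unitary_facts U H.eigenvectorUnitary.2
  have hstar : star U = Uᵀ := by ext i j; simp [Matrix.star_apply]
  have h1 : star U * U = 1 := Matrix.UnitaryGroup.star_mul_self ⟨U, H.eigenvectorUnitary.2⟩
  have hSUm : S * U = U * Matrix.diagonal μ := by
    rw [hspec, mul_assoc, h1, mul_one]
  have hSU : ∀ w, S *ᵥ (U *ᵥ w) = U *ᵥ (fun i => μ i * w i) := by
    intro w
    rw [Matrix.mulVec_mulVec, hSUm]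
    funext i
    simp [Matrix.mulVec, dotProduct, Matrix.mul_diagonal, mul_assoc]
  -- the nonzero eigenvalue set
  set T : Finset (Fin dbar) := Finset.univ.filter (fun i => μ i ≠ 0) with hTdef
  have hTne : T.Nonempty := by
    by_contra h
    apply hSne
    have hμ0 : ∀ i, μ i = 0 := by
      intro i
      by_contra hi
      exact h ⟨i, Finset.mem_filter.2 ⟨Finset.mem_univ _, hi⟩⟩
    rw [hspec]
    have : Matrix.diagonal μ = 0 := by
      ext i j; simp [Matrix.diagonal_apply, hμ0]
    rw [this, Matrix.mul_zero, Matrix.zero_mul]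
  obtain ⟨i0, hi0T, hlp_le⟩ := Finset.exists_min_image T μ hTne
  have hi0ne : μ i0 ≠ 0 := (Finset.mem_filter.1 hi0T).2
  set lp : ℝ := μ i0 with hlpdef
  have hlp_pos : 0 < lp :=
    lt_of_le_of_ne (hSpsd.eigenvalues_nonneg i0) (Ne.symm hi0ne)
  -- eigen characterization
  have heig : ∀ c : ℝ, ∀ v : Fin dbar → ℝ, v ≠ 0 → S *ᵥ v = c • v → ∃ i, μ i = c := by
    intro c v hvne hveq
    set w : Fin dbar → ℝ := star U *ᵥ v with hwdef
    have hv : U *ᵥ w = v := hUv' v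
    have hwne : w ≠ 0 := by
      intro h
      apply hvne
      rw [← hv, h, Matrix.mulVec_zero]
    have hDw : (fun i => μ i * w i) = c • w := by
      have h1 : S *ᵥ v = U *ᵥ (fun i => μ i * w i) := by rw [← hv, hSU]
      have h2 : star U *ᵥ (S *ᵥ v) = (fun i => μ i * w i) := by rw [h1, hUv]
      rw [← h2, hveq, Matrix.mulVec_smul]
    obtain ⟨i, hwi⟩ := Function.ne_iff.1 hwne
    refine ⟨i, ?_⟩
    have := congrFun hDw i
    simp only [Pi.smul_apply, smul_eq_mul] at this
    exact mul_right_cancel₀ hwi this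
  -- lamMinPos S = lp
  have hmemE : lp ∈ {c : ℝ | c ≠ 0 ∧ ∃ v : Fin dbar → ℝ, v ≠ 0 ∧ S.mulVec v = c • v} := by
    refine ⟨hi0ne, ⇑(H.eigenvectorBasis i0), ?_, ?_⟩
    · intro h
      have := H.eigenvectorBasis.orthonormal.ne_zero i0
      apply this
      ext i
      exact congrFun h i
    · simpa using H.mulVec_eigenvectorBasis i0
  have hlbE : ∀ c ∈ {c : ℝ | c ≠ 0 ∧ ∃ v : Fin dbar → ℝ, v ≠ 0 ∧ S.mulVec v = c • v}, lp ≤ c := by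
    rintro c ⟨hc0, v, hvne, hveq⟩
    obtain ⟨i, hic⟩ := heig c v hvne hveq
    have hiT : i ∈ T := Finset.mem_filter.2 ⟨Finset.mem_univ _, by rw [hic]; exact hc0⟩
    rw [← hic]
    exact hlp_le i hiT
  have hEeq : lamMinPos S = lp :=
    le_antisymm (csInf_le ⟨lp, hlbE⟩ hmemE) (le_csInf ⟨lp, hmemE⟩ hlbE)
  have hnormU : ∀ w : Fin dbar → ℝ, sqnorm (U *ᵥ w) = sqnorm w := by
    intro w
    rw [sqnorm_eq_dot, sqnorm_eq_dot, dot_transfer, ← hstar, hUv]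
  -- main construction
  set Δ : Fin dbar → ℝ := βhat - βstar with hΔdef
  set cvec : Fin dbar → ℝ := star U *ᵥ Δ with hcdef
  have hΔU : U *ᵥ cvec = Δ := hUv' Δ
  set βperp : Fin dbar → ℝ := U *ᵥ (fun i => if μ i = 0 then cvec i else 0) with hperpdef
  refine ⟨βstar + βperp, ?_, ?_⟩
  · rw [Matrix.mulVec_add, hβstarFeas]
    have hz : S *ᵥ βperp = 0 := by
      rw [hperpdef, hSU]
      have : (fun i => μ i * (if μ i = 0 then cvec i else 0)) = (0 : Fin dbar → ℝ) := by
        funext i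
        by_cases h : μ i = 0 <;> simp [h]
      rw [this, Matrix.mulVec_zero]
    rw [hz, add_zero]
  -- the bound
  have hdiff : βhat - (βstar + βperp) = U *ᵥ (fun i => if μ i = 0 then 0 else cvec i) := by
    have e : βhat - (βstar + βperp) = Δ - βperp := by
      rw [hΔdef, sub_add_eq_sub_sub]
    rw [e, ← hΔU, hperpdef, ← Matrix.mulVec_sub]
    have e2 : (cvec - fun i => if μ i = 0 then cvec i else 0)
        = (fun i => if μ i = 0 then 0 else cvec i) := by
      funext i; by_cases h : μ i = 0 <;> simp [h]
    rw [e2]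
  have hquad : Δ ⬝ᵥ (S *ᵥ Δ) = ∑ i, μ i * cvec i ^ 2 := by
    have e : Δ ⬝ᵥ (S *ᵥ Δ) = cvec ⬝ᵥ (fun i => μ i * cvec i) := by
      conv_lhs => rw [← hΔU]
      rw [hSU, dot_transfer, ← hstar, hUv]
    rw [e]
    simp only [dotProduct]
    exact Finset.sum_congr rfl fun i _ => by ring
  have hdist : sqnorm (βhat - (βstar + βperp)) = ∑ i ∈ T, cvec i ^ 2 := by
    rw [hdiff, hnormU, hTdef, Finset.sum_filter, sqnorm]
    exact Finset.sum_congr rfl fun i _ => by by_cases h : μ i = 0 <;> simp [h]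
  have hquadT : Δ ⬝ᵥ (S *ᵥ Δ) = ∑ i ∈ T, μ i * cvec i ^ 2 := by
    rw [hquad, hTdef, Finset.sum_filter]
    exact Finset.sum_congr rfl fun i _ => by by_cases h : μ i = 0 <;> simp [h]
  have hlower : lp * sqnorm (βhat - (βstar + βperp)) ≤ Δ ⬝ᵥ (S *ᵥ Δ) := by
    rw [hdist, hquadT, Finset.mul_sum]
    exact Finset.sum_le_sum fun i hi =>
      mul_le_mul_of_nonneg_right (hlp_le i hi) (sq_nonneg _)
  clear_value βperp cvec Δ lp T μ U
  -- basic inequality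
  have key := hβhatMin βstar hM
  have hyb : y - X *ᵥ βstar = ε := by rw [hy]; abel
  have hXΔ : X *ᵥ Δ = X *ᵥ βhat - X *ᵥ βstar := by
    rw [hΔdef, Matrix.mulVec_sub]
  have hyh : y - X *ᵥ βhat = ε - X *ᵥ Δ := by rw [hy, hXΔ]; abel
  have hexp : sqnorm (ε - X *ᵥ Δ)
      = sqnorm ε - 2 * (ε ⬝ᵥ (X *ᵥ Δ)) + sqnorm (X *ᵥ Δ) := by
    simp only [sqnorm, dotProduct, Pi.sub_apply, Finset.mul_sum]
    rw [← Finset.sum_sub_distrib, ← Finset.sum_add_distrib]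
    exact Finset.sum_congr rfl fun i _ => by ring
  have hbasic : sqnorm (X *ᵥ Δ) / n ≤ 2 * (ε ⬝ᵥ (X *ᵥ Δ)) / n
      + lam * ((l1norm βstar + α/2*sqnorm βstar) - (l1norm βhat + α/2*sqnorm βhat)) := by
    rw [hyh, hyb, hexp] at key
    have h2 : (sqnorm ε - 2*(ε ⬝ᵥ (X *ᵥ Δ)) + sqnorm (X *ᵥ Δ))/n
        = sqnorm ε/n - 2*(ε ⬝ᵥ (X *ᵥ Δ))/n + sqnorm (X *ᵥ Δ)/n := by ring
    rw [h2] at key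
    linarith
  have hcross : 2 * (ε ⬝ᵥ (X *ᵥ Δ)) / n ≤ lam * l1norm Δ := by
    rw [dot_transfer]
    have e : 2 * ((Xᵀ *ᵥ ε) ⬝ᵥ Δ) / n = ∑ j, (2 * ((Xᵀ *ᵥ ε) j / n)) * Δ j := by
      rw [dotProduct, Finset.mul_sum, Finset.sum_div]
      exact Finset.sum_congr rfl fun j _ => by ring
    rw [e, l1norm, Finset.mul_sum]
    apply Finset.sum_le_sum
    intro j _
    calc (2 * ((Xᵀ *ᵥ ε) j / n)) * Δ j ≤ |(2 * ((Xᵀ *ᵥ ε) j / n)) * Δ j| := le_abs_self _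
      _ = (2 * |(Xᵀ *ᵥ ε) j / n|) * |Δ j| := by
          rw [abs_mul, abs_mul, abs_two]
      _ ≤ lam * |Δ j| := mul_le_mul_of_nonneg_right (hlam j) (abs_nonneg _)
  have hqn0 : 0 ≤ qn := le_trans (abs_nonneg _) (hqn j0 j0)
  have hlam0 : 0 ≤ lam := le_trans (by positivity) (hlam j0)
  have hM0 : 0 ≤ M := le_trans (l1norm_nonneg βstar) hM
  have hΔ1 : l1norm Δ ≤ 2 * M := by
    have := l1_sub_le βhat βstar
    rw [← hΔdef] at this
    linarith
  -- quadratic comparison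
  have hqf : Δ ⬝ᵥ (S *ᵥ Δ) ≤ sqnorm (X *ᵥ Δ)/n + qn * (l1norm Δ)^2 := by
    have e1 : Δ ⬝ᵥ (S *ᵥ Δ) = ∑ i, ∑ j, Δ i * Δ j * S i j := by
      simp only [dotProduct, Matrix.mulVec, Finset.mul_sum]
      exact Finset.sum_congr rfl fun i _ => Finset.sum_congr rfl fun j _ => by ring
    have e2 : sqnorm (X *ᵥ Δ)/n = ∑ i, ∑ j, Δ i * Δ j * ((∑ k, X k i * X k j)/n) := by
      have eq0 : sqnorm (X *ᵥ Δ) = ((Xᵀ * X) *ᵥ Δ) ⬝ᵥ Δ := by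
        rw [sqnorm_eq_dot, dot_transfer, Matrix.mulVec_mulVec]
      rw [eq0, dotProduct, Finset.sum_div]
      apply Finset.sum_congr rfl
      intro i _
      simp only [Matrix.mulVec, dotProduct, Matrix.mul_apply, Matrix.transpose_apply,
        Finset.sum_mul, Finset.sum_div]
      exact Finset.sum_congr rfl fun j _ => by
        rw [Finset.mul_sum]
        exact Finset.sum_congr rfl fun k _ => by ring
    rw [e1, e2]
    have hsum : ∑ i, ∑ j, (Δ i * Δ j * S i j - Δ i * Δ j * ((∑ k, X k i * X k j)/n))
        ≤ ∑ i, ∑ j, |Δ i| * |Δ j| * qn := by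
      apply Finset.sum_le_sum; intro i _
      apply Finset.sum_le_sum; intro j _
      calc Δ i * Δ j * S i j - Δ i * Δ j * ((∑ k, X k i * X k j)/n)
          = Δ i * Δ j * (S i j - (∑ k, X k i * X k j)/n) := by ring
        _ ≤ |Δ i * Δ j * (S i j - (∑ k, X k i * X k j)/n)| := le_abs_self _
        _ = |Δ i| * |Δ j| * |S i j - (∑ k, X k i * X k j)/n| := by
            rw [abs_mul, abs_mul]
        _ ≤ |Δ i| * |Δ j| * qn := by
            apply mul_le_mul_of_nonneg_left _ (by positivity)
            rw [abs_sub_comm]; exact hqn i j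
    have hrhs : ∑ i, ∑ j, |Δ i| * |Δ j| * qn = qn * (l1norm Δ)^2 := by
      rw [l1norm, sq, Finset.sum_mul_sum, Finset.mul_sum]
      exact Finset.sum_congr rfl fun i _ => by
        rw [Finset.mul_sum]
        exact Finset.sum_congr rfl fun j _ => by ring
    have hsplit : ∑ i, ∑ j, (Δ i * Δ j * S i j - Δ i * Δ j * ((∑ k, X k i * X k j)/n))
        = ∑ i, ∑ j, Δ i * Δ j * S i j - ∑ i, ∑ j, Δ i * Δ j * ((∑ k, X k i * X k j)/n) := by
      rw [← Finset.sum_sub_distrib]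
      exact Finset.sum_congr rfl fun i _ => by rw [Finset.sum_sub_distrib]
    rw [hsplit, hrhs] at hsum
    linarith
  -- combine
  have hfstar : sqnorm βstar ≤ M^2 := by
    have h := sqnorm_le_l1_sq βstar
    nlinarith [l1norm_nonneg βstar]
  have h2 : l1norm Δ + (l1norm βstar + α/2*sqnorm βstar) - (l1norm βhat + α/2*sqnorm βhat)
      ≤ 2*M + α*M^2/2 := by
    have ht := l1_sub_le βhat βstar
    rw [← hΔdef] at ht
    nlinarith [sqnorm_nonneg βhat, hα.le]
  have h4 := mul_le_mul_of_nonneg_left h2 hlam0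
  have h3 : qn * (l1norm Δ)^2 ≤ 4*qn*M^2 := by
    have hp : (l1norm Δ)^2 ≤ (2*M)^2 := pow_le_pow_left₀ (l1norm_nonneg Δ) hΔ1 2
    have := mul_le_mul_of_nonneg_left hp hqn0
    linarith [this]
  have hb : lam * (l1norm Δ + ((l1norm βstar + α/2*sqnorm βstar)
        - (l1norm βhat + α/2*sqnorm βhat)))
      = lam * l1norm Δ + lam * ((l1norm βstar + α/2*sqnorm βstar)
        - (l1norm βhat + α/2*sqnorm βhat)) := by ring
  have hb2 : lam * (l1norm Δ + (l1norm βstar + α/2*sqnorm βstar)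
        - (l1norm βhat + α/2*sqnorm βhat))
      = lam * (l1norm Δ + ((l1norm βstar + α/2*sqnorm βstar)
        - (l1norm βhat + α/2*sqnorm βhat))) := by ring
  have hmain : Δ ⬝ᵥ (S *ᵥ Δ) ≤ 4*qn*M^2 + lam*(2*M + α*M^2/2) := by
    rw [hb2, hb] at h4
    linarith [hqf, hbasic, hcross, h3, h4]
  rw [hEeq, le_div_iff₀ hlp_pos, mul_comm]
  linarith [hlower, hmain]


end Statement6
end

section
/- Let Σ ∈ ℝ^{d̄×d̄} be a nonzero positive semidefinite matrix with smallest eigenvalue Λ_min(Σ) = 0, and let ρ ∈ ℝ^{d̄} lie in the column space of Σ. Fix α > 0 and let β*^{(α)} := argmin{ f_α(β) : Σβ = ρ }, where f_α(β) := ‖β‖₁ + (α/2)‖β‖². Let X ∈ ℝ^{N×d̄}, ε ∈ ℝ^N, y = Xβ*^{(α)} + ε, let n > 0, and suppose the event bounds ‖XᵀX/n − Σ‖_∞ ≤ q_n, ‖Xᵀε/n‖_∞ ≤ r_n, and |(1/n)‖ε‖² − σ²| ≤ s_n hold for some reals q_n, r_n, s_n ≥ 0 and σ² ≥ 0. Let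 β̂^{(α)} be a minimizer of f_α(β) over the constraint set { β : (1/n)‖y − Xβ‖² ≤ A_n, ‖β‖₁ ≤ M } with A_n = σ² + s_n and M ≥ ‖β*^{(α)}‖₁. Then ‖β̂^{(α)} − β*^{(α)}‖² ≤ 2 v_n + 2(√d̄/α + M) v_n^{1/2}, where v_n := (4M r_n + 2 s_n + 4 M² q_n) / Λ_min⁺(Σ) and Λ_min⁺(Σ) is the smallest nonzero eigenvalue of Σ. -/
/-!
Write `δ = β̂ - β*` and split it as `δ₀ + δ₁` with `Σ δ₀ = 0` and `δ₁ ⊥ δ₀`, using an eigenbasis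
of `Σ`. Feasibility of `β̂`, expanded on the event, gives `δᵀ Σ δ ≤ 4 M rₙ + 2 sₙ + 4 M² qₙ`, and
`δᵀ Σ δ ≥ Λ⁺ ‖δ₁‖²`, so `‖δ₁‖² ≤ vₙ`. The kernel component is controlled by strong convexity of
`f_α`: `β* + δ₀ = β̂ - δ₁` satisfies `Σ β = ρ`, so `f_α β* + (α/2) ‖δ₀‖² ≤ f_α (β̂ - δ₁)`, while
`f_α β̂ ≤ f_α β*` because `β*` is feasible for the constrained problem. Moving from `β̂` to
`β̂ - δ₁` raises `f_α` by at most `(√d̄ + α M) ‖δ₁‖ + (α/2) ‖δ₁‖²`.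
-/

namespace Statement7

noncomputable def l1norm {m : ℕ} (v : Fin m → ℝ) : ℝ := ∑ i, |v i|

def sqnorm {m : ℕ} (v : Fin m → ℝ) : ℝ := ∑ i, (v i) ^ 2

/-- The smallest nonzero eigenvalue of a matrix. -/
noncomputable def lamMinPos {m : ℕ} (S : Matrix (Fin m) (Fin m) ℝ) : ℝ :=
  sInf {c : ℝ | c ≠ 0 ∧ ∃ v : Fin m → ℝ, v ≠ 0 ∧ S.mulVec v = c • v}

end Statement7

open Filter Topology in
lemma UniformConvexOn.add_le_of_isMinOn {E : Type*} [NormedAddCommGroup E] [NormedSpace ℝ E]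
    {s : Set E} {φ : ℝ → ℝ} {f : E → ℝ} {a b : E} (hf : UniformConvexOn s φ f)
    (hmin : IsMinOn f s a) (ha : a ∈ s) (hb : b ∈ s) : f a + φ ‖a - b‖ ≤ f b := by
  have key : ∀ t ∈ Set.Ioo (0 : ℝ) 1, f a + (1 - t) * φ ‖a - b‖ ≤ f b := by
    rintro t ⟨ht0, ht1⟩
    have hmem := hf.1 ha hb (sub_nonneg.2 ht1.le) ht0.le (sub_add_cancel 1 t)
    have hseg := hf.2 ha hb (sub_nonneg.2 ht1.le) ht0.le (sub_add_cancel 1 t)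
    rw [smul_eq_mul, smul_eq_mul] at hseg
    have : t * (f a + (1 - t) * φ ‖a - b‖) ≤ t * f b := by
      linear_combination hseg + isMinOn_iff.1 hmin _ hmem
    exact le_of_mul_le_mul_left this ht0
  have hlim : Tendsto (fun t : ℝ => f a + (1 - t) * φ ‖a - b‖) (𝓝[>] 0)
      (𝓝 (f a + (1 - 0) * φ ‖a - b‖)) :=
    (Continuous.tendsto (by fun_prop) 0).mono_left nhdsWithin_le_nhds
  rw [sub_zero, one_mul] at hlim
  exact le_of_tendsto hlim (eventually_of_mem (Ioo_mem_nhdsGT one_pos) key)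

namespace Statement7

open Matrix

variable {m : ℕ}

lemma sqnorm_nonneg (v : Fin m → ℝ) : 0 ≤ sqnorm v :=
  Finset.sum_nonneg fun _ _ => sq_nonneg _

lemma sqnorm_neg (v : Fin m → ℝ) : sqnorm (-v) = sqnorm v := by
  simp [sqnorm]

lemma sqnorm_eq_dotProduct (v : Fin m → ℝ) : sqnorm v = v ⬝ᵥ v := by
  simp [sqnorm, dotProduct, sq]

lemma sqnorm_sub (a b : Fin m → ℝ) : sqnorm (a - b) = sqnorm a - 2 * (a ⬝ᵥ b) + sqnorm b := by
  simp only [sqnorm, dotProduct, Pi.sub_apply, Finset.mul_sum, ← Finset.sum_add_distrib,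
    ← Finset.sum_sub_distrib]
  exact Finset.sum_congr rfl fun i _ => by ring

lemma sqnorm_add_of_dotProduct_eq_zero {a b : Fin m → ℝ} (h : a ⬝ᵥ b = 0) :
    sqnorm (a + b) = sqnorm a + sqnorm b := by
  simpa [h, sqnorm_neg] using sqnorm_sub a (-b)

lemma sqnorm_mulVec {N : ℕ} (X : Matrix (Fin N) (Fin m) ℝ) (v : Fin m → ℝ) :
    sqnorm (X *ᵥ v) = v ⬝ᵥ (Xᵀ * X) *ᵥ v := by
  rw [sqnorm_eq_dotProduct, ← mulVec_mulVec, dotProduct_mulVec v, vecMul_transpose]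

lemma sqnorm_eq_norm_sq (v : Fin m → ℝ) :
    sqnorm v = ‖(WithLp.toLp 2 v : EuclideanSpace ℝ (Fin m))‖ ^ 2 := by
  rw [EuclideanSpace.real_norm_sq_eq]; rfl

lemma l1norm_eq_norm (v : Fin m → ℝ) :
    l1norm v = ‖(WithLp.toLp 1 v : PiLp 1 fun _ : Fin m => ℝ)‖ := by
  simp [PiLp.norm_eq_of_L1, l1norm, Real.norm_eq_abs]

lemma l1norm_nonneg (v : Fin m → ℝ) : 0 ≤ l1norm v :=
  Finset.sum_nonneg fun _ _ => abs_nonneg _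

lemma l1norm_sub_le (a b : Fin m → ℝ) : l1norm (a - b) ≤ l1norm a + l1norm b := by
  simpa only [l1norm_eq_norm, WithLp.toLp_sub] using norm_sub_le _ _

lemma l1norm_le_sqrt_mul_sqrt_sqnorm (v : Fin m → ℝ) :
    l1norm v ≤ √m * √(sqnorm v) := by
  rw [← Real.sqrt_mul (Nat.cast_nonneg m),
    Real.le_sqrt (l1norm_nonneg v) (mul_nonneg (Nat.cast_nonneg m) (sqnorm_nonneg v))]
  simpa [l1norm, sqnorm, sq_abs] using
    sq_sum_le_card_mul_sum_sq (s := Finset.univ) (f := fun i => |v i|)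

lemma abs_le_sqrt_sqnorm (v : Fin m → ℝ) (i : Fin m) : |v i| ≤ √(sqnorm v) := by
  rw [← Real.sqrt_sq_eq_abs]
  exact Real.sqrt_le_sqrt <|
    Finset.single_le_sum (f := fun j => v j ^ 2) (fun j _ => sq_nonneg _) (Finset.mem_univ i)

lemma abs_dotProduct_le_l1norm_mul (a b : Fin m → ℝ) {C : ℝ} (hb : ∀ i, |b i| ≤ C) :
    |a ⬝ᵥ b| ≤ l1norm a * C := by
  calc |a ⬝ᵥ b| ≤ ∑ i, |a i| * |b i| := by
        simpa only [dotProduct, abs_mul] using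
          Finset.abs_sum_le_sum_abs (fun i => a i * b i) Finset.univ
    _ ≤ ∑ i, |a i| * C :=
        Finset.sum_le_sum fun i _ => mul_le_mul_of_nonneg_left (hb i) (abs_nonneg _)
    _ = l1norm a * C := by rw [l1norm, Finset.sum_mul]

lemma abs_dotProduct_mulVec_le {A : Matrix (Fin m) (Fin m) ℝ} {q : ℝ}
    (hA : ∀ i j, |A i j| ≤ q) (v : Fin m → ℝ) : |v ⬝ᵥ A *ᵥ v| ≤ q * l1norm v ^ 2 := by
  have hAv : ∀ i, |(A *ᵥ v) i| ≤ q * l1norm v := fun i => by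
    rw [mulVec, dotProduct_comm, mul_comm]
    exact abs_dotProduct_le_l1norm_mul v _ (hA i)
  calc |v ⬝ᵥ A *ᵥ v| ≤ l1norm v * (q * l1norm v) := abs_dotProduct_le_l1norm_mul v _ hAv
    _ = q * l1norm v ^ 2 := by ring

lemma dotProduct_mulVec_le_of_abs_sub_le {A B : Matrix (Fin m) (Fin m) ℝ} {q : ℝ}
    (hAB : ∀ i j, |A i j - B i j| ≤ q) (v : Fin m → ℝ) :
    v ⬝ᵥ B *ᵥ v ≤ v ⬝ᵥ A *ᵥ v + q * l1norm v ^ 2 := by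
  have := abs_le.1 (abs_dotProduct_mulVec_le (A := A - B) (fun i j => hAB i j) v)
  rw [sub_mulVec, dotProduct_sub] at this
  linarith [this.1]

/-- The objective `f_α` of the paper. -/
noncomputable def elasticNet (α : ℝ) (β : Fin m → ℝ) : ℝ := l1norm β + α / 2 * sqnorm β

lemma convexOn_l1norm : ConvexOn ℝ Set.univ (l1norm : (Fin m → ℝ) → ℝ) :=
  (convexOn_univ_norm.comp_linearMap (WithLp.linearEquiv 1 ℝ (Fin m → ℝ)).symm.toLinearMap).congr
    fun v _ => (l1norm_eq_norm v).symm

/-- `Fin m → ℝ` carries the sup norm, so strong convexity is stated on `EuclideanSpace`. -/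
lemma strongConvexOn_elasticNet (α : ℝ) {s : Set (Fin m → ℝ)} (hs : Convex ℝ s) :
    StrongConvexOn (WithLp.ofLp ⁻¹' s : Set (EuclideanSpace ℝ (Fin m))) α
      (elasticNet α ∘ WithLp.ofLp) := by
  rw [strongConvexOn_iff_convex]
  refine ((convexOn_l1norm.subset (Set.subset_univ s) hs).comp_linearMap
    (WithLp.linearEquiv 2 ℝ (Fin m → ℝ)).toLinearMap).congr fun x _ => ?_
  simp [elasticNet, sqnorm_eq_norm_sq]

lemma elasticNet_add_le_of_isMinOn (α : ℝ) {s : Set (Fin m → ℝ)} (hs : Convex ℝ s)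
    {a b : Fin m → ℝ} (hmin : IsMinOn (elasticNet α) s a) (ha : a ∈ s) (hb : b ∈ s) :
    elasticNet α a + α / 2 * sqnorm (a - b) ≤ elasticNet α b := by
  have := UniformConvexOn.add_le_of_isMinOn (strongConvexOn_elasticNet α hs)
    (a := WithLp.toLp 2 a) (b := WithLp.toLp 2 b) (fun x hx => hmin hx) ha hb
  simpa [sqnorm_eq_norm_sq] using this

lemma dotProduct_mulVec_mulVec_of_transpose_mul_self {V : Matrix (Fin m) (Fin m) ℝ}
    (hV : Vᵀ * V = 1) (a b : Fin m → ℝ) : (V *ᵥ a) ⬝ᵥ (V *ᵥ b) = a ⬝ᵥ b := by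
  rw [dotProduct_mulVec, ← vecMul_transpose, vecMul_vecMul, hV, vecMul_one]

lemma exists_ker_add_mul_sqnorm_le_of_eq_diagonal {S V : Matrix (Fin m) (Fin m) ℝ}
    {d : Fin m → ℝ} (hV : Vᵀ * V = 1) (hS : S = V * diagonal d * Vᵀ) {L : ℝ}
    (hL : ∀ i, d i ≠ 0 → L ≤ d i) (δ : Fin m → ℝ) :
    ∃ δ₀ δ₁, δ = δ₀ + δ₁ ∧ S *ᵥ δ₀ = 0 ∧ δ₀ ⬝ᵥ δ₁ = 0 ∧ L * sqnorm δ₁ ≤ δ ⬝ᵥ S *ᵥ δ := by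
  classical
  have hV' : V * Vᵀ = 1 := mul_eq_one_comm.1 hV
  have hSV : ∀ w, S *ᵥ (V *ᵥ w) = V *ᵥ (diagonal d *ᵥ w) := fun w => by
    rw [hS, mulVec_mulVec, Matrix.mul_assoc, Matrix.mul_assoc, hV, Matrix.mul_one, ← mulVec_mulVec]
  set c := Vᵀ *ᵥ δ
  have hδ : δ = V *ᵥ c := by rw [mulVec_mulVec, hV', one_mulVec]
  -- `δ₀`, `δ₁` keep the eigencoordinates `c = Vᵀ δ` with `d i = 0`, resp. `d i ≠ 0`.
  set c₀ : Fin m → ℝ := fun i => if d i = 0 then c i else 0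
  set c₁ : Fin m → ℝ := fun i => if d i = 0 then 0 else c i
  refine ⟨V *ᵥ c₀, V *ᵥ c₁, ?_, ?_, ?_, ?_⟩
  · rw [← mulVec_add, hδ]
    congr 1
    ext i
    by_cases h : d i = 0 <;> simp [c₀, c₁, h]
  · rw [hSV]
    convert mulVec_zero V
    ext i
    by_cases h : d i = 0 <;> simp [mulVec_diagonal, c₀, h]
  · rw [dotProduct_mulVec_mulVec_of_transpose_mul_self hV]
    refine Finset.sum_eq_zero fun i _ => ?_
    by_cases h : d i = 0 <;> simp [c₀, c₁, h]
  · rw [sqnorm_eq_dotProduct, dotProduct_mulVec_mulVec_of_transpose_mul_self hV, hδ, hSV,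
      dotProduct_mulVec_mulVec_of_transpose_mul_self hV, dotProduct, dotProduct, Finset.mul_sum]
    refine Finset.sum_le_sum fun i _ => ?_
    by_cases h : d i = 0
    · simp [mulVec_diagonal, c₁, h]
    · simp only [c₁, h, if_false, mulVec_diagonal]
      nlinarith [hL i h, mul_self_nonneg (c i)]

lemma mem_range_eigenvalues_of_mulVec_eq_smul {S : Matrix (Fin m) (Fin m) ℝ}
    (hS : S.IsHermitian) {c : ℝ} {v : Fin m → ℝ} (hv : v ≠ 0) (h : S *ᵥ v = c • v) :
    c ∈ Set.range hS.eigenvalues := by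
  rw [← hS.spectrum_real_eq_range_eigenvalues, ← spectrum_toLin']
  exact Module.End.hasEigenvalue_of_hasEigenvector
    ⟨Module.End.mem_eigenspace_iff.2 (by simpa using h), hv⟩ |>.mem_spectrum

lemma finite_setOf_nonzero_eigenvalue {S : Matrix (Fin m) (Fin m) ℝ} (hS : S.IsHermitian) :
    {c : ℝ | c ≠ 0 ∧ ∃ v : Fin m → ℝ, v ≠ 0 ∧ S.mulVec v = c • v}.Finite :=
  (Set.finite_range hS.eigenvalues).subset fun _ ⟨_, _, hv, h⟩ =>
    mem_range_eigenvalues_of_mulVec_eq_smul hS hv h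

lemma lamMinPos_le_eigenvalues {S : Matrix (Fin m) (Fin m) ℝ} (hS : S.IsHermitian)
    {i : Fin m} (hi : hS.eigenvalues i ≠ 0) : lamMinPos S ≤ hS.eigenvalues i :=
  csInf_le (finite_setOf_nonzero_eigenvalue hS).bddBelow
    ⟨hi, _, (WithLp.ofLp_eq_zero 2).ne.2 (hS.eigenvectorBasis.orthonormal.ne_zero i),
      hS.mulVec_eigenvectorBasis i⟩

lemma lamMinPos_pos {S : Matrix (Fin m) (Fin m) ℝ} (hS : S.PosSemidef) (hne : S ≠ 0) :
    0 < lamMinPos S := by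
  classical
  obtain ⟨v, t, ht, hv, h⟩ := hS.isHermitian.exists_eigenvector_of_ne_zero hne
  obtain ⟨hc, w, hw, hmem⟩ :
      lamMinPos S ∈ {c : ℝ | c ≠ 0 ∧ ∃ v : Fin m → ℝ, v ≠ 0 ∧ S *ᵥ v = c • v} :=
    Set.Nonempty.csInf_mem ⟨t, ht, v, hv, h⟩ (finite_setOf_nonzero_eigenvalue hS.isHermitian)
  obtain ⟨i, hi⟩ := mem_range_eigenvalues_of_mulVec_eq_smul hS.isHermitian hw hmem
  rw [← hi] at hc ⊢
  exact (hS.eigenvalues_nonneg i).lt_of_ne' hc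

lemma exists_ker_add_lamMinPos_mul_sqnorm_le {S : Matrix (Fin m) (Fin m) ℝ}
    (hS : S.IsHermitian) (δ : Fin m → ℝ) :
    ∃ δ₀ δ₁, δ = δ₀ + δ₁ ∧ S *ᵥ δ₀ = 0 ∧ δ₀ ⬝ᵥ δ₁ = 0 ∧
      lamMinPos S * sqnorm δ₁ ≤ δ ⬝ᵥ S *ᵥ δ := by
  classical
  refine exists_ker_add_mul_sqnorm_le_of_eq_diagonal (V := hS.eigenvectorUnitary) ?_ ?_
    (d := hS.eigenvalues) (fun _ => lamMinPos_le_eigenvalues hS) δ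
  · exact Unitary.coe_star_mul_self hS.eigenvectorUnitary
  · conv_lhs => rw [hS.spectral_theorem]
    simp [Unitary.conjStarAlgAut_apply, star_eq_conjTranspose]

lemma dotProduct_mulVec_le_of_residual_le {N : ℕ} {X : Matrix (Fin N) (Fin m) ℝ}
    {S : Matrix (Fin m) (Fin m) ℝ} {ε : Fin N → ℝ} {n q r s σ2 : ℝ}
    (hq : ∀ i j, |(Xᵀ * X) i j / n - S i j| ≤ q) (hr : ∀ j, |(Xᵀ *ᵥ ε) j / n| ≤ r)
    (hs : σ2 - s ≤ sqnorm ε / n) {δ : Fin m → ℝ} (hres : sqnorm (ε - X *ᵥ δ) / n ≤ σ2 + s) :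
    δ ⬝ᵥ S *ᵥ δ ≤ 2 * s + 2 * r * l1norm δ + q * l1norm δ ^ 2 := by
  have hnoise : ε ⬝ᵥ X *ᵥ δ / n ≤ r * l1norm δ := by
    rw [dotProduct_mulVec, ← mulVec_transpose, dotProduct_comm, div_eq_inv_mul, ← smul_eq_mul,
      ← dotProduct_smul, mul_comm]
    exact (le_abs_self _).trans <|
      abs_dotProduct_le_l1norm_mul δ _ fun j => by simpa [div_eq_inv_mul] using hr j
  -- expanding `‖ε - Xδ‖²`, the noise energy `‖ε‖²/n` cancels against `σ2` up to `2 s`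
  have hgram : δ ⬝ᵥ (n⁻¹ • (Xᵀ * X)) *ᵥ δ ≤ 2 * s + 2 * r * l1norm δ := by
    rw [smul_mulVec, dotProduct_smul, smul_eq_mul, inv_mul_eq_div, ← sqnorm_mulVec]
    rw [sqnorm_sub, add_div, sub_div, mul_div_assoc] at hres
    linarith
  refine (dotProduct_mulVec_le_of_abs_sub_le (fun i j => ?_) δ).trans (by linarith)
  simpa [div_eq_inv_mul] using hq i j

lemma sqnorm_le_of_elasticNet_le {S : Matrix (Fin m) (Fin m) ℝ} {ρ : Fin m → ℝ} {α M : ℝ}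
    (hα : 0 < α) {a b δ₀ δ₁ : Fin m → ℝ} (hmin : IsMinOn (elasticNet α) {β | S *ᵥ β = ρ} a)
    (ha : S *ᵥ a = ρ) (hba : elasticNet α b ≤ elasticNet α a) (hb : l1norm b ≤ M)
    (hsplit : b - a = δ₀ + δ₁) (hker : S *ᵥ δ₀ = 0) :
    sqnorm δ₀ ≤ 2 * (√m / α + M) * √(sqnorm δ₁) + sqnorm δ₁ := by
  have hconv : Convex ℝ {β | S *ᵥ β = ρ} :=
    (convex_singleton ρ).linear_preimage S.mulVecLin
  have hshift : a + δ₀ = b - δ₁ := by rw [eq_sub_iff_add_eq, add_assoc, ← hsplit, add_sub_cancel]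
  have hstrong := elasticNet_add_le_of_isMinOn α hconv hmin ha
    (show S *ᵥ (a + δ₀) = ρ by rw [mulVec_add, ha, hker, add_zero])
  rw [sub_add_cancel_left, sqnorm_neg, hshift] at hstrong
  have hl1 := l1norm_sub_le b δ₁
  have hl1δ₁ := l1norm_le_sqrt_mul_sqrt_sqnorm δ₁
  have hcross : -(b ⬝ᵥ δ₁) ≤ M * √(sqnorm δ₁) :=
    (neg_le_abs _).trans <| (abs_dotProduct_le_l1norm_mul b δ₁ (abs_le_sqrt_sqnorm δ₁)).trans <|
      mul_le_mul_of_nonneg_right hb (Real.sqrt_nonneg _)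
  have key : α / 2 * sqnorm δ₀ ≤ α / 2 * (2 * (√m / α + M) * √(sqnorm δ₁) + sqnorm δ₁) := by
    have hexp : α / 2 * (2 * (√m / α + M) * √(sqnorm δ₁) + sqnorm δ₁)
        = √m * √(sqnorm δ₁) + α * (M * √(sqnorm δ₁)) + α / 2 * sqnorm δ₁ := by
      field_simp
    rw [hexp]
    unfold elasticNet at hstrong hba
    rw [sqnorm_sub] at hstrong
    linarith [mul_le_mul_of_nonneg_left hcross hα.le]
  exact le_of_mul_le_mul_left key (half_pos hα)

theorem statement7_general (dbar N : ℕ)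
    (S : Matrix (Fin dbar) (Fin dbar) ℝ) (hSpsd : S.PosSemidef) (hSne : S ≠ 0)
    (ρ : Fin dbar → ℝ)
    (α : ℝ) (hα : 0 < α)
    (βstar : Fin dbar → ℝ)
    (hβstarFeas : S.mulVec βstar = ρ)
    (hβstarMin : ∀ β : Fin dbar → ℝ, S.mulVec β = ρ →
      l1norm βstar + α / 2 * sqnorm βstar ≤ l1norm β + α / 2 * sqnorm β)
    (X : Matrix (Fin N) (Fin dbar) ℝ) (ε : Fin N → ℝ) (y : Fin N → ℝ)
    (hy : y = X.mulVec βstar + ε)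
    (n : ℝ)
    (qn rn sn σ2 : ℝ) (hqn0 : 0 ≤ qn) (hrn0 : 0 ≤ rn)
    (hqn : ∀ i j, |(∑ k, X k i * X k j) / n - S i j| ≤ qn)
    (hrn : ∀ j, |X.transpose.mulVec ε j / n| ≤ rn)
    (hsn : |sqnorm ε / n - σ2| ≤ sn)
    (M : ℝ) (hM : l1norm βstar ≤ M)
    (βhat : Fin dbar → ℝ)
    (hβhatFeas : sqnorm (y - X.mulVec βhat) / n ≤ σ2 + sn ∧ l1norm βhat ≤ M)
    (hβhatMin : ∀ β : Fin dbar → ℝ,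
      sqnorm (y - X.mulVec β) / n ≤ σ2 + sn → l1norm β ≤ M →
      l1norm βhat + α / 2 * sqnorm βhat ≤ l1norm β + α / 2 * sqnorm β) :
    sqnorm (βhat - βstar)
      ≤ 2 * ((4 * M * rn + 2 * sn + 4 * M ^ 2 * qn) / lamMinPos S)
        + 2 * (Real.sqrt dbar / α + M)
          * Real.sqrt ((4 * M * rn + 2 * sn + 4 * M ^ 2 * qn) / lamMinPos S) := by
  set v := (4 * M * rn + 2 * sn + 4 * M ^ 2 * qn) / lamMinPos S
  set δ := βhat - βstar
  have hM0 : 0 ≤ M := (l1norm_nonneg βstar).trans hM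
  have hδ : l1norm δ ≤ 2 * M := (l1norm_sub_le βhat βstar).trans (by linarith [hβhatFeas.2])
  have hquad : δ ⬝ᵥ S *ᵥ δ ≤ 4 * M * rn + 2 * sn + 4 * M ^ 2 * qn := by
    have hres : y - X *ᵥ βhat = ε - X *ᵥ δ := by rw [hy, mulVec_sub]; abel
    have := dotProduct_mulVec_le_of_residual_le hqn hrn (by linarith [(abs_le.1 hsn).1])
      (hres ▸ hβhatFeas.1)
    have hδ2 : l1norm δ ^ 2 ≤ (2 * M) ^ 2 := pow_le_pow_left₀ (l1norm_nonneg δ) hδ 2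
    linarith [mul_le_mul_of_nonneg_left hδ hrn0, mul_le_mul_of_nonneg_left hδ2 hqn0]
  obtain ⟨δ₀, δ₁, hsplit, hker, horth, hspec⟩ :=
    exists_ker_add_lamMinPos_mul_sqnorm_le hSpsd.isHermitian δ
  have hδ₁ : sqnorm δ₁ ≤ v := (le_div_iff₀' (lamMinPos_pos hSpsd hSne)).2 (hspec.trans hquad)
  have hβhat_le : elasticNet α βhat ≤ elasticNet α βstar := by
    refine hβhatMin βstar ?_ hM
    rw [hy, add_sub_cancel_left]
    linarith [(abs_le.1 hsn).2]
  have hδ₀ := sqnorm_le_of_elasticNet_le hα hβstarMin hβstarFeas hβhat_le hβhatFeas.2 hsplit hker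
  have hB : 0 ≤ √dbar / α + M := add_nonneg (by positivity) hM0
  calc sqnorm δ = sqnorm δ₀ + sqnorm δ₁ := by rw [hsplit, sqnorm_add_of_dotProduct_eq_zero horth]
    _ ≤ 2 * (√dbar / α + M) * √(sqnorm δ₁) + 2 * sqnorm δ₁ := by linarith
    _ ≤ 2 * v + 2 * (√dbar / α + M) * √v := by
      have := Real.sqrt_le_sqrt hδ₁
      linarith [mul_le_mul_of_nonneg_left this hB]

/-- Point-identified estimation bound for the constrained elastic-net estimator:
on the stated event, `‖β̂^{(α)} − β*^{(α)}‖² ≤ 2 vₙ + 2(√d̄/α + M)√vₙ` with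
`vₙ = (4Mrₙ + 2sₙ + 4M²qₙ)/Λ_min⁺(Σ)`. -/
theorem statement7 (dbar N : ℕ)
    (S : Matrix (Fin dbar) (Fin dbar) ℝ) (hSpsd : S.PosSemidef) (hSne : S ≠ 0)
    (hSmin : ∃ v : Fin dbar → ℝ, v ≠ 0 ∧ S.mulVec v = 0)
    (ρ : Fin dbar → ℝ) (hρ : ∃ w, S.mulVec w = ρ)
    (α : ℝ) (hα : 0 < α)
    (βstar : Fin dbar → ℝ)
    (hβstarFeas : S.mulVec βstar = ρ)
    (hβstarMin : ∀ β : Fin dbar → ℝ, S.mulVec β = ρ →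
      l1norm βstar + α / 2 * sqnorm βstar ≤ l1norm β + α / 2 * sqnorm β)
    (X : Matrix (Fin N) (Fin dbar) ℝ) (ε : Fin N → ℝ) (y : Fin N → ℝ)
    (hy : y = X.mulVec βstar + ε)
    (n : ℝ) (hn : 0 < n)
    (qn rn sn σ2 : ℝ) (hqn0 : 0 ≤ qn) (hrn0 : 0 ≤ rn) (hsn0 : 0 ≤ sn) (hσ20 : 0 ≤ σ2)
    (hqn : ∀ i j, |(∑ k, X k i * X k j) / n - S i j| ≤ qn)
    (hrn : ∀ j, |X.transpose.mulVec ε j / n| ≤ rn)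
    (hsn : |sqnorm ε / n - σ2| ≤ sn)
    (M : ℝ) (hM : l1norm βstar ≤ M)
    (βhat : Fin dbar → ℝ)
    (hβhatFeas : sqnorm (y - X.mulVec βhat) / n ≤ σ2 + sn ∧ l1norm βhat ≤ M)
    (hβhatMin : ∀ β : Fin dbar → ℝ,
      sqnorm (y - X.mulVec β) / n ≤ σ2 + sn → l1norm β ≤ M →
      l1norm βhat + α / 2 * sqnorm βhat ≤ l1norm β + α / 2 * sqnorm β) :
    sqnorm (βhat - βstar)
      ≤ 2 * ((4 * M * rn + 2 * sn + 4 * M ^ 2 * qn) / lamMinPos S)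
        + 2 * (Real.sqrt dbar / α + M)
          * Real.sqrt ((4 * M * rn + 2 * sn + 4 * M ^ 2 * qn) / lamMinPos S) :=
  statement7_general dbar N S hSpsd hSne ρ α hα βstar hβstarFeas hβstarMin X ε y hy n qn rn sn σ2
    hqn0 hrn0 hqn hrn hsn M hM βhat hβhatFeas hβhatMin

end Statement7
end

section
/- Let β* ∈ ℝ^{d̄}, X ∈ ℝ^{N×d̄}, ε ∈ ℝ^N, y = Xβ* + ε, and n > 0. Suppose ‖Xᵀε/n‖_∞ ≤ r_n and |(1/n)‖ε‖² − σ²| ≤ s_n for some reals r_n, s_n ≥ 0 and σ² ≥ 0, let A_n = σ² + s_n and M ≥ ‖β*‖₁. Then any β̂ satisfying the constraints (1/n)‖y − Xβ̂‖² ≤ A_n and ‖β̂‖₁ ≤ M obeys the in-sample prediction bound (1/n)‖X(β̂ − β*)‖² ≤ 4 M r_n + 2 s_n. -/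
namespace Statement8

/-- The ℓ₁-norm of a vector. -/
noncomputable def l1norm {m : ℕ} (v : Fin m → ℝ) : ℝ := ∑ i, |v i|

/-- The squared Euclidean norm of a vector. -/
def sqnorm {m : ℕ} (v : Fin m → ℝ) : ℝ := ∑ i, (v i) ^ 2

/-- In-sample prediction bound for any feasible point of the constrained
problem: `(1/n)‖X(β̂ − β*)‖² ≤ 4Mrₙ + 2sₙ`. -/
theorem statement8 (dbar N : ℕ)
    (βstar : Fin dbar → ℝ)
    (X : Matrix (Fin N) (Fin dbar) ℝ) (ε : Fin N → ℝ) (y : Fin N → ℝ)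
    (hy : y = X.mulVec βstar + ε)
    (n : ℝ) (hn : 0 < n)
    (rn sn σ2 : ℝ) (hrn0 : 0 ≤ rn) (hsn0 : 0 ≤ sn) (hσ20 : 0 ≤ σ2)
    (hrn : ∀ j, |X.transpose.mulVec ε j / n| ≤ rn)
    (hsn : |sqnorm ε / n - σ2| ≤ sn)
    (M : ℝ) (hM : l1norm βstar ≤ M)
    (βhat : Fin dbar → ℝ)
    (hβhatA : sqnorm (y - X.mulVec βhat) / n ≤ σ2 + sn)
    (hβhatM : l1norm βhat ≤ M) :
    sqnorm (X.mulVec (βhat - βstar)) / n ≤ 4 * M * rn + 2 * sn := by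
  set Δ : Fin dbar → ℝ := βhat - βstar with hΔ
  have hres : y - X.mulVec βhat = ε - X.mulVec Δ := by
    rw [hy, hΔ, Matrix.mulVec_sub]
    funext i
    simp only [Pi.add_apply, Pi.sub_apply]
    ring
  -- expand the squared norm
  have expand : sqnorm (ε - X.mulVec Δ)
      = sqnorm ε - 2 * (∑ i, ε i * X.mulVec Δ i) + sqnorm (X.mulVec Δ) := by
    simp only [sqnorm, Pi.sub_apply, Finset.mul_sum, ← Finset.sum_add_distrib,
      ← Finset.sum_sub_distrib]
    apply Finset.sum_congr rfl
    intro i _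
    ring
  -- cross term
  have cross : ∑ i, ε i * X.mulVec Δ i = ∑ j, X.transpose.mulVec ε j * Δ j := by
    simp only [Matrix.mulVec, dotProduct, Matrix.transpose_apply,
      Finset.mul_sum, Finset.sum_mul]
    rw [Finset.sum_comm]
    apply Finset.sum_congr rfl
    intro j _
    apply Finset.sum_congr rfl
    intro i _
    ring
  have hl1 : l1norm Δ ≤ 2 * M := by
    have : l1norm Δ ≤ l1norm βhat + l1norm βstar := by
      simp only [l1norm, hΔ, Pi.sub_apply, ← Finset.sum_add_distrib]
      apply Finset.sum_le_sum
      intro j _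
      exact abs_sub _ _
    linarith
  have hXte : ∀ j, |X.transpose.mulVec ε j| ≤ n * rn := by
    intro j
    have := hrn j
    rw [abs_div, abs_of_pos hn] at this
    calc |X.transpose.mulVec ε j| = |X.transpose.mulVec ε j| / n * n := by
          field_simp
      _ ≤ rn * n := by
          apply mul_le_mul_of_nonneg_right this hn.le
      _ = n * rn := by ring
  have hcross_bound : |∑ j, X.transpose.mulVec ε j * Δ j| ≤ n * rn * (2 * M) := by
    calc |∑ j, X.transpose.mulVec ε j * Δ j| ≤ ∑ j, |X.transpose.mulVec ε j * Δ j| :=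
          Finset.abs_sum_le_sum_abs _ _
      _ ≤ ∑ j, n * rn * |Δ j| := by
          apply Finset.sum_le_sum
          intro j _
          rw [abs_mul]
          exact mul_le_mul_of_nonneg_right (hXte j) (abs_nonneg _)
      _ = n * rn * l1norm Δ := by rw [l1norm, Finset.mul_sum]
      _ ≤ n * rn * (2 * M) := by
          apply mul_le_mul_of_nonneg_left hl1
          positivity
  have hε_lb : n * (σ2 - sn) ≤ sqnorm ε := by
    have h1 : σ2 - sn ≤ sqnorm ε / n := by
      have := abs_le.mp hsn
      linarith [this.2]
    calc n * (σ2 - sn) ≤ n * (sqnorm ε / n) := by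
          exact mul_le_mul_of_nonneg_left h1 hn.le
      _ = sqnorm ε := by field_simp
  have hA : sqnorm (ε - X.mulVec Δ) ≤ n * (σ2 + sn) := by
    rw [← hres]
    have := mul_le_mul_of_nonneg_left hβhatA hn.le
    calc sqnorm (y - X.mulVec βhat) = n * (sqnorm (y - X.mulVec βhat) / n) := by
          field_simp
      _ ≤ n * (σ2 + sn) := this
  have hcb := abs_le.mp hcross_bound
  rw [expand, cross] at hA
  have hfinal : sqnorm (X.mulVec Δ) ≤ n * (4 * M * rn + 2 * sn) := by nlinarith
  calc sqnorm (X.mulVec Δ) / n ≤ n * (4 * M * rn + 2 * sn) / n := by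
        gcongr
    _ = 4 * M * rn + 2 * sn := by field_simp

end Statement8
end

section
/- Let Σ ∈ ℝ^{d̄×d̄} be a positive semidefinite matrix, β* ∈ ℝ^{d̄}, X ∈ ℝ^{N×d̄}, ε ∈ ℝ^N, y = Xβ* + ε, and n > 0. Suppose ‖XᵀX/n − Σ‖_∞ ≤ q_n, ‖Xᵀε/n‖_∞ ≤ r_n, and |(1/n)‖ε‖² − σ²| ≤ s_n for some reals q_n, r_n, s_n ≥ 0 and σ² ≥ 0, let A_n = σ² + s_n and M ≥ ‖β*‖₁. Then any β̂ satisfying the constraints (1/n)‖y − Xβ̂‖² ≤ A_n and ‖β̂‖₁ ≤ M obeys ‖Σ^{1/2}(β̂ − β*)‖² ≤ 4 M r_n + 2 s_n + 4 M² q_n, where Σ^{1/2} denotes the positive semidefinite square root of Σ. -/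
namespace Statement9

/-- The ℓ₁-norm of a vector. -/
noncomputable def l1norm {m : ℕ} (v : Fin m → ℝ) : ℝ := ∑ i, |v i|

/-- The squared Euclidean norm of a vector. -/
def sqnorm {m : ℕ} (v : Fin m → ℝ) : ℝ := ∑ i, (v i) ^ 2

lemma quad {m p : ℕ} (A : Matrix (Fin p) (Fin m) ℝ) (v : Fin m → ℝ) :
    sqnorm (A.mulVec v) = ∑ i, ∑ j, v i * v j * (∑ k, A k i * A k j) := by
  simp only [sqnorm, Matrix.mulVec, dotProduct, sq]
  calc ∑ k, (∑ i, A k i * v i) * (∑ j, A k j * v j)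
      = ∑ k, ∑ i, ∑ j, (A k i * v i) * (A k j * v j) := by
        refine Finset.sum_congr rfl fun k _ => ?_
        rw [Finset.sum_mul_sum]
    _ = ∑ i, ∑ j, ∑ k, (A k i * v i) * (A k j * v j) := by
        rw [Finset.sum_comm]
        exact Finset.sum_congr rfl fun i _ => Finset.sum_comm
    _ = ∑ i, ∑ j, v i * v j * (∑ k, A k i * A k j) := by
        refine Finset.sum_congr rfl fun i _ => Finset.sum_congr rfl fun j _ => ?_
        rw [Finset.mul_sum]
        exact Finset.sum_congr rfl fun k _ => by ring

/-- Prediction bound at the population level: for any feasible point of the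
constrained problem, `‖Σ^{1/2}(β̂ − β*)‖² ≤ 4Mrₙ + 2sₙ + 4M²qₙ`, where `R = Σ^{1/2}` is the
positive semidefinite square root of `Σ`. -/
theorem statement9 (dbar N : ℕ)
    (S : Matrix (Fin dbar) (Fin dbar) ℝ) (hSpsd : S.PosSemidef)
    (R : Matrix (Fin dbar) (Fin dbar) ℝ) (hRpsd : R.PosSemidef) (hRsq : R * R = S)
    (βstar : Fin dbar → ℝ)
    (X : Matrix (Fin N) (Fin dbar) ℝ) (ε : Fin N → ℝ) (y : Fin N → ℝ)
    (hy : y = X.mulVec βstar + ε)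
    (n : ℝ) (hn : 0 < n)
    (qn rn sn σ2 : ℝ) (hqn0 : 0 ≤ qn) (hrn0 : 0 ≤ rn) (hsn0 : 0 ≤ sn) (hσ20 : 0 ≤ σ2)
    (hqn : ∀ i j, |(∑ k, X k i * X k j) / n - S i j| ≤ qn)
    (hrn : ∀ j, |X.transpose.mulVec ε j / n| ≤ rn)
    (hsn : |sqnorm ε / n - σ2| ≤ sn)
    (M : ℝ) (hM : l1norm βstar ≤ M)
    (βhat : Fin dbar → ℝ)
    (hβhatA : sqnorm (y - X.mulVec βhat) / n ≤ σ2 + sn)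
    (hβhatM : l1norm βhat ≤ M) :
    sqnorm (R.mulVec (βhat - βstar)) ≤ 4 * M * rn + 2 * sn + 4 * M ^ 2 * qn := by
  set Δ : Fin dbar → ℝ := βhat - βstar with hΔdef
  have hΔapp : ∀ i, Δ i = βhat i - βstar i := fun i => rfl
  -- ℓ₁ bound on Δ
  have hl1Δ : l1norm Δ ≤ 2 * M := by
    have h1 : l1norm Δ ≤ l1norm βhat + l1norm βstar := by
      simp only [l1norm]
      rw [← Finset.sum_add_distrib]
      refine Finset.sum_le_sum fun i _ => ?_
      rw [hΔapp i, sub_eq_add_neg]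
      exact (abs_add_le _ _).trans (by rw [abs_neg])
    linarith
  have hl1Δ0 : 0 ≤ l1norm Δ := Finset.sum_nonneg fun i _ => abs_nonneg _
  -- residual identity
  have hres : ∀ k, (y - X.mulVec βhat) k = ε k - X.mulVec Δ k := by
    intro k
    have hmv : X.mulVec Δ = X.mulVec βhat - X.mulVec βstar := by
      rw [hΔdef, Matrix.mulVec_sub]
    simp [hy, hmv, Pi.sub_apply, Pi.add_apply]
    ring
  -- cross term rewrite
  have hC : ∑ k, ε k * X.mulVec Δ k = ∑ j, X.transpose.mulVec ε j * Δ j := by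
    simp only [Matrix.mulVec, dotProduct, Matrix.transpose_apply,
      Finset.mul_sum, Finset.sum_mul]
    rw [Finset.sum_comm]
    exact Finset.sum_congr rfl fun j _ => Finset.sum_congr rfl fun k _ => by ring
  -- expansion
  have hexp : sqnorm (y - X.mulVec βhat)
      = sqnorm ε - 2 * (∑ j, X.transpose.mulVec ε j * Δ j) + sqnorm (X.mulVec Δ) := by
    rw [← hC]
    simp only [sqnorm, Finset.mul_sum, ← Finset.sum_add_distrib, ← Finset.sum_sub_distrib]
    refine Finset.sum_congr rfl fun k _ => ?_
    rw [hres k]; ring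
  -- cross term bound
  have hCb : (∑ j, X.transpose.mulVec ε j * Δ j) / n ≤ rn * l1norm Δ := by
    rw [Finset.sum_div]
    calc ∑ j, X.transpose.mulVec ε j * Δ j / n
        ≤ ∑ j, rn * |Δ j| := by
          refine Finset.sum_le_sum fun j _ => ?_
          have h2 : X.transpose.mulVec ε j * Δ j / n = (X.transpose.mulVec ε j / n) * Δ j := by
            ring
          rw [h2]
          calc (X.transpose.mulVec ε j / n) * Δ j
              ≤ |(X.transpose.mulVec ε j / n) * Δ j| := le_abs_self _
            _ = |X.transpose.mulVec ε j / n| * |Δ j| := abs_mul _ _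
            _ ≤ rn * |Δ j| := mul_le_mul_of_nonneg_right (hrn j) (abs_nonneg _)
      _ = rn * l1norm Δ := by rw [l1norm, Finset.mul_sum]
  have hεlow : σ2 - sn ≤ sqnorm ε / n := by
    have := abs_le.mp hsn; linarith [this.1]
  -- in-sample bound
  have hT : sqnorm (X.mulVec Δ) / n ≤ 2 * sn + 2 * (rn * l1norm Δ) := by
    have h := hβhatA
    rw [hexp] at h
    have hdiv : (sqnorm ε - 2 * (∑ j, X.transpose.mulVec ε j * Δ j) + sqnorm (X.mulVec Δ)) / n
        = sqnorm ε / n - 2 * ((∑ j, X.transpose.mulVec ε j * Δ j) / n)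
          + sqnorm (X.mulVec Δ) / n := by ring
    rw [hdiv] at h
    linarith
  -- quadratic form via R symmetric
  have hRsym : ∀ i k, R k i = R i k := by
    intro i k
    have := hRpsd.1.apply i k
    simpa using this
  have hQ : sqnorm (R.mulVec Δ) = ∑ i, ∑ j, Δ i * Δ j * S i j := by
    rw [quad]
    refine Finset.sum_congr rfl fun i _ => Finset.sum_congr rfl fun j _ => ?_
    congr 1
    have h1 : ∑ k, R k i * R k j = (R * R) i j := by
      rw [Matrix.mul_apply]
      exact Finset.sum_congr rfl fun k _ => by rw [hRsym i k]
    rw [h1, hRsq]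
  have hX : sqnorm (X.mulVec Δ) / n = ∑ i, ∑ j, Δ i * Δ j * ((∑ k, X k i * X k j) / n) := by
    rw [quad, Finset.sum_div]
    refine Finset.sum_congr rfl fun i _ => ?_
    rw [Finset.sum_div]
    exact Finset.sum_congr rfl fun j _ => by ring
  -- approximation bound
  have hl1sq : (l1norm Δ) ^ 2 = ∑ i, ∑ j, |Δ i| * |Δ j| := by
    rw [sq, l1norm, Finset.sum_mul_sum]
  have hdiff : ∑ i, ∑ j, Δ i * Δ j * S i j
      ≤ sqnorm (X.mulVec Δ) / n + qn * (l1norm Δ) ^ 2 := by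
    rw [hX]
    have hsplit : ∑ i, ∑ j, Δ i * Δ j * S i j
        = ∑ i, ∑ j, Δ i * Δ j * ((∑ k, X k i * X k j) / n)
          + ∑ i, ∑ j, Δ i * Δ j * (S i j - (∑ k, X k i * X k j) / n) := by
      rw [← Finset.sum_add_distrib]
      refine Finset.sum_congr rfl fun i _ => ?_
      rw [← Finset.sum_add_distrib]
      exact Finset.sum_congr rfl fun j _ => by ring
    rw [hsplit]
    have hb : ∑ i, ∑ j, Δ i * Δ j * (S i j - (∑ k, X k i * X k j) / n)
        ≤ qn * (l1norm Δ) ^ 2 := by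
      rw [hl1sq, Finset.mul_sum]
      refine Finset.sum_le_sum fun i _ => ?_
      rw [Finset.mul_sum]
      refine Finset.sum_le_sum fun j _ => ?_
      calc Δ i * Δ j * (S i j - (∑ k, X k i * X k j) / n)
          ≤ |Δ i * Δ j * (S i j - (∑ k, X k i * X k j) / n)| := le_abs_self _
        _ = |Δ i| * |Δ j| * |S i j - (∑ k, X k i * X k j) / n| := by
            rw [abs_mul, abs_mul]
        _ ≤ |Δ i| * |Δ j| * qn := by
            refine mul_le_mul_of_nonneg_left ?_ (mul_nonneg (abs_nonneg _) (abs_nonneg _))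
            rw [abs_sub_comm]
            exact hqn i j
        _ = qn * (|Δ i| * |Δ j|) := by ring
    linarith
  rw [hQ]
  have hfin1 : rn * l1norm Δ ≤ rn * (2 * M) := mul_le_mul_of_nonneg_left hl1Δ hrn0
  have hfin2 : qn * (l1norm Δ) ^ 2 ≤ qn * (2 * M) ^ 2 := by
    refine mul_le_mul_of_nonneg_left ?_ hqn0
    exact pow_le_pow_left₀ hl1Δ0 hl1Δ 2
  nlinarith [hT, hdiff]

end Statement9
end

section
/- Let Σ ∈ ℝ^{d̄×d̄} be a nonzero positive semidefinite matrix, ρ ∈ ℝ^{d̄} a vector in the column space of Σ, and β* ∈ ℝ^{d̄} with Σβ* = ρ. Let X ∈ ℝ^{N×d̄}, ε ∈ ℝ^N, y = Xβ* + ε, and n > 0, and suppose ‖XᵀX/n − Σ‖_∞ ≤ q_n, ‖Xᵀε/n‖_∞ ≤ r_n, and |(1/n)‖ε‖² − σ²| ≤ s_n for some reals q_n, r_n, s_n ≥ 0 and σ² ≥ 0; let A_n = σ² + s_n and M ≥ ‖β*‖₁. Let β̂ satisfy the constraints (1/n)‖y − Xβ̂‖² ≤ A_n and ‖β̂‖₁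 ≤ M, and let β̂_P be the orthogonal projection of β̂ onto the affine set {β : Σβ = ρ}. Then ‖β̂ − β̂_P‖² ≤ v_n, where v_n := (4 M r_n + 2 s_n + 4 M² q_n) / Λ_min⁺(Σ) and Λ_min⁺(Σ) is the smallest nonzero eigenvalue of Σ. -/
namespace Statement10

/-- The ℓ₁-norm of a vector. -/
noncomputable def l1norm {m : ℕ} (v : Fin m → ℝ) : ℝ := ∑ i, |v i|

/-- The squared Euclidean norm of a vector. -/
def sqnorm {m : ℕ} (v : Fin m → ℝ) : ℝ := ∑ i, (v i) ^ 2

/-- The smallest nonzero eigenvalue of a matrix. -/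
noncomputable def lamMinPos {m : ℕ} (S : Matrix (Fin m) (Fin m) ℝ) : ℝ :=
  sInf {c : ℝ | c ≠ 0 ∧ ∃ v : Fin m → ℝ, v ≠ 0 ∧ S.mulVec v = c • v}

/-! Write `u = β̂ - β̂_P` and `Δ = β̂ - β*`. Minimality of `β̂_P` along `ker Σ` makes `u`
orthogonal to `ker Σ`, so in an orthonormal eigenbasis of `Σ` only eigenvalues `≥ Λ_min⁺(Σ)`
see `u`, and `Λ_min⁺(Σ) ‖u‖² ≤ uᵀΣu`. As `Σu = ΣΔ`, `uᵀΣu = ΔᵀΣΔ`, where `‖Δ‖₁ ≤ 2M`.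
Replacing `Σ` by `XᵀX/n` costs at most `qₙ‖Δ‖₁²`, and expanding the feasibility constraint
`‖ε - XΔ‖²/n ≤ σ² + sₙ` with the noise bounds gives `‖XΔ‖²/n ≤ 2sₙ + 2rₙ‖Δ‖₁`. -/

open Matrix

section Norms

variable {m : ℕ}

lemma l1norm_nonneg (v : Fin m → ℝ) : 0 ≤ l1norm v :=
  Finset.sum_nonneg fun _ _ => abs_nonneg _

lemma l1norm_sub_le (v w : Fin m → ℝ) : l1norm (v - w) ≤ l1norm v + l1norm w := by
  rw [l1norm, l1norm, l1norm, ← Finset.sum_add_distrib]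
  exact Finset.sum_le_sum fun i _ => abs_sub _ _

lemma sqnorm_eq_dotProduct (v : Fin m → ℝ) : sqnorm v = v ⬝ᵥ v := by
  simp only [sqnorm, dotProduct, sq]

lemma sqnorm_sub_smul (u k : Fin m → ℝ) (t : ℝ) :
    sqnorm (u - t • k) = sqnorm u - 2 * t * (u ⬝ᵥ k) + t ^ 2 * sqnorm k := by
  simp only [sqnorm_eq_dotProduct, sub_dotProduct, dotProduct_sub, smul_dotProduct,
    dotProduct_smul, dotProduct_comm k u, smul_eq_mul]
  ring

lemma abs_dotProduct_le_mul_l1norm {v : Fin m → ℝ} {r : ℝ} (hv : ∀ j, |v j| ≤ r)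
    (w : Fin m → ℝ) : |v ⬝ᵥ w| ≤ r * l1norm w :=
  calc |v ⬝ᵥ w| ≤ ∑ j, |v j| * |w j| := by
        simpa only [dotProduct, abs_mul] using
          Finset.abs_sum_le_sum_abs (fun j => v j * w j) Finset.univ
    _ ≤ ∑ j, r * |w j| :=
        Finset.sum_le_sum fun j _ => mul_le_mul_of_nonneg_right (hv j) (abs_nonneg _)
    _ = r * l1norm w := by rw [l1norm, Finset.mul_sum]

lemma abs_dotProduct_mulVec_le {E : Matrix (Fin m) (Fin m) ℝ} {q : ℝ}
    (hE : ∀ i j, |E i j| ≤ q) (v : Fin m → ℝ) : |v ⬝ᵥ E *ᵥ v| ≤ q * l1norm v ^ 2 := by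
  rw [dotProduct_comm, sq, ← mul_assoc]
  exact abs_dotProduct_le_mul_l1norm (fun i => abs_dotProduct_le_mul_l1norm (hE i) v) v

end Norms

lemma eq_zero_of_forall_two_mul_le_sq_mul {a b : ℝ} (h : ∀ t : ℝ, 2 * t * a ≤ t ^ 2 * b) :
    a = 0 := by
  have hb : 0 ≤ b := by nlinarith [h 1, h (-1)]
  -- with `a = t (b + 1)` the hypothesis at `t` reads `t² (b + 2) ≤ 0`
  obtain ⟨t, rfl⟩ : ∃ t, a = t * (b + 1) := ⟨a / (b + 1), by field_simp⟩
  nlinarith [h t, sq_nonneg t]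

lemma sub_dotProduct_eq_zero_of_mulVec_eq_zero {ι : Type*} {m : ℕ}
    {S : Matrix ι (Fin m) ℝ} {ρ : ι → ℝ} {b p : Fin m → ℝ} (hp : S *ᵥ p = ρ)
    (hproj : ∀ β, S *ᵥ β = ρ → sqnorm (b - p) ≤ sqnorm (b - β))
    {k : Fin m → ℝ} (hk : S *ᵥ k = 0) : (b - p) ⬝ᵥ k = 0 := by
  refine eq_zero_of_forall_two_mul_le_sq_mul (b := sqnorm k) fun t => ?_
  have hfeas : S *ᵥ (p + t • k) = ρ := by
    rw [mulVec_add, mulVec_smul, hk, smul_zero, add_zero, hp]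
  have := hproj _ hfeas
  rw [show b - (p + t • k) = b - p - t • k by abel, sqnorm_sub_smul] at this
  linarith

lemma dotProduct_mulVec_eq_of_mulVec_eq {m : ℕ} {S : Matrix (Fin m) (Fin m) ℝ} (hS : S.IsSymm)
    {u w : Fin m → ℝ} (h : S *ᵥ u = S *ᵥ w) : u ⬝ᵥ S *ᵥ u = w ⬝ᵥ S *ᵥ w :=
  calc u ⬝ᵥ S *ᵥ u = (Sᵀ *ᵥ u) ⬝ᵥ w := by
        rw [h, dotProduct_mulVec, mulVec_transpose]
    _ = w ⬝ᵥ S *ᵥ w := by rw [hS.eq, h, dotProduct_comm]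

lemma OrthonormalBasis.sum_dotProduct_mul_dotProduct {ι : Type*} [Fintype ι]
    (b : OrthonormalBasis ι ℝ (EuclideanSpace ℝ ι)) (u w : ι → ℝ) :
    ∑ i, (u ⬝ᵥ ⇑(b i)) * (w ⬝ᵥ ⇑(b i)) = u ⬝ᵥ w := by
  have := b.sum_inner_mul_inner (WithLp.toLp 2 u) (WithLp.toLp 2 w)
  simp only [EuclideanSpace.inner_eq_star_dotProduct, star_trivial] at this
  simpa only [dotProduct_comm] using this

section Spectral

variable {m : ℕ} {S : Matrix (Fin m) (Fin m) ℝ} (hS : S.IsHermitian)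
include hS

lemma mulVec_dotProduct_eigenvectorBasis (v : Fin m → ℝ) (i : Fin m) :
    (S *ᵥ v) ⬝ᵥ ⇑(hS.eigenvectorBasis i)
      = hS.eigenvalues i * (v ⬝ᵥ ⇑(hS.eigenvectorBasis i)) := by
  rw [dotProduct_comm, dotProduct_mulVec, ← mulVec_transpose, (isHermitian_iff_isSymm.mp hS).eq,
    hS.mulVec_eigenvectorBasis, smul_dotProduct, smul_eq_mul, dotProduct_comm]

lemma sqnorm_eq_sum_dotProduct_eigenvectorBasis_sq (v : Fin m → ℝ) :
    sqnorm v = ∑ i, (v ⬝ᵥ ⇑(hS.eigenvectorBasis i)) ^ 2 := by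
  simp only [sqnorm_eq_dotProduct, sq,
    OrthonormalBasis.sum_dotProduct_mul_dotProduct hS.eigenvectorBasis]

lemma dotProduct_mulVec_eq_sum_eigenvalues_mul_sq (v : Fin m → ℝ) :
    v ⬝ᵥ S *ᵥ v = ∑ i, hS.eigenvalues i * (v ⬝ᵥ ⇑(hS.eigenvectorBasis i)) ^ 2 := by
  rw [← OrthonormalBasis.sum_dotProduct_mul_dotProduct hS.eigenvectorBasis]
  simp only [mulVec_dotProduct_eigenvectorBasis hS]
  exact Finset.sum_congr rfl fun i _ => by ring

lemma setOf_nonzero_eigenvalue_eq :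
    {c : ℝ | c ≠ 0 ∧ ∃ v : Fin m → ℝ, v ≠ 0 ∧ S *ᵥ v = c • v}
      = Set.range hS.eigenvalues \ {0} := by
  ext c
  refine ⟨fun ⟨hc, v, hv, hSv⟩ => ⟨?_, hc⟩, fun ⟨⟨i, hi⟩, hc⟩ => ⟨hc, ?_⟩⟩
  · obtain ⟨i, hi⟩ : ∃ i, v ⬝ᵥ ⇑(hS.eigenvectorBasis i) ≠ 0 := by
      by_contra! h0
      apply hv
      rw [← dotProduct_self_eq_zero, ← sqnorm_eq_dotProduct,
        sqnorm_eq_sum_dotProduct_eigenvectorBasis_sq hS]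
      simp [h0]
    have := mulVec_dotProduct_eigenvectorBasis hS v i
    rw [hSv, smul_dotProduct, smul_eq_mul] at this
    exact ⟨i, (mul_right_cancel₀ hi this).symm⟩
  · subst hi
    exact ⟨_, (WithLp.ofLp_eq_zero 2).ne.2 (hS.eigenvectorBasis.orthonormal.ne_zero i),
      hS.mulVec_eigenvectorBasis i⟩

lemma lamMinPos_le_eigenvalues {i : Fin m} (hi : hS.eigenvalues i ≠ 0) :
    lamMinPos S ≤ hS.eigenvalues i := by
  rw [lamMinPos, setOf_nonzero_eigenvalue_eq hS]
  exact csInf_le ((Set.finite_range _).sdiff.bddBelow) ⟨⟨i, rfl⟩, hi⟩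

lemma lamMinPos_mem_range_eigenvalues (hne : S ≠ 0) :
    lamMinPos S ∈ Set.range hS.eigenvalues \ {0} := by
  have hμ : hS.eigenvalues ≠ 0 := fun h => hne (hS.eigenvalues_eq_zero_iff.mp h)
  obtain ⟨i, hi⟩ := Function.ne_iff.mp hμ
  rw [lamMinPos, setOf_nonzero_eigenvalue_eq hS]
  exact Set.Nonempty.csInf_mem ⟨_, ⟨i, rfl⟩, hi⟩ (Set.finite_range _).sdiff

lemma lamMinPos_mul_sqnorm_le {u : Fin m → ℝ} (hu : ∀ k, S *ᵥ k = 0 → u ⬝ᵥ k = 0) :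
    lamMinPos S * sqnorm u ≤ u ⬝ᵥ S *ᵥ u := by
  rw [sqnorm_eq_sum_dotProduct_eigenvectorBasis_sq hS,
    dotProduct_mulVec_eq_sum_eigenvalues_mul_sq hS, Finset.mul_sum]
  refine Finset.sum_le_sum fun i _ => ?_
  by_cases hi : hS.eigenvalues i = 0
  · have hker : S *ᵥ ⇑(hS.eigenvectorBasis i) = 0 := by
      rw [hS.mulVec_eigenvectorBasis, hi, zero_smul]
    simp [hu _ hker, hi]
  · exact mul_le_mul_of_nonneg_right (lamMinPos_le_eigenvalues hS hi) (sq_nonneg _)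

end Spectral

lemma lamMinPos_pos {m : ℕ} {S : Matrix (Fin m) (Fin m) ℝ}
    (hS : S.PosSemidef) (hne : S ≠ 0) : 0 < lamMinPos S := by
  obtain ⟨⟨i, hi⟩, hne0⟩ := lamMinPos_mem_range_eigenvalues hS.isHermitian hne
  exact lt_of_le_of_ne (hi ▸ hS.eigenvalues_nonneg i) (Ne.symm hne0)

section Regression

variable {N m : ℕ} {X : Matrix (Fin N) (Fin m) ℝ} {n : ℝ}

lemma dotProduct_mulVec_le_sqnorm_mulVec_div_add {S : Matrix (Fin m) (Fin m) ℝ} {q : ℝ}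
    (hq : ∀ i j, |(∑ k, X k i * X k j) / n - S i j| ≤ q) (Δ : Fin m → ℝ) :
    Δ ⬝ᵥ S *ᵥ Δ ≤ sqnorm (X *ᵥ Δ) / n + q * l1norm Δ ^ 2 := by
  set G : Matrix (Fin m) (Fin m) ℝ := n⁻¹ • (Xᵀ * X)
  have hG : Δ ⬝ᵥ G *ᵥ Δ = sqnorm (X *ᵥ Δ) / n := by
    rw [smul_mulVec, dotProduct_smul, ← mulVec_mulVec, dotProduct_mulVec, vecMul_transpose,
      sqnorm_eq_dotProduct, smul_eq_mul, inv_mul_eq_div]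
  have hE : ∀ i j, |(G - S) i j| ≤ q := fun i j => by
    simpa [G, mul_apply, div_eq_inv_mul] using hq i j
  have := abs_le.mp (abs_dotProduct_mulVec_le hE Δ)
  rw [sub_mulVec, dotProduct_sub, hG] at this
  linarith [this.1]

lemma sqnorm_mulVec_div_le {ε : Fin N → ℝ} {r s σ2 : ℝ} (hn : 0 < n)
    (hr : ∀ j, |(Xᵀ *ᵥ ε) j / n| ≤ r) (hs : |sqnorm ε / n - σ2| ≤ s)
    {Δ : Fin m → ℝ} (hfit : sqnorm (ε - X *ᵥ Δ) / n ≤ σ2 + s) :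
    sqnorm (X *ᵥ Δ) / n ≤ 2 * s + 2 * r * l1norm Δ := by
  have hcross : |(ε ⬝ᵥ X *ᵥ Δ) / n| ≤ r * l1norm Δ := by
    have : (ε ⬝ᵥ X *ᵥ Δ) / n = (fun j => (Xᵀ *ᵥ ε) j / n) ⬝ᵥ Δ := by
      rw [dotProduct_mulVec, ← mulVec_transpose, dotProduct, dotProduct, Finset.sum_div]
      exact Finset.sum_congr rfl fun j _ => by ring
    rw [this]
    exact abs_dotProduct_le_mul_l1norm hr Δ
  have hexpand : sqnorm (ε - X *ᵥ Δ) / n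
      = sqnorm ε / n - 2 * ((ε ⬝ᵥ X *ᵥ Δ) / n) + sqnorm (X *ᵥ Δ) / n := by
    rw [← one_smul ℝ (X *ᵥ Δ), sqnorm_sub_smul, one_smul]
    field_simp
  rw [hexpand] at hfit
  linarith [le_of_abs_le hcross, (abs_le.mp hs).1]

end Regression

theorem statement10_general (dbar N : ℕ)
    (S : Matrix (Fin dbar) (Fin dbar) ℝ) (hSpsd : S.PosSemidef) (hSne : S ≠ 0)
    (ρ : Fin dbar → ℝ)
    (βstar : Fin dbar → ℝ) (hβstar : S.mulVec βstar = ρ)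
    (X : Matrix (Fin N) (Fin dbar) ℝ) (ε : Fin N → ℝ) (y : Fin N → ℝ)
    (hy : y = X.mulVec βstar + ε)
    (n : ℝ) (hn : 0 < n)
    (qn rn sn σ2 : ℝ) (hqn0 : 0 ≤ qn) (hrn0 : 0 ≤ rn)
    (hqn : ∀ i j, |(∑ k, X k i * X k j) / n - S i j| ≤ qn)
    (hrn : ∀ j, |X.transpose.mulVec ε j / n| ≤ rn)
    (hsn : |sqnorm ε / n - σ2| ≤ sn)
    (M : ℝ) (hM : l1norm βstar ≤ M)
    (βhat : Fin dbar → ℝ)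
    (hβhatA : sqnorm (y - X.mulVec βhat) / n ≤ σ2 + sn)
    (hβhatM : l1norm βhat ≤ M)
    (βhatP : Fin dbar → ℝ)
    (hβhatPFeas : S.mulVec βhatP = ρ)
    (hβhatPProj : ∀ β : Fin dbar → ℝ, S.mulVec β = ρ →
      sqnorm (βhat - βhatP) ≤ sqnorm (βhat - β)) :
    sqnorm (βhat - βhatP)
      ≤ (4 * M * rn + 2 * sn + 4 * M ^ 2 * qn) / lamMinPos S := by
  set u := βhat - βhatP
  set Δ := βhat - βstar
  have hperp : ∀ k, S *ᵥ k = 0 → u ⬝ᵥ k = 0 := fun k hk =>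
    sub_dotProduct_eq_zero_of_mulVec_eq_zero hβhatPFeas hβhatPProj hk
  have hSu : S *ᵥ u = S *ᵥ Δ := by simp only [u, Δ, mulVec_sub, hβstar, hβhatPFeas]
  have hΔ : l1norm Δ ≤ 2 * M := by linarith [l1norm_sub_le βhat βstar]
  have hfit : sqnorm (ε - X *ᵥ Δ) / n ≤ σ2 + sn := by
    rwa [show ε - X *ᵥ Δ = y - X *ᵥ βhat by rw [hy, mulVec_sub]; abel]
  have hquad : Δ ⬝ᵥ S *ᵥ Δ ≤ 2 * sn + 2 * rn * l1norm Δ + qn * l1norm Δ ^ 2 := by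
    linarith [dotProduct_mulVec_le_sqnorm_mulVec_div_add hqn Δ,
      sqnorm_mulVec_div_le hn hrn hsn hfit]
  have hΔ0 : 0 ≤ l1norm Δ := l1norm_nonneg Δ
  rw [le_div_iff₀ (lamMinPos_pos hSpsd hSne), mul_comm]
  calc lamMinPos S * sqnorm u ≤ u ⬝ᵥ S *ᵥ u := lamMinPos_mul_sqnorm_le hSpsd.isHermitian hperp
    _ = Δ ⬝ᵥ S *ᵥ Δ :=
      dotProduct_mulVec_eq_of_mulVec_eq (isHermitian_iff_isSymm.mp hSpsd.isHermitian) hSu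
    _ ≤ 2 * sn + 2 * rn * (2 * M) + qn * (2 * M) ^ 2 := by grw [hquad, hΔ]
    _ = 4 * M * rn + 2 * sn + 4 * M ^ 2 * qn := by ring

/-- The distance of any feasible point `β̂` of the constrained problem from the
affine set `{β : Σβ = ρ}` satisfies `‖β̂ − β̂_P‖² ≤ vₙ`, where `β̂_P` is the orthogonal projection
of `β̂` onto that set and `vₙ = (4Mrₙ + 2sₙ + 4M²qₙ)/Λ_min⁺(Σ)`. -/
theorem statement10 (dbar N : ℕ)
    (S : Matrix (Fin dbar) (Fin dbar) ℝ) (hSpsd : S.PosSemidef) (hSne : S ≠ 0)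
    (ρ : Fin dbar → ℝ) (hρ : ∃ w, S.mulVec w = ρ)
    (βstar : Fin dbar → ℝ) (hβstar : S.mulVec βstar = ρ)
    (X : Matrix (Fin N) (Fin dbar) ℝ) (ε : Fin N → ℝ) (y : Fin N → ℝ)
    (hy : y = X.mulVec βstar + ε)
    (n : ℝ) (hn : 0 < n)
    (qn rn sn σ2 : ℝ) (hqn0 : 0 ≤ qn) (hrn0 : 0 ≤ rn) (hsn0 : 0 ≤ sn) (hσ20 : 0 ≤ σ2)
    (hqn : ∀ i j, |(∑ k, X k i * X k j) / n - S i j| ≤ qn)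
    (hrn : ∀ j, |X.transpose.mulVec ε j / n| ≤ rn)
    (hsn : |sqnorm ε / n - σ2| ≤ sn)
    (M : ℝ) (hM : l1norm βstar ≤ M)
    (βhat : Fin dbar → ℝ)
    (hβhatA : sqnorm (y - X.mulVec βhat) / n ≤ σ2 + sn)
    (hβhatM : l1norm βhat ≤ M)
    (βhatP : Fin dbar → ℝ)
    (hβhatPFeas : S.mulVec βhatP = ρ)
    (hβhatPProj : ∀ β : Fin dbar → ℝ, S.mulVec β = ρ →
      sqnorm (βhat - βhatP) ≤ sqnorm (βhat - β)) :
    sqnorm (βhat - βhatP)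
      ≤ (4 * M * rn + 2 * sn + 4 * M ^ 2 * qn) / lamMinPos S :=
  statement10_general dbar N S hSpsd hSne ρ βstar hβstar X ε y hy n hn qn rn sn σ2 hqn0 hrn0 hqn hrn
    hsn M hM βhat hβhatA hβhatM βhatP hβhatPFeas hβhatPProj

end Statement10
end

section
/- Let Σ ∈ ℝ^{d̄×d̄} be a nonzero positive semidefinite matrix, ρ ∈ ℝ^{d̄} a vector in the column space of Σ, and β* ∈ ℝ^{d̄} with Σβ* = ρ. Let X ∈ ℝ^{N×d̄}, ε ∈ ℝ^N, y = Xβ* + ε, and n > 0, and suppose ‖XᵀX/n − Σ‖_∞ ≤ q_n, ‖Xᵀε/n‖_∞ ≤ r_n, and |(1/n)‖ε‖² − σ²| ≤ s_n for some reals q_n, r_n, s_n ≥ 0 and σ² ≥ 0; let A_n = σ² + s_n and M ≥ ‖β*‖₁. Fix α > 0 and f_α(β) := ‖β‖₁ + (α/2)‖β‖². Let β̂ satisfy the constraints (1/n)‖y − Xβ̂‖² ≤ A_n and ‖β̂‖₁ ≤ M, and let β̂_P be the orthogonal projection of β̂ onto the affine set {β : Σβ = ρ}. Then f_α(β̂_P)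 − f_α(β̂) ≤ (√d̄ + αM) v_n^{1/2} + (α/2) v_n, where v_n := (4 M r_n + 2 s_n + 4 M² q_n) / Λ_min⁺(Σ) and Λ_min⁺(Σ) is the smallest nonzero eigenvalue of Σ. -/
/-!
Write `β̂_P = β̂ + δ` and `u = β* - β̂`. Minimality of the projection makes `δ` orthogonal to
`ker Σ`, so expanding in an orthonormal eigenbasis gives `Λ⁺_min ‖δ‖² ≤ δᵀΣδ`; and `Σδ = Σu`, so
`δᵀΣδ = uᵀΣu`. Replacing `Σ` by the Gram matrix `XᵀX/n` costs `q_n ‖u‖₁²`, and since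
`y - Xβ̂ = Xu + ε` the fit constraint bounds `‖Xu‖²/n` by `2 s_n + 2 r_n ‖u‖₁`; with `‖u‖₁ ≤ 2M`
this gives `‖δ‖² ≤ v_n`. Finally `f_α(β̂ + δ) - f_α(β̂) ≤ ‖δ‖₁ + α ⟪β̂, δ⟫ + (α/2) ‖δ‖²`, where
`‖δ‖₁ ≤ √d̄ ‖δ‖` and `⟪β̂, δ⟫ ≤ ‖β̂‖₁ ‖δ‖_∞ ≤ M ‖δ‖`.
-/

namespace Statement11

/-- The ℓ₁-norm of a vector. -/
noncomputable def l1norm {m : ℕ} (v : Fin m → ℝ) : ℝ := ∑ i, |v i|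

/-- The squared Euclidean norm of a vector. -/
def sqnorm {m : ℕ} (v : Fin m → ℝ) : ℝ := ∑ i, (v i) ^ 2

/-- The smallest nonzero eigenvalue of a matrix. -/
noncomputable def lamMinPos {m : ℕ} (S : Matrix (Fin m) (Fin m) ℝ) : ℝ :=
  sInf {c : ℝ | c ≠ 0 ∧ ∃ v : Fin m → ℝ, v ≠ 0 ∧ S.mulVec v = c • v}

open Matrix

section Norms

variable {m : ℕ}

theorem sqnorm_eq_dotProduct (v : Fin m → ℝ) : sqnorm v = v ⬝ᵥ v := by
  simp [sqnorm, dotProduct, sq]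

theorem sqnorm_pos {v : Fin m → ℝ} (hv : v ≠ 0) : 0 < sqnorm v := by
  rw [sqnorm_eq_dotProduct]
  exact lt_of_le_of_ne (dotProduct_self_star_nonneg v)
    (Ne.symm (dotProduct_self_eq_zero.not.mpr hv))

theorem sqnorm_add (a b : Fin m → ℝ) : sqnorm (a + b) = sqnorm a + 2 * (a ⬝ᵥ b) + sqnorm b := by
  simp only [sqnorm_eq_dotProduct, add_dotProduct, dotProduct_add, dotProduct_comm b a]
  ring

theorem sqnorm_sub (a b : Fin m → ℝ) : sqnorm (a - b) = sqnorm a - 2 * (a ⬝ᵥ b) + sqnorm b := by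
  simp only [sqnorm_eq_dotProduct, sub_dotProduct, dotProduct_sub, dotProduct_comm b a]
  ring

theorem sqnorm_smul (t : ℝ) (v : Fin m → ℝ) : sqnorm (t • v) = t ^ 2 * sqnorm v := by
  simp only [sqnorm_eq_dotProduct, dotProduct_smul, smul_dotProduct, smul_eq_mul]
  ring

theorem abs_le_sqrt_sqnorm (v : Fin m → ℝ) (i : Fin m) : |v i| ≤ √(sqnorm v) :=
  Real.abs_le_sqrt <| Finset.single_le_sum (f := fun j => v j ^ 2)
    (fun j _ => sq_nonneg (v j)) (Finset.mem_univ i)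

theorem l1norm_nonneg (v : Fin m → ℝ) : 0 ≤ l1norm v :=
  Finset.sum_nonneg fun _ _ => abs_nonneg _

theorem l1norm_add_le (a b : Fin m → ℝ) : l1norm (a + b) ≤ l1norm a + l1norm b := by
  simp only [l1norm, ← Finset.sum_add_distrib]
  exact Finset.sum_le_sum fun i _ => abs_add_le (a i) (b i)

theorem l1norm_sub_le (a b : Fin m → ℝ) : l1norm (a - b) ≤ l1norm a + l1norm b := by
  simp only [l1norm, ← Finset.sum_add_distrib]
  exact Finset.sum_le_sum fun i _ => abs_sub (a i) (b i)

theorem l1norm_le_sqrt_mul_sqrt_sqnorm (v : Fin m → ℝ) : l1norm v ≤ √m * √(sqnorm v) := by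
  rw [← Real.sqrt_mul (Nat.cast_nonneg m)]
  refine Real.le_sqrt_of_sq_le ?_
  simpa [l1norm, sqnorm, sq_abs] using
    Finset.sum_mul_sq_le_sq_mul_sq Finset.univ (fun _ => (1 : ℝ)) (fun i => |v i|)

theorem abs_dotProduct_le_l1norm_mul {a b : Fin m → ℝ} {r : ℝ} (hb : ∀ i, |b i| ≤ r) :
    |a ⬝ᵥ b| ≤ l1norm a * r := by
  rw [l1norm, Finset.sum_mul]
  refine (Finset.abs_sum_le_sum_abs _ _).trans (Finset.sum_le_sum fun i _ => ?_)
  rw [abs_mul]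
  exact mul_le_mul_of_nonneg_left (hb i) (abs_nonneg _)

theorem abs_dotProduct_mulVec_le {A : Matrix (Fin m) (Fin m) ℝ} {q : ℝ}
    (hA : ∀ i j, |A i j| ≤ q) (u : Fin m → ℝ) : |u ⬝ᵥ A *ᵥ u| ≤ q * l1norm u ^ 2 := by
  have hq : ∀ i, |(A *ᵥ u) i| ≤ l1norm u * q := fun i => by
    simpa [mulVec, dotProduct_comm] using abs_dotProduct_le_l1norm_mul (a := u) (hA i)
  calc |u ⬝ᵥ A *ᵥ u| ≤ l1norm u * (l1norm u * q) := abs_dotProduct_le_l1norm_mul hq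
    _ = q * l1norm u ^ 2 := by ring

theorem dotProduct_eq_zero_of_forall_sqnorm_le {x w : Fin m → ℝ}
    (h : ∀ t : ℝ, sqnorm x ≤ sqnorm (x - t • w)) : x ⬝ᵥ w = 0 := by
  by_cases hw : w = 0
  · rw [hw, dotProduct_zero]
  -- Take the step `t = ⟪x, w⟫ / ‖w‖²` that minimises the quadratic `t ↦ ‖x - t w‖²`.
  have hpos := sqnorm_pos hw
  have key := h ((x ⬝ᵥ w) / sqnorm w)
  rw [sqnorm_sub, sqnorm_smul, dotProduct_smul, smul_eq_mul] at key
  have hsq : (x ⬝ᵥ w) ^ 2 ≤ 0 := by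
    field_simp at key
    nlinarith
  exact pow_eq_zero_iff two_ne_zero |>.mp (le_antisymm hsq (sq_nonneg _))

end Norms

section Spectrum

variable {m : ℕ} {S : Matrix (Fin m) (Fin m) ℝ}

variable (S) in
def nonzeroEigenvalues : Set ℝ := {c : ℝ | c ≠ 0 ∧ ∃ v : Fin m → ℝ, v ≠ 0 ∧ S *ᵥ v = c • v}

theorem _root_.Matrix.IsHermitian.dotProduct_mulVec_comm (hS : S.IsHermitian) (a b : Fin m → ℝ) :
    a ⬝ᵥ S *ᵥ b = S *ᵥ a ⬝ᵥ b := by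
  rw [dotProduct_mulVec, ← mulVec_transpose, ← conjTranspose_eq_transpose_of_trivial, hS.eq]

theorem nonzeroEigenvalues_finite : (nonzeroEigenvalues S).Finite := by
  refine (Module.End.finite_hasEigenvalue (toLin' S)).subset ?_
  rintro c ⟨-, v, hv, hSv⟩
  exact Module.End.hasEigenvalue_of_hasEigenvector
    ⟨Module.End.mem_eigenspace_iff.mpr (by rwa [toLin'_apply]), hv⟩

theorem nonzeroEigenvalues_nonempty (hS : S.IsHermitian) (hS0 : S ≠ 0) :
    (nonzeroEigenvalues S).Nonempty := by
  obtain ⟨v, c, hc, hv, hSv⟩ := hS.exists_eigenvector_of_ne_zero hS0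
  exact ⟨c, hc, v, hv, hSv⟩

theorem nonneg_of_mulVec_eq_smul (hS : S.PosSemidef) {v : Fin m → ℝ} (hv : v ≠ 0) {c : ℝ}
    (hSv : S *ᵥ v = c • v) : 0 ≤ c := by
  have h := hS.dotProduct_mulVec_nonneg v
  rw [star_trivial, hSv, dotProduct_smul, smul_eq_mul, ← sqnorm_eq_dotProduct] at h
  exact nonneg_of_mul_nonneg_left h (sqnorm_pos hv)

theorem lamMinPos_le {c : ℝ} (hc : c ∈ nonzeroEigenvalues S) : lamMinPos S ≤ c :=
  csInf_le nonzeroEigenvalues_finite.bddBelow hc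

theorem lamMinPos_pos (hS : S.PosSemidef) (hS0 : S ≠ 0) : 0 < lamMinPos S := by
  obtain ⟨hne, v, hv, hSv⟩ :=
    (nonzeroEigenvalues_nonempty hS.isHermitian hS0).csInf_mem nonzeroEigenvalues_finite
  exact lt_of_le_of_ne (nonneg_of_mulVec_eq_smul hS hv hSv) (Ne.symm hne)

theorem dotProduct_eq_sum_eigenvectorBasis (hS : S.IsHermitian) (x y : Fin m → ℝ) :
    x ⬝ᵥ y = ∑ i, (x ⬝ᵥ hS.eigenvectorBasis i) * (hS.eigenvectorBasis i ⬝ᵥ y) := by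
  have h := (hS.eigenvectorBasis).sum_inner_mul_inner (WithLp.toLp 2 x) (WithLp.toLp 2 y)
  simp only [EuclideanSpace.inner_eq_star_dotProduct, star_trivial] at h
  simpa [dotProduct_comm] using h.symm

theorem lamMinPos_mul_sqnorm_le (hS : S.IsHermitian) {d : Fin m → ℝ}
    (hd : ∀ v, S *ᵥ v = 0 → d ⬝ᵥ v = 0) : lamMinPos S * sqnorm d ≤ d ⬝ᵥ S *ᵥ d := by
  set b := hS.eigenvectorBasis
  have hb : ∀ i, b i ⬝ᵥ S *ᵥ d = hS.eigenvalues i * (d ⬝ᵥ b i) := fun i => by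
    rw [hS.dotProduct_mulVec_comm, hS.mulVec_eigenvectorBasis, smul_dotProduct, smul_eq_mul,
      dotProduct_comm]
  rw [sqnorm_eq_dotProduct, dotProduct_eq_sum_eigenvectorBasis hS d d,
    dotProduct_eq_sum_eigenvectorBasis hS d, Finset.mul_sum]
  -- In the eigenbasis, `d` has no weight on the kernel and every other eigenvalue is `≥ λ⁺`.
  refine Finset.sum_le_sum fun i _ => ?_
  rw [hb, dotProduct_comm (b i) d]
  by_cases h0 : hS.eigenvalues i = 0
  · have hker : d ⬝ᵥ b i = 0 := hd _ (by rw [hS.mulVec_eigenvectorBasis, h0, zero_smul])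
    simp [hker]
  · have hle : lamMinPos S ≤ hS.eigenvalues i :=
      lamMinPos_le ⟨h0, b i, by simpa using b.orthonormal.ne_zero i, hS.mulVec_eigenvectorBasis i⟩
    nlinarith [sq_nonneg (d ⬝ᵥ b i)]

end Spectrum

section Regression

variable {m N : ℕ}

theorem dotProduct_transpose_mul_self_mulVec (X : Matrix (Fin N) (Fin m) ℝ) (u : Fin m → ℝ) :
    u ⬝ᵥ (Xᵀ * X) *ᵥ u = sqnorm (X *ᵥ u) := by
  rw [← mulVec_mulVec, dotProduct_transpose_mulVec, sqnorm_eq_dotProduct]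

theorem dotProduct_mulVec_le_of_gram {S : Matrix (Fin m) (Fin m) ℝ} {X : Matrix (Fin N) (Fin m) ℝ}
    {n q : ℝ} (hq : ∀ i j, |(Xᵀ * X) i j / n - S i j| ≤ q) (u : Fin m → ℝ) :
    u ⬝ᵥ S *ᵥ u ≤ q * l1norm u ^ 2 + sqnorm (X *ᵥ u) / n := by
  have hdev : ∀ i j, |(S - n⁻¹ • (Xᵀ * X)) i j| ≤ q := fun i j => by
    simpa [abs_sub_comm, div_eq_inv_mul] using hq i j
  have hsplit : u ⬝ᵥ S *ᵥ u = u ⬝ᵥ (S - n⁻¹ • (Xᵀ * X)) *ᵥ u + sqnorm (X *ᵥ u) / n := by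
    rw [sub_mulVec, dotProduct_sub, smul_mulVec, dotProduct_smul,
      dotProduct_transpose_mul_self_mulVec, smul_eq_mul, div_eq_inv_mul, sub_add_cancel]
  rw [hsplit]
  exact add_le_add_left ((le_abs_self _).trans (abs_dotProduct_mulVec_le hdev u)) _

theorem sqnorm_mulVec_div_le {X : Matrix (Fin N) (Fin m) ℝ} {ε : Fin N → ℝ} {n r s σ2 : ℝ}
    (hr : ∀ j, |(Xᵀ *ᵥ ε) j / n| ≤ r) (hs : |sqnorm ε / n - σ2| ≤ s)
    {u : Fin m → ℝ} (hfit : sqnorm (X *ᵥ u + ε) / n ≤ σ2 + s) :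
    sqnorm (X *ᵥ u) / n ≤ 2 * s + 2 * r * l1norm u := by
  have hcross : |(X *ᵥ u ⬝ᵥ ε) / n| ≤ l1norm u * r := by
    have h := abs_dotProduct_le_l1norm_mul (a := u) (b := n⁻¹ • (Xᵀ *ᵥ ε))
      fun j => by simpa [div_eq_inv_mul] using hr j
    rwa [dotProduct_smul, smul_eq_mul, dotProduct_transpose_mulVec, dotProduct_comm,
      ← div_eq_inv_mul] at h
  rw [sqnorm_add, add_div, add_div, mul_div_assoc] at hfit
  linarith [(abs_le.mp hs).1, (abs_le.mp hcross).1]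

theorem dotProduct_mulVec_le_of_fit {S : Matrix (Fin m) (Fin m) ℝ} {X : Matrix (Fin N) (Fin m) ℝ}
    {ε : Fin N → ℝ} {n q r s σ2 : ℝ} (hq : ∀ i j, |(Xᵀ * X) i j / n - S i j| ≤ q)
    (hr : ∀ j, |(Xᵀ *ᵥ ε) j / n| ≤ r) (hs : |sqnorm ε / n - σ2| ≤ s) {u : Fin m → ℝ}
    (hfit : sqnorm (X *ᵥ u + ε) / n ≤ σ2 + s) :
    u ⬝ᵥ S *ᵥ u ≤ q * l1norm u ^ 2 + 2 * s + 2 * r * l1norm u := by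
  linarith [dotProduct_mulVec_le_of_gram hq u, sqnorm_mulVec_div_le hr hs hfit]

end Regression

theorem sub_dotProduct_eq_zero_of_isProj {m : ℕ} {S : Matrix (Fin m) (Fin m) ℝ}
    {ρ b p : Fin m → ℝ}
    (hp : S *ᵥ p = ρ) (hmin : ∀ β, S *ᵥ β = ρ → sqnorm (b - p) ≤ sqnorm (b - β))
    {w : Fin m → ℝ} (hw : S *ᵥ w = 0) : (p - b) ⬝ᵥ w = 0 := by
  rw [← neg_sub, neg_dotProduct, neg_eq_zero]
  refine dotProduct_eq_zero_of_forall_sqnorm_le fun t => ?_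
  simpa [sub_sub] using
    hmin (p + t • w) (by rw [mulVec_add, mulVec_smul, hw, smul_zero, add_zero, hp])

theorem objective_add_sub_le {m : ℕ} {α : ℝ} (hα : 0 ≤ α) (b δ : Fin m → ℝ) :
    (l1norm (b + δ) + α / 2 * sqnorm (b + δ)) - (l1norm b + α / 2 * sqnorm b)
      ≤ (√m + α * l1norm b) * √(sqnorm δ) + α / 2 * sqnorm δ := by
  have hl1 := (l1norm_add_le b δ).trans (add_le_add_right (l1norm_le_sqrt_mul_sqrt_sqnorm δ) _)
  have hcross : b ⬝ᵥ δ ≤ l1norm b * √(sqnorm δ) :=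
    (le_abs_self _).trans (abs_dotProduct_le_l1norm_mul (abs_le_sqrt_sqnorm δ))
  rw [sqnorm_add]
  nlinarith [mul_le_mul_of_nonneg_left hcross hα]

theorem statement11_general (dbar N : ℕ)
    (S : Matrix (Fin dbar) (Fin dbar) ℝ) (hSpsd : S.PosSemidef) (hSne : S ≠ 0)
    (ρ : Fin dbar → ℝ)
    (βstar : Fin dbar → ℝ) (hβstar : S.mulVec βstar = ρ)
    (X : Matrix (Fin N) (Fin dbar) ℝ) (ε : Fin N → ℝ) (y : Fin N → ℝ)
    (hy : y = X.mulVec βstar + ε)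
    (n : ℝ)
    (qn rn sn σ2 : ℝ) (hqn0 : 0 ≤ qn) (hrn0 : 0 ≤ rn)
    (hqn : ∀ i j, |(∑ k, X k i * X k j) / n - S i j| ≤ qn)
    (hrn : ∀ j, |X.transpose.mulVec ε j / n| ≤ rn)
    (hsn : |sqnorm ε / n - σ2| ≤ sn)
    (M : ℝ) (hM : l1norm βstar ≤ M)
    (α : ℝ) (hα : 0 < α)
    (βhat : Fin dbar → ℝ)
    (hβhatA : sqnorm (y - X.mulVec βhat) / n ≤ σ2 + sn)
    (hβhatM : l1norm βhat ≤ M)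
    (βhatP : Fin dbar → ℝ)
    (hβhatPFeas : S.mulVec βhatP = ρ)
    (hβhatPProj : ∀ β : Fin dbar → ℝ, S.mulVec β = ρ →
      sqnorm (βhat - βhatP) ≤ sqnorm (βhat - β)) :
    (l1norm βhatP + α / 2 * sqnorm βhatP) - (l1norm βhat + α / 2 * sqnorm βhat)
      ≤ (Real.sqrt dbar + α * M)
          * Real.sqrt ((4 * M * rn + 2 * sn + 4 * M ^ 2 * qn) / lamMinPos S)
        + α / 2 * ((4 * M * rn + 2 * sn + 4 * M ^ 2 * qn) / lamMinPos S) := by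
  set C := 4 * M * rn + 2 * sn + 4 * M ^ 2 * qn
  set u := βstar - βhat
  obtain ⟨δ, rfl⟩ : ∃ δ, βhatP = βhat + δ := ⟨βhatP - βhat, by abel⟩
  have hS : S.IsHermitian := hSpsd.isHermitian
  have hM0 : 0 ≤ M := (l1norm_nonneg βstar).trans hM
  have hu : l1norm u ≤ 2 * M := by linarith [l1norm_sub_le βstar βhat]
  have hquad : u ⬝ᵥ S *ᵥ u ≤ C := by
    have hres : y - X *ᵥ βhat = X *ᵥ u + ε := by rw [hy, mulVec_sub]; abel
    have := dotProduct_mulVec_le_of_fit (fun i j => by simpa [mul_apply] using hqn i j) hrn hsn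
      (hres ▸ hβhatA)
    nlinarith [mul_le_mul_of_nonneg_left (pow_le_pow_left₀ (l1norm_nonneg u) hu 2) hqn0,
      mul_le_mul_of_nonneg_left hu hrn0]
  have hSδ : S *ᵥ δ = S *ᵥ u := by
    rw [mulVec_sub, hβstar, ← hβhatPFeas, mulVec_add, add_sub_cancel_left]
  have hker : ∀ w, S *ᵥ w = 0 → δ ⬝ᵥ w = 0 := fun w hw => by
    simpa using sub_dotProduct_eq_zero_of_isProj hβhatPFeas hβhatPProj hw
  have hδ : sqnorm δ ≤ C / lamMinPos S := by
    rw [le_div_iff₀' (lamMinPos_pos hSpsd hSne)]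
    calc lamMinPos S * sqnorm δ ≤ δ ⬝ᵥ S *ᵥ δ := lamMinPos_mul_sqnorm_le hS hker
      _ = u ⬝ᵥ S *ᵥ u := by
        rw [hSδ, hS.dotProduct_mulVec_comm, hSδ, ← hS.dotProduct_mulVec_comm]
      _ ≤ C := hquad
  calc _ ≤ (√dbar + α * l1norm βhat) * √(sqnorm δ) + α / 2 * sqnorm δ :=
        objective_add_sub_le hα.le βhat δ
    _ ≤ _ := by gcongr

/-- For any feasible `β̂` of the constrained problem and its projection `β̂_P`
onto `{β : Σβ = ρ}`, one has `f_α(β̂_P) − f_α(β̂) ≤ (√d̄ + αM)√vₙ + (α/2)vₙ`. -/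
theorem statement11 (dbar N : ℕ)
    (S : Matrix (Fin dbar) (Fin dbar) ℝ) (hSpsd : S.PosSemidef) (hSne : S ≠ 0)
    (ρ : Fin dbar → ℝ) (hρ : ∃ w, S.mulVec w = ρ)
    (βstar : Fin dbar → ℝ) (hβstar : S.mulVec βstar = ρ)
    (X : Matrix (Fin N) (Fin dbar) ℝ) (ε : Fin N → ℝ) (y : Fin N → ℝ)
    (hy : y = X.mulVec βstar + ε)
    (n : ℝ) (hn : 0 < n)
    (qn rn sn σ2 : ℝ) (hqn0 : 0 ≤ qn) (hrn0 : 0 ≤ rn) (hsn0 : 0 ≤ sn) (hσ20 : 0 ≤ σ2)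
    (hqn : ∀ i j, |(∑ k, X k i * X k j) / n - S i j| ≤ qn)
    (hrn : ∀ j, |X.transpose.mulVec ε j / n| ≤ rn)
    (hsn : |sqnorm ε / n - σ2| ≤ sn)
    (M : ℝ) (hM : l1norm βstar ≤ M)
    (α : ℝ) (hα : 0 < α)
    (βhat : Fin dbar → ℝ)
    (hβhatA : sqnorm (y - X.mulVec βhat) / n ≤ σ2 + sn)
    (hβhatM : l1norm βhat ≤ M)
    (βhatP : Fin dbar → ℝ)
    (hβhatPFeas : S.mulVec βhatP = ρ)
    (hβhatPProj : ∀ β : Fin dbar → ℝ, S.mulVec β = ρ →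
      sqnorm (βhat - βhatP) ≤ sqnorm (βhat - β)) :
    (l1norm βhatP + α / 2 * sqnorm βhatP) - (l1norm βhat + α / 2 * sqnorm βhat)
      ≤ (Real.sqrt dbar + α * M)
          * Real.sqrt ((4 * M * rn + 2 * sn + 4 * M ^ 2 * qn) / lamMinPos S)
        + α / 2 * ((4 * M * rn + 2 * sn + 4 * M ^ 2 * qn) / lamMinPos S) :=
  statement11_general dbar N S hSpsd hSne ρ βstar hβstar X ε y hy n qn rn sn σ2 hqn0 hrn0 hqn hrn
    hsn M hM α hα βhat hβhatA hβhatM βhatP hβhatPFeas hβhatPProj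

end Statement11
end

section
/- Let Σ ∈ ℝ^{d̄×d̄} be a nonzero positive semidefinite matrix with smallest eigenvalue Λ_min(Σ) = 0, and ρ ∈ ℝ^{d̄} in the column space of Σ. Fix α > 0, let f_α(β) := ‖β‖₁ + (α/2)‖β‖², and β*^{(α)} := argmin{ f_α(β) : Σβ = ρ }. Let X ∈ ℝ^{N×d̄}, ε ∈ ℝ^N, y = Xβ*^{(α)} + ε, and n > 0, and suppose ‖XᵀX/n − Σ‖_∞ ≤ q_n, ‖Xᵀε/n‖_∞ ≤ r_n, and |(1/n)‖ε‖² − σ²| ≤ s_n for some reals q_n, r_n, s_n ≥ 0 and σ² ≥ 0; let A_n = σ² + s_n and M ≥ ‖β*^{(α)}‖₁. Let β̂^{(α)} be a minimizer of f_α over { β : (1/n)‖y − Xβ‖² ≤ A_n, ‖β‖₁ ≤ M }, and let β̂_P be the orthogonal projection of β̂^{(α)} onto {β : Σβ = ρ}. Then ‖β̂_P − β*^{(α)}‖² ≤ 2(√d̄/α + M) v_n^{1/2} + v_n, where v_n := (4 M r_n + 2 s_n + 4 M² q_n) / Λ_min⁺(Σ) and Λ_min⁺(Σ) is the smallest nonzero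 eigenvalue of Σ. -/
/-!
Split `β̂ - β* = w + u` with `w = β̂ - β̂_P` and `u = β̂_P - β*`, so that `Σ u = 0`.
The projection makes `w` orthogonal to `ker Σ`, hence
`Λ⁺ ‖w‖² ≤ wᵀ Σ w = (β̂ - β*)ᵀ Σ (β̂ - β*)`. Replacing `Σ` by `XᵀX/n` costs at most
`4M² qₙ`, and feasibility of `β̂` bounds `‖X (β̂ - β*)‖² / n` by `2 sₙ + 4M rₙ`; thus `‖w‖² ≤ vₙ`.
On the other side, `f_α` is `α`-strongly convex and `β*` minimises it on the affine set
containing `β̂_P`, so `(α/2) ‖u‖² ≤ f_α(β̂_P) - f_α(β*)`. As `β*` is feasible for the estimator,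
`f_α(β̂) ≤ f_α(β*)`, and `f_α(β̂_P) - f_α(β̂) ≤ ‖w‖₁ + α |⟨β̂, w⟩| + (α/2) ‖w‖²`, which is at most
`√d̄ √vₙ + α M √vₙ + (α/2) vₙ`.
-/

namespace Statement12

/-- The ℓ₁-norm of a vector. -/
noncomputable def l1norm {m : ℕ} (v : Fin m → ℝ) : ℝ := ∑ i, |v i|

/-- The squared Euclidean norm of a vector. -/
def sqnorm {m : ℕ} (v : Fin m → ℝ) : ℝ := ∑ i, (v i) ^ 2

/-- The smallest nonzero eigenvalue of a matrix. -/
noncomputable def lamMinPos {m : ℕ} (S : Matrix (Fin m) (Fin m) ℝ) : ℝ :=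
  sInf {c : ℝ | c ≠ 0 ∧ ∃ v : Fin m → ℝ, v ≠ 0 ∧ S.mulVec v = c • v}

open Matrix Filter Topology

section Norms

variable {m : ℕ}

lemma l1norm_nonneg (v : Fin m → ℝ) : 0 ≤ l1norm v :=
  Finset.sum_nonneg fun _ _ => abs_nonneg _

lemma sqnorm_nonneg (v : Fin m → ℝ) : 0 ≤ sqnorm v :=
  Finset.sum_nonneg fun _ _ => sq_nonneg _

lemma sqnorm_eq_dotProduct (v : Fin m → ℝ) : sqnorm v = v ⬝ᵥ v := by
  simp [sqnorm, dotProduct, sq]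

lemma sqnorm_add (a b : Fin m → ℝ) : sqnorm (a + b) = sqnorm a + 2 * (a ⬝ᵥ b) + sqnorm b := by
  simp only [sqnorm_eq_dotProduct, add_dotProduct, dotProduct_add, dotProduct_comm b a]
  ring

lemma sqnorm_sub (a b : Fin m → ℝ) : sqnorm (a - b) = sqnorm a - 2 * (a ⬝ᵥ b) + sqnorm b := by
  simp only [sqnorm_eq_dotProduct, sub_dotProduct, dotProduct_sub, dotProduct_comm b a]
  ring

lemma sqnorm_smul (t : ℝ) (v : Fin m → ℝ) : sqnorm (t • v) = t ^ 2 * sqnorm v := by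
  simp only [sqnorm_eq_dotProduct, smul_dotProduct, dotProduct_smul, smul_eq_mul]
  ring

lemma l1norm_sub_le (a b : Fin m → ℝ) : l1norm (a - b) ≤ l1norm a + l1norm b := by
  rw [l1norm, l1norm, l1norm, ← Finset.sum_add_distrib]
  exact Finset.sum_le_sum fun i _ => abs_sub _ _

lemma l1norm_add_smul_sub_le {t : ℝ} (ht₀ : 0 ≤ t) (ht₁ : t ≤ 1) (x p : Fin m → ℝ) :
    l1norm (x + t • (p - x)) ≤ (1 - t) * l1norm x + t * l1norm p := by
  rw [l1norm, l1norm, l1norm, Finset.mul_sum, Finset.mul_sum, ← Finset.sum_add_distrib]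
  refine Finset.sum_le_sum fun i _ => ?_
  calc |x i + t * (p i - x i)| = |(1 - t) * x i + t * p i| := by ring_nf
    _ ≤ |(1 - t) * x i| + |t * p i| := abs_add_le _ _
    _ = (1 - t) * |x i| + t * |p i| := by
      rw [abs_mul, abs_mul, abs_of_nonneg (sub_nonneg.2 ht₁), abs_of_nonneg ht₀]

lemma sqnorm_le_sq_l1norm (v : Fin m → ℝ) : sqnorm v ≤ l1norm v ^ 2 := by
  simpa [l1norm, sqnorm, sq_abs] using
    Finset.sum_sq_le_sq_sum_of_nonneg (s := Finset.univ) fun i _ => abs_nonneg (v i)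

lemma l1norm_le_sqrt_mul_sqrt (v : Fin m → ℝ) : l1norm v ≤ √m * √(sqnorm v) := by
  rw [← Real.sqrt_mul (Nat.cast_nonneg _)]
  refine Real.le_sqrt_of_sq_le ?_
  simpa [l1norm, sqnorm, sq_abs] using
    sq_sum_le_card_mul_sum_sq (s := Finset.univ) (f := fun i => |v i|)

lemma abs_dotProduct_le_mul_l1norm {a : Fin m → ℝ} {r : ℝ} (ha : ∀ i, |a i| ≤ r)
    (b : Fin m → ℝ) : |a ⬝ᵥ b| ≤ r * l1norm b := by
  rw [l1norm, Finset.mul_sum]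
  refine (Finset.abs_sum_le_sum_abs _ _).trans (Finset.sum_le_sum fun i _ => ?_)
  rw [abs_mul]
  exact mul_le_mul_of_nonneg_right (ha i) (abs_nonneg _)

lemma abs_dotProduct_le_l1norm_mul_sqrt (a b : Fin m → ℝ) :
    |a ⬝ᵥ b| ≤ l1norm a * √(sqnorm b) := by
  have hcs : (a ⬝ᵥ b) ^ 2 ≤ l1norm a ^ 2 * sqnorm b :=
    calc (a ⬝ᵥ b) ^ 2 ≤ sqnorm a * sqnorm b := by
          simpa [sqnorm, dotProduct] using Finset.sum_mul_sq_le_sq_mul_sq Finset.univ a b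
      _ ≤ l1norm a ^ 2 * sqnorm b :=
          mul_le_mul_of_nonneg_right (sqnorm_le_sq_l1norm a) (sqnorm_nonneg b)
  calc |a ⬝ᵥ b| ≤ √(l1norm a ^ 2 * sqnorm b) := Real.abs_le_sqrt hcs
    _ = l1norm a * √(sqnorm b) := by
      rw [Real.sqrt_mul (sq_nonneg _), Real.sqrt_sq (l1norm_nonneg a)]

end Norms

section QuadraticForms

variable {m : ℕ}

lemma dotProduct_mulVec_le_add_mul_sq_l1norm {A B : Matrix (Fin m) (Fin m) ℝ} {q : ℝ}
    (hAB : ∀ i j, |A i j - B i j| ≤ q) (v : Fin m → ℝ) :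
    v ⬝ᵥ B *ᵥ v ≤ v ⬝ᵥ A *ᵥ v + q * l1norm v ^ 2 := by
  have key : v ⬝ᵥ B *ᵥ v - v ⬝ᵥ A *ᵥ v ≤ q * l1norm v ^ 2 := by
    rw [dot_mulVec_eq_sum_sum, dot_mulVec_eq_sum_sum, ← Finset.sum_sub_distrib, l1norm, sq,
      Finset.sum_mul_sum, Finset.mul_sum]
    refine Finset.sum_le_sum fun j _ => ?_
    rw [← Finset.sum_sub_distrib, Finset.mul_sum]
    refine Finset.sum_le_sum fun i _ => ?_
    calc v i * B i j * v j - v i * A i j * v j = -(v i * (A i j - B i j) * v j) := by ring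
      _ ≤ |v i * (A i j - B i j) * v j| := neg_le_abs _
      _ = |v i| * |A i j - B i j| * |v j| := by rw [abs_mul, abs_mul]
      _ ≤ |v i| * q * |v j| := by gcongr; exact hAB i j
      _ = q * (|v j| * |v i|) := by ring
  linarith

lemma sqnorm_mulVec {N : ℕ} (X : Matrix (Fin N) (Fin m) ℝ) (v : Fin m → ℝ) :
    sqnorm (X *ᵥ v) = v ⬝ᵥ (Xᵀ * X) *ᵥ v := by
  rw [sqnorm_eq_dotProduct, ← mulVec_mulVec, dotProduct_mulVec v, vecMul_transpose]

lemma dotProduct_mulVec_le_sqnorm_mulVec_div {N : ℕ} (X : Matrix (Fin N) (Fin m) ℝ)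
    (S : Matrix (Fin m) (Fin m) ℝ) {n q : ℝ}
    (hq : ∀ i j, |(∑ k, X k i * X k j) / n - S i j| ≤ q) (v : Fin m → ℝ) :
    v ⬝ᵥ S *ᵥ v ≤ sqnorm (X *ᵥ v) / n + q * l1norm v ^ 2 := by
  have h := dotProduct_mulVec_le_add_mul_sq_l1norm (A := n⁻¹ • (Xᵀ * X)) (B := S)
    (fun i j => by simpa [Matrix.mul_apply, div_eq_inv_mul] using hq i j) v
  rwa [smul_mulVec, dotProduct_smul, ← sqnorm_mulVec, smul_eq_mul, inv_mul_eq_div] at h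

lemma sqnorm_mulVec_div_le {N : ℕ} (X : Matrix (Fin N) (Fin m) ℝ) (ε : Fin N → ℝ) (δ : Fin m → ℝ)
    {n σ2 s r : ℝ} (hres : sqnorm (ε - X *ᵥ δ) / n ≤ σ2 + s) (hs : |sqnorm ε / n - σ2| ≤ s)
    (hr : ∀ j, |(Xᵀ *ᵥ ε) j / n| ≤ r) :
    sqnorm (X *ᵥ δ) / n ≤ 2 * s + 2 * r * l1norm δ := by
  have hcross : |(ε ⬝ᵥ X *ᵥ δ) / n| ≤ r * l1norm δ := by
    convert abs_dotProduct_le_mul_l1norm hr δ using 2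
    rw [dotProduct_mulVec, ← mulVec_transpose]
    simp [dotProduct, Finset.sum_div, div_mul_eq_mul_div]
  have hexpand : sqnorm (ε - X *ᵥ δ) / n
      = sqnorm ε / n - 2 * ((ε ⬝ᵥ X *ᵥ δ) / n) + sqnorm (X *ᵥ δ) / n := by
    rw [sqnorm_sub]; ring
  linarith [(abs_le.1 hs).1, (abs_le.1 hcross).2]

end QuadraticForms

lemma dotProduct_mulVec_add_of_mulVec_eq_zero {n R : Type*} [Fintype n] [CommSemiring R]
    {S : Matrix n n R} (hS : S.IsSymm) {u : n → R} (hu : S *ᵥ u = 0) (w : n → R) :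
    (w + u) ⬝ᵥ S *ᵥ (w + u) = w ⬝ᵥ S *ᵥ w := by
  rw [mulVec_add, hu, add_zero, add_dotProduct, dotProduct_mulVec u, ← mulVec_transpose, hS.eq,
    hu, zero_dotProduct, add_zero]

lemma sub_dotProduct_eq_zero_of_forall_sqnorm_le {m : ℕ} {S : Matrix (Fin m) (Fin m) ℝ}
    {ρ x p : Fin m → ℝ} (hp : S *ᵥ p = ρ)
    (hmin : ∀ β, S *ᵥ β = ρ → sqnorm (x - p) ≤ sqnorm (x - β)) {v : Fin m → ℝ}
    (hv : S *ᵥ v = 0) : (x - p) ⬝ᵥ v = 0 := by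
  set c := (x - p) ⬝ᵥ v
  set Q := sqnorm v
  have hQ : 0 ≤ Q := sqnorm_nonneg v
  -- moving `p` by `c / (Q + 1)` along the kernel direction `v` would bring it closer to `x`
  have h := hmin (p + (c / (Q + 1)) • v) <| by
    rw [mulVec_add, mulVec_smul, hv, smul_zero, add_zero, hp]
  rw [← sub_sub, sqnorm_sub (x - p), sqnorm_smul, dotProduct_smul, smul_eq_mul] at h
  have hc : c ^ 2 * (Q + 2) ≤ 0 := by
    field_simp at h
    nlinarith
  nlinarith [sq_nonneg c]

lemma _root_.Matrix.IsHermitian.mul_dotProduct_self_le_of_orthogonal_ker {n : Type*} [Fintype n]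
    [DecidableEq n] {S : Matrix n n ℝ} (hS : S.IsHermitian) {c : ℝ}
    (hc : ∀ i, hS.eigenvalues i ≠ 0 → c ≤ hS.eigenvalues i) {w : n → ℝ}
    (hw : ∀ v, S *ᵥ v = 0 → w ⬝ᵥ v = 0) : c * (w ⬝ᵥ w) ≤ w ⬝ᵥ S *ᵥ w := by
  set μ := hS.eigenvalues
  set U := hS.eigenvectorUnitary
  -- the coordinates of `w` in the orthonormal eigenbasis
  set z := star (U : Matrix n n ℝ) *ᵥ w
  have hUz : (U : Matrix n n ℝ) *ᵥ z = w := by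
    rw [mulVec_mulVec, Unitary.mul_star_self_of_mem U.2, one_mulVec]
  have hdot : ∀ v, w ⬝ᵥ (U : Matrix n n ℝ) *ᵥ v = z ⬝ᵥ v := by
    intro v
    rw [dotProduct_mulVec, ← mulVec_transpose, ← conjTranspose_eq_transpose_of_trivial,
      ← star_eq_conjTranspose]
  have hself : w ⬝ᵥ w = ∑ i, z i ^ 2 := by
    conv_lhs => arg 2; rw [← hUz]
    rw [hdot]
    simp [dotProduct, sq]
  have hquad : w ⬝ᵥ S *ᵥ w = ∑ i, μ i * z i ^ 2 := by
    have hS' : S = (U : Matrix n n ℝ) * diagonal μ * star (U : Matrix n n ℝ) := by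
      simpa using hS.spectral_theorem
    rw [hS', ← mulVec_mulVec, ← mulVec_mulVec, hdot]
    simp [dotProduct, mulVec_diagonal, sq, mul_left_comm, z]
  have hker : ∀ i, μ i = 0 → z i = 0 := by
    intro i hi
    rw [← dotProduct_single_one z i, ← hdot, hS.eigenvectorUnitary_mulVec, hw]
    rw [hS.mulVec_eigenvectorBasis, show hS.eigenvalues i = 0 from hi, zero_smul]
  rw [hself, hquad, Finset.mul_sum]
  refine Finset.sum_le_sum fun i _ => ?_
  by_cases hi : μ i = 0
  · simp [hker i hi]
  · exact mul_le_mul_of_nonneg_right (hc i hi) (sq_nonneg _)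

lemma _root_.Matrix.IsHermitian.mem_range_eigenvalues {n : Type*} [Fintype n] [DecidableEq n]
    {S : Matrix n n ℝ} (hS : S.IsHermitian) {c : ℝ} {v : n → ℝ} (hv : v ≠ 0)
    (h : S *ᵥ v = c • v) : c ∈ Set.range hS.eigenvalues := by
  rw [← hS.spectrum_real_eq_range_eigenvalues, ← spectrum_toLin']
  exact Module.End.HasEigenvalue.mem_spectrum
    (Module.End.hasEigenvalue_of_hasEigenvector ⟨Module.End.mem_eigenspace_iff.mpr h, hv⟩)

section LamMinPos

variable {m : ℕ} {S : Matrix (Fin m) (Fin m) ℝ}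

lemma nonzero_eigenvalues_subset_range_eigenvalues (hS : S.IsHermitian) :
    {c : ℝ | c ≠ 0 ∧ ∃ v : Fin m → ℝ, v ≠ 0 ∧ S *ᵥ v = c • v} ⊆ Set.range hS.eigenvalues :=
  fun _ ⟨_, _, hv, h⟩ => hS.mem_range_eigenvalues hv h

lemma lamMinPos_le_eigenvalues (hS : S.IsHermitian) {i : Fin m} (hi : hS.eigenvalues i ≠ 0) :
    lamMinPos S ≤ hS.eigenvalues i :=
  csInf_le ((Set.finite_range _).subset (nonzero_eigenvalues_subset_range_eigenvalues hS)).bddBelow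
    ⟨hi, _, (WithLp.ofLp_eq_zero 2).ne.2 (hS.eigenvectorBasis.orthonormal.ne_zero i),
      hS.mulVec_eigenvectorBasis i⟩

lemma lamMinPos_pos (hS : S.PosSemidef) (hne : S ≠ 0) : 0 < lamMinPos S := by
  obtain ⟨v, c, hc, hv, h⟩ := hS.1.exists_eigenvector_of_ne_zero hne
  have hmem : lamMinPos S ∈ {c : ℝ | c ≠ 0 ∧ ∃ v : Fin m → ℝ, v ≠ 0 ∧ S *ᵥ v = c • v} :=
    Set.Nonempty.csInf_mem ⟨c, hc, v, hv, h⟩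
      ((Set.finite_range _).subset (nonzero_eigenvalues_subset_range_eigenvalues hS.1))
  obtain ⟨i, hi⟩ := nonzero_eigenvalues_subset_range_eigenvalues hS.1 hmem
  exact hi ▸ (hS.eigenvalues_nonneg i).lt_of_ne' (hi ▸ hmem.1)

lemma lamMinPos_mul_sqnorm_le (hS : S.PosSemidef) {w : Fin m → ℝ}
    (hw : ∀ v, S *ᵥ v = 0 → w ⬝ᵥ v = 0) : lamMinPos S * sqnorm w ≤ w ⬝ᵥ S *ᵥ w := by
  rw [sqnorm_eq_dotProduct]
  exact hS.1.mul_dotProduct_self_le_of_orthogonal_ker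
    (fun _ hi => lamMinPos_le_eigenvalues hS.1 hi) hw

end LamMinPos

section ElasticNet

variable {m : ℕ}

noncomputable def elasticNet (α : ℝ) (β : Fin m → ℝ) : ℝ := l1norm β + α / 2 * sqnorm β

lemma nonneg_of_forall_add_mul_nonneg {D K : ℝ} (h : ∀ t : ℝ, 0 < t → t ≤ 1 → 0 ≤ D + t * K) :
    0 ≤ D := by
  have hlim : Tendsto (fun t => D + t * K) (𝓝[>] 0) (𝓝 D) := by
    have hcont : Continuous fun t : ℝ => D + t * K := by fun_prop
    simpa using (hcont.tendsto 0).mono_left nhdsWithin_le_nhds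
  refine ge_of_tendsto hlim ?_
  filter_upwards [Ioo_mem_nhdsGT one_pos] with t ht using h t ht.1 ht.2.le

lemma elasticNet_add_le_of_forall_segment {α : ℝ} {x p : Fin m → ℝ}
    (hmin : ∀ t : ℝ, 0 < t → t ≤ 1 → elasticNet α x ≤ elasticNet α (x + t • (p - x))) :
    elasticNet α x + α / 2 * sqnorm (p - x) ≤ elasticNet α p := by
  set u := p - x
  -- an upper bound for the one-sided derivative of `elasticNet α` at `x` in the direction `u`
  set D := l1norm p - l1norm x + α * (x ⬝ᵥ u)
  have hseg : ∀ t : ℝ, 0 < t → t ≤ 1 → 0 ≤ D + t * (α / 2 * sqnorm u) := by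
    intro t ht₀ ht₁
    have h := hmin t ht₀ ht₁
    have hl1 := l1norm_add_smul_sub_le ht₀.le ht₁ x p
    rw [elasticNet, elasticNet, sqnorm_add, dotProduct_smul, sqnorm_smul, smul_eq_mul] at h
    refine (mul_nonneg_iff_of_pos_left ht₀).1 ?_
    linear_combination h + hl1
  have hp : elasticNet α p = elasticNet α x + D + α / 2 * sqnorm u := by
    have hsq : sqnorm p = sqnorm x + 2 * (x ⬝ᵥ u) + sqnorm u := by
      rw [← sqnorm_add, add_sub_cancel]
    rw [elasticNet, elasticNet, hsq]
    ring
  linarith [nonneg_of_forall_add_mul_nonneg hseg]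

lemma elasticNet_sub_le {α : ℝ} (hα : 0 ≤ α) (a w : Fin m → ℝ) :
    elasticNet α (a - w) ≤ elasticNet α a + l1norm w + α / 2 * (2 * |a ⬝ᵥ w| + sqnorm w) := by
  have hip : α / 2 * (-(2 * (a ⬝ᵥ w))) ≤ α / 2 * (2 * |a ⬝ᵥ w|) :=
    mul_le_mul_of_nonneg_left (by linarith [neg_abs_le (a ⬝ᵥ w)]) (by positivity)
  rw [elasticNet, elasticNet, sqnorm_sub]
  linarith [l1norm_sub_le a w]

end ElasticNet

lemma dotProduct_mulVec_sub_le_of_residual {m N : ℕ} (X : Matrix (Fin N) (Fin m) ℝ)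
    (S : Matrix (Fin m) (Fin m) ℝ) (ε : Fin N → ℝ) {x x' : Fin m → ℝ} {n q r s σ2 M : ℝ}
    (hq₀ : 0 ≤ q) (hr₀ : 0 ≤ r) (hq : ∀ i j, |(∑ k, X k i * X k j) / n - S i j| ≤ q)
    (hr : ∀ j, |(Xᵀ *ᵥ ε) j / n| ≤ r) (hs : |sqnorm ε / n - σ2| ≤ s)
    (hres : sqnorm (X *ᵥ x' + ε - X *ᵥ x) / n ≤ σ2 + s) (hx : l1norm x ≤ M)
    (hx' : l1norm x' ≤ M) :
    (x - x') ⬝ᵥ S *ᵥ (x - x') ≤ 4 * M * r + 2 * s + 4 * M ^ 2 * q := by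
  have hδ : l1norm (x - x') ≤ 2 * M := (l1norm_sub_le _ _).trans (by linarith)
  have hresδ : ε - X *ᵥ (x - x') = X *ᵥ x' + ε - X *ᵥ x := by rw [mulVec_sub]; abel
  have hXδ := sqnorm_mulVec_div_le X ε (x - x') (hresδ ▸ hres) hs hr
  have hSX := dotProduct_mulVec_le_sqnorm_mulVec_div X S hq (x - x')
  have hr' := mul_le_mul_of_nonneg_left hδ hr₀
  have hq' := mul_le_mul_of_nonneg_left (pow_le_pow_left₀ (l1norm_nonneg _) hδ 2) hq₀
  linarith

lemma lamMinPos_mul_sqnorm_sub_le {m : ℕ} {S : Matrix (Fin m) (Fin m) ℝ} (hS : S.PosSemidef)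
    {ρ x p x' : Fin m → ℝ} (hp : S *ᵥ p = ρ)
    (hmin : ∀ β, S *ᵥ β = ρ → sqnorm (x - p) ≤ sqnorm (x - β)) (hx' : S *ᵥ x' = ρ) :
    lamMinPos S * sqnorm (x - p) ≤ (x - x') ⬝ᵥ S *ᵥ (x - x') := by
  have hker : S *ᵥ (p - x') = 0 := by rw [mulVec_sub, hp, hx', sub_self]
  rw [← sub_add_sub_cancel x p x',
    dotProduct_mulVec_add_of_mulVec_eq_zero (isHermitian_iff_isSymm.1 hS.1) hker]
  exact lamMinPos_mul_sqnorm_le hS fun _ hv => sub_dotProduct_eq_zero_of_forall_sqnorm_le hp hmin hv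

lemma sqnorm_sub_le_of_elasticNet_le {m : ℕ} {α M v : ℝ} (hα : 0 < α) {x p x' : Fin m → ℝ}
    (hgrowth : elasticNet α x' + α / 2 * sqnorm (p - x') ≤ elasticNet α p)
    (hx : elasticNet α x ≤ elasticNet α x') (hxM : l1norm x ≤ M) (hxp : sqnorm (x - p) ≤ v) :
    sqnorm (p - x') ≤ 2 * (√m / α + M) * √v + v := by
  have hp := elasticNet_sub_le hα.le x (x - p)
  rw [sub_sub_cancel] at hp
  have hl1 : l1norm (x - p) ≤ √m * √v := (l1norm_le_sqrt_mul_sqrt _).trans (by gcongr)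
  have hip : |x ⬝ᵥ (x - p)| ≤ M * √v :=
    (abs_dotProduct_le_l1norm_mul_sqrt _ _).trans
      (mul_le_mul hxM (Real.sqrt_le_sqrt hxp) (Real.sqrt_nonneg _) ((l1norm_nonneg x).trans hxM))
  have hquad : α / 2 * (2 * |x ⬝ᵥ (x - p)| + sqnorm (x - p)) ≤ α / 2 * (2 * (M * √v) + v) := by
    gcongr
  have hrhs : α / 2 * (2 * (√m / α + M) * √v + v) = √m * √v + α / 2 * (2 * (M * √v) + v) := by
    field_simp
    ring
  refine le_of_mul_le_mul_left ?_ (by positivity : 0 < α / 2)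
  linarith

theorem statement12_general (dbar N : ℕ)
    (S : Matrix (Fin dbar) (Fin dbar) ℝ) (hSpsd : S.PosSemidef) (hSne : S ≠ 0)
    (ρ : Fin dbar → ℝ)
    (α : ℝ) (hα : 0 < α)
    (βstar : Fin dbar → ℝ)
    (hβstarFeas : S.mulVec βstar = ρ)
    (hβstarMin : ∀ β : Fin dbar → ℝ, S.mulVec β = ρ →
      l1norm βstar + α / 2 * sqnorm βstar ≤ l1norm β + α / 2 * sqnorm β)
    (X : Matrix (Fin N) (Fin dbar) ℝ) (ε : Fin N → ℝ) (y : Fin N → ℝ)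
    (hy : y = X.mulVec βstar + ε)
    (n : ℝ)
    (qn rn sn σ2 : ℝ) (hqn0 : 0 ≤ qn) (hrn0 : 0 ≤ rn)
    (hqn : ∀ i j, |(∑ k, X k i * X k j) / n - S i j| ≤ qn)
    (hrn : ∀ j, |X.transpose.mulVec ε j / n| ≤ rn)
    (hsn : |sqnorm ε / n - σ2| ≤ sn)
    (M : ℝ) (hM : l1norm βstar ≤ M)
    (βhat : Fin dbar → ℝ)
    (hβhatFeas : sqnorm (y - X.mulVec βhat) / n ≤ σ2 + sn ∧ l1norm βhat ≤ M)
    (hβhatMin : ∀ β : Fin dbar → ℝ,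
      sqnorm (y - X.mulVec β) / n ≤ σ2 + sn → l1norm β ≤ M →
      l1norm βhat + α / 2 * sqnorm βhat ≤ l1norm β + α / 2 * sqnorm β)
    (βhatP : Fin dbar → ℝ)
    (hβhatPFeas : S.mulVec βhatP = ρ)
    (hβhatPProj : ∀ β : Fin dbar → ℝ, S.mulVec β = ρ →
      sqnorm (βhat - βhatP) ≤ sqnorm (βhat - β)) :
    sqnorm (βhatP - βstar)
      ≤ 2 * (Real.sqrt dbar / α + M)
          * Real.sqrt ((4 * M * rn + 2 * sn + 4 * M ^ 2 * qn) / lamMinPos S)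
        + (4 * M * rn + 2 * sn + 4 * M ^ 2 * qn) / lamMinPos S := by
  have hw : sqnorm (βhat - βhatP) ≤ (4 * M * rn + 2 * sn + 4 * M ^ 2 * qn) / lamMinPos S := by
    rw [le_div_iff₀ (lamMinPos_pos hSpsd hSne), mul_comm]
    refine (lamMinPos_mul_sqnorm_sub_le hSpsd hβhatPFeas hβhatPProj hβstarFeas).trans ?_
    exact dotProduct_mulVec_sub_le_of_residual X S ε hqn0 hrn0 hqn hrn hsn
      (hy ▸ hβhatFeas.1) hβhatFeas.2 hM
  have hgrowth : elasticNet α βstar + α / 2 * sqnorm (βhatP - βstar) ≤ elasticNet α βhatP :=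
    elasticNet_add_le_of_forall_segment fun t _ _ => hβstarMin _ <| by
      rw [mulVec_add, mulVec_smul, mulVec_sub, hβhatPFeas, hβstarFeas, sub_self, smul_zero,
        add_zero]
  have hhat : elasticNet α βhat ≤ elasticNet α βstar :=
    hβhatMin βstar (by rw [hy, add_sub_cancel_left]; linarith [(abs_le.1 hsn).2]) hM
  exact sqnorm_sub_le_of_elasticNet_le hα hgrowth hhat hβhatFeas.2 hw

/-- For the constrained elastic-net estimator `β̂^{(α)}` and its projection
`β̂_P` onto `{β : Σβ = ρ}`, one has `‖β̂_P − β*^{(α)}‖² ≤ 2(√d̄/α + M)√vₙ + vₙ`. -/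
theorem statement12 (dbar N : ℕ)
    (S : Matrix (Fin dbar) (Fin dbar) ℝ) (hSpsd : S.PosSemidef) (hSne : S ≠ 0)
    (hSmin : ∃ v : Fin dbar → ℝ, v ≠ 0 ∧ S.mulVec v = 0)
    (ρ : Fin dbar → ℝ) (hρ : ∃ w, S.mulVec w = ρ)
    (α : ℝ) (hα : 0 < α)
    (βstar : Fin dbar → ℝ)
    (hβstarFeas : S.mulVec βstar = ρ)
    (hβstarMin : ∀ β : Fin dbar → ℝ, S.mulVec β = ρ →
      l1norm βstar + α / 2 * sqnorm βstar ≤ l1norm β + α / 2 * sqnorm β)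
    (X : Matrix (Fin N) (Fin dbar) ℝ) (ε : Fin N → ℝ) (y : Fin N → ℝ)
    (hy : y = X.mulVec βstar + ε)
    (n : ℝ) (hn : 0 < n)
    (qn rn sn σ2 : ℝ) (hqn0 : 0 ≤ qn) (hrn0 : 0 ≤ rn) (hsn0 : 0 ≤ sn) (hσ20 : 0 ≤ σ2)
    (hqn : ∀ i j, |(∑ k, X k i * X k j) / n - S i j| ≤ qn)
    (hrn : ∀ j, |X.transpose.mulVec ε j / n| ≤ rn)
    (hsn : |sqnorm ε / n - σ2| ≤ sn)
    (M : ℝ) (hM : l1norm βstar ≤ M)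
    (βhat : Fin dbar → ℝ)
    (hβhatFeas : sqnorm (y - X.mulVec βhat) / n ≤ σ2 + sn ∧ l1norm βhat ≤ M)
    (hβhatMin : ∀ β : Fin dbar → ℝ,
      sqnorm (y - X.mulVec β) / n ≤ σ2 + sn → l1norm β ≤ M →
      l1norm βhat + α / 2 * sqnorm βhat ≤ l1norm β + α / 2 * sqnorm β)
    (βhatP : Fin dbar → ℝ)
    (hβhatPFeas : S.mulVec βhatP = ρ)
    (hβhatPProj : ∀ β : Fin dbar → ℝ, S.mulVec β = ρ →
      sqnorm (βhat - βhatP) ≤ sqnorm (βhat - β)) :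
    sqnorm (βhatP - βstar)
      ≤ 2 * (Real.sqrt dbar / α + M)
          * Real.sqrt ((4 * M * rn + 2 * sn + 4 * M ^ 2 * qn) / lamMinPos S)
        + (4 * M * rn + 2 * sn + 4 * M ^ 2 * qn) / lamMinPos S :=
  statement12_general dbar N S hSpsd hSne ρ α hα βstar hβstarFeas hβstarMin X ε y hy n qn rn sn σ2
    hqn0 hrn0 hqn hrn hsn M hM βhat hβhatFeas hβhatMin βhatP hβhatPFeas hβhatPProj

end Statement12
end

section
/- Let Z ∈ ℝ^{N×D}, β* ∈ ℝ^D, ε ∈ ℝ^N, y = Zβ* + ε, and n > 0. Assume β* has at most k ≥ 1 nonzero entries, and that the sample Gram matrix ZᵀZ/n satisfies the restricted eigenvalue condition RE(γ, δ) with γ > 0, δ > 0 and kδ ≤ γ/32. Let β̂ be any minimizer over ℝ^D of (1/n)‖y − Zβ‖² + λ‖β‖₁ with λ ≥ 4‖Zᵀε/n‖_∞ and λ > 0. Then: (i) ‖β̂ − β*‖₁ ≤ 64 k λ / γ; (ii) ‖β̂ − β*‖ ≤ 16 √k λ / γ; and (iii) (1/n)‖Z(β̂ − β*)‖² ≤ 128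 k λ² / γ. -/
namespace Statement14

/-- The ℓ₁-norm of a vector. -/
noncomputable def l1norm {m : ℕ} (v : Fin m → ℝ) : ℝ := ∑ i, |v i|

/-- The squared Euclidean norm of a vector. -/
def sqnorm {m : ℕ} (v : Fin m → ℝ) : ℝ := ∑ i, (v i) ^ 2

lemma sqnorm_nonneg {m : ℕ} (v : Fin m → ℝ) : 0 ≤ sqnorm v :=
  Finset.sum_nonneg fun _ _ => sq_nonneg _

lemma sqnorm_sub {m : ℕ} (u w : Fin m → ℝ) :
    sqnorm (u - w) = sqnorm u - 2 * (∑ i, u i * w i) + sqnorm w := by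
  simp only [sqnorm, Finset.mul_sum, ← Finset.sum_add_distrib, ← Finset.sum_sub_distrib,
    Pi.sub_apply]
  apply Finset.sum_congr rfl
  intros; ring

set_option maxHeartbeats 1000000 in
/-- Deterministic fast-rate bounds for the lasso under a restricted eigenvalue
condition `RE(γ, δ)` on the sample Gram matrix `ZᵀZ/n` with `kδ ≤ γ/32`: for
`λ ≥ 4‖Zᵀε/n‖_∞` one has the ℓ₁, ℓ₂ and in-sample prediction error bounds. -/
theorem statement14 (D N : ℕ)
    (Z : Matrix (Fin N) (Fin D) ℝ) (βstar : Fin D → ℝ) (ε : Fin N → ℝ) (y : Fin N → ℝ)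
    (hy : y = Z.mulVec βstar + ε)
    (n : ℝ) (hn : 0 < n)
    (k : ℕ) (hk : 1 ≤ k)
    (hsparse : (Finset.univ.filter fun j => βstar j ≠ 0).card ≤ k)
    (γ δ : ℝ) (hγ : 0 < γ) (hδ : 0 < δ) (hkδ : (k : ℝ) * δ ≤ γ / 32)
    (hRE : ∀ v : Fin D → ℝ,
      γ * sqnorm v - δ * (l1norm v) ^ 2 ≤ sqnorm (Z.mulVec v) / n)
    (lam : ℝ) (hlam0 : 0 < lam)
    (hlam : ∀ j, 4 * |Z.transpose.mulVec ε j / n| ≤ lam)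
    (βhat : Fin D → ℝ)
    (hβhatMin : ∀ β : Fin D → ℝ,
      sqnorm (y - Z.mulVec βhat) / n + lam * l1norm βhat
        ≤ sqnorm (y - Z.mulVec β) / n + lam * l1norm β) :
    l1norm (βhat - βstar) ≤ 64 * k * lam / γ ∧
    Real.sqrt (sqnorm (βhat - βstar)) ≤ 16 * Real.sqrt k * lam / γ ∧
    sqnorm (Z.mulVec (βhat - βstar)) / n ≤ 128 * k * lam ^ 2 / γ := by
  classical
  set h : Fin D → ℝ := βhat - βstar with hhdef
  set c : Fin D → ℝ := Z.transpose.mulVec ε with hcdef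
  -- bound on correlations
  have hcb : ∀ j, |c j| ≤ lam * n / 4 := by
    intro j
    have h1 := hlam j
    rw [abs_div, abs_of_pos hn] at h1
    have h1' : |c j| / n ≤ lam / 4 := by linarith
    have h2 := (div_le_iff₀ hn).mp h1'
    linarith
  -- inner product identity
  have hT : (∑ i, ε i * Z.mulVec h i) = ∑ j, c j * h j := by
    simp only [hcdef, Matrix.mulVec, Matrix.transpose_apply, dotProduct,
      Finset.mul_sum, Finset.sum_mul]
    rw [Finset.sum_comm]
    exact Finset.sum_congr rfl fun j _ => Finset.sum_congr rfl fun i _ => by ring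
  -- bound on the inner product
  have hTb : (∑ j, c j * h j) ≤ lam * n / 4 * l1norm h := by
    rw [l1norm, Finset.mul_sum]
    refine Finset.sum_le_sum fun j _ => ?_
    calc c j * h j ≤ |c j * h j| := le_abs_self _
      _ = |c j| * |h j| := abs_mul _ _
      _ ≤ lam * n / 4 * |h j| := mul_le_mul_of_nonneg_right (hcb j) (abs_nonneg _)
  -- basic inequality
  have hy1 : y - Z.mulVec βstar = ε := by rw [hy]; ext i; simp
  have hy2 : y - Z.mulVec βhat = ε - Z.mulVec h := by
    rw [hhdef, Matrix.mulVec_sub, hy]; ext i; simp; ring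
  have hbasic := hβhatMin βstar
  rw [hy1, hy2, sqnorm_sub] at hbasic
  have hkey : sqnorm (Z.mulVec h) / n
      ≤ lam / 2 * l1norm h + lam * (l1norm βstar - l1norm βhat) := by
    have e1 : (sqnorm ε - 2 * (∑ i, ε i * Z.mulVec h i) + sqnorm (Z.mulVec h)) / n
        = sqnorm ε / n - 2 * (∑ i, ε i * Z.mulVec h i) / n + sqnorm (Z.mulVec h) / n := by
      ring
    rw [e1, hT] at hbasic
    have e2 : 2 * (∑ j, c j * h j) / n ≤ lam / 2 * l1norm h := by
      rw [div_le_iff₀ hn]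
      nlinarith [hTb]
    linarith
  -- support decomposition
  set S := Finset.univ.filter (fun j => βstar j ≠ 0) with hSdef
  set a := ∑ j ∈ S, |h j| with hadef
  set b := ∑ j ∈ Finset.univ.filter (fun j => ¬ βstar j ≠ 0), |h j| with hbdef
  have ha0 : 0 ≤ a := Finset.sum_nonneg fun _ _ => abs_nonneg _
  have hb0 : 0 ≤ b := Finset.sum_nonneg fun _ _ => abs_nonneg _
  have hab : l1norm h = a + b :=
    (Finset.sum_filter_add_sum_filter_not Finset.univ (fun j => βstar j ≠ 0) _).symm
  have hsupp : l1norm βstar - l1norm βhat ≤ a - b := by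
    have h1 : l1norm βstar = ∑ j ∈ S, |βstar j| := by
      rw [l1norm, ← Finset.sum_filter_add_sum_filter_not Finset.univ (fun j => βstar j ≠ 0)]
      have hz : ∑ j ∈ Finset.univ.filter (fun j => ¬ βstar j ≠ 0), |βstar j| = 0 := by
        refine Finset.sum_eq_zero fun j hj => ?_
        simp only [Finset.mem_filter, not_not] at hj
        simp [hj.2]
      rw [hz, add_zero]
    have h2 : l1norm βhat = ∑ j ∈ S, |βhat j|
        + ∑ j ∈ Finset.univ.filter (fun j => ¬ βstar j ≠ 0), |βhat j| :=
      (Finset.sum_filter_add_sum_filter_not Finset.univ (fun j => βstar j ≠ 0) _).symm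
    have h3 : ∑ j ∈ Finset.univ.filter (fun j => ¬ βstar j ≠ 0), |βhat j| = b := by
      refine Finset.sum_congr rfl fun j hj => ?_
      simp only [Finset.mem_filter, not_not] at hj
      simp [hhdef, hj.2]
    have h4 : ∑ j ∈ S, |βstar j| - ∑ j ∈ S, |βhat j| ≤ a := by
      rw [hadef, ← Finset.sum_sub_distrib]
      refine Finset.sum_le_sum fun j _ => ?_
      have h5 := abs_sub_abs_le_abs_sub (βstar j) (βhat j)
      have e : |βstar j - βhat j| = |h j| := by
        rw [hhdef]; simp [Pi.sub_apply, abs_sub_comm]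
      linarith [e ▸ h5]
    rw [h1, h2, h3]; linarith
  -- prediction error bound
  have hA0 : 0 ≤ sqnorm (Z.mulVec h) / n := div_nonneg (sqnorm_nonneg _) hn.le
  have hA : sqnorm (Z.mulVec h) / n ≤ 3 * lam / 2 * a - lam / 2 * b := by
    rw [hab] at hkey
    have := mul_le_mul_of_nonneg_left hsupp hlam0.le
    nlinarith
  have hba : b ≤ 3 * a := by nlinarith [hA0, hA, hlam0]
  have hL1a : l1norm h ≤ 4 * a := by rw [hab]; linarith
  -- Cauchy–Schwarz on the support
  have hcs : a ^ 2 ≤ (k : ℝ) * sqnorm h := by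
    have h1 := Finset.sum_mul_sq_le_sq_mul_sq S (fun _ => (1 : ℝ)) (fun j => |h j|)
    simp only [one_mul, one_pow] at h1
    have h2 : ∑ j ∈ S, |h j| ^ 2 ≤ sqnorm h := by
      rw [sqnorm]
      have h2' := Finset.sum_le_sum_of_subset_of_nonneg (Finset.subset_univ S)
        (fun j _ _ => sq_nonneg (|h j|))
      simpa [sq_abs] using h2'
    have h3 : (S.card : ℝ) ≤ (k : ℝ) := by exact_mod_cast hsparse
    have h4 : (∑ _j ∈ S, (1 : ℝ)) = (S.card : ℝ) := by simp
    rw [h4] at h1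
    nlinarith [Finset.sum_nonneg (fun j (_ : j ∈ S) => sq_nonneg (|h j|)), sqnorm_nonneg h]
  -- RE condition gives curvature
  have hRE' := hRE h
  have hL10 : 0 ≤ l1norm h := Finset.sum_nonneg fun _ _ => abs_nonneg _
  have hL1sq : (l1norm h) ^ 2 ≤ 16 * (k : ℝ) * sqnorm h := by
    have h5 : (l1norm h) ^ 2 ≤ (4 * a) ^ 2 := by
      apply pow_le_pow_left₀ hL10 hL1a
    nlinarith [hcs]
  have hk1 : (1 : ℝ) ≤ (k : ℝ) := by exact_mod_cast hk
  have hcurv : γ / 2 * sqnorm h ≤ sqnorm (Z.mulVec h) / n := by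
    nlinarith [hRE', mul_le_mul_of_nonneg_left hL1sq hδ.le,
      mul_le_mul_of_nonneg_right hkδ (sqnorm_nonneg h)]
  -- ℓ₂ bound
  set s := Real.sqrt (sqnorm h) with hsdef
  have hs0 : 0 ≤ s := Real.sqrt_nonneg _
  have hs2 : s ^ 2 = sqnorm h := Real.sq_sqrt (sqnorm_nonneg h)
  have hsk : a ≤ Real.sqrt k * s := by
    have e : a = Real.sqrt (a ^ 2) := (Real.sqrt_sq ha0).symm
    rw [e, hsdef, ← Real.sqrt_mul (Nat.cast_nonneg k)]
    exact Real.sqrt_le_sqrt hcs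
  have hsqrtk0 : (0 : ℝ) ≤ Real.sqrt k := Real.sqrt_nonneg _
  have hAa : sqnorm (Z.mulVec h) / n ≤ 3 * lam / 2 * (Real.sqrt k * s) := by
    have h6 := mul_le_mul_of_nonneg_left hsk (by positivity : (0:ℝ) ≤ 3 * lam / 2)
    nlinarith [mul_nonneg hlam0.le hb0]
  have hsγ : s * γ ≤ 3 * Real.sqrt k * lam := by
    rcases eq_or_lt_of_le hs0 with hz | hz
    · rw [← hz, zero_mul]; positivity
    · have h7 : γ / 2 * s ^ 2 ≤ 3 * lam / 2 * (Real.sqrt k * s) := by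
        rw [hs2]; linarith [hcurv, hAa]
      nlinarith [hz]
  have hkk : Real.sqrt k * Real.sqrt k = (k : ℝ) :=
    Real.mul_self_sqrt (Nat.cast_nonneg k)
  refine ⟨?_, ?_, ?_⟩
  · rw [le_div_iff₀ hγ]
    calc l1norm h * γ ≤ 4 * (Real.sqrt k * s) * γ := by
          have := mul_le_mul_of_nonneg_left hsk (by norm_num : (0:ℝ) ≤ 4)
          nlinarith [hL1a]
      _ = 4 * Real.sqrt k * (s * γ) := by ring
      _ ≤ 4 * Real.sqrt k * (3 * Real.sqrt k * lam) :=
          mul_le_mul_of_nonneg_left hsγ (by positivity)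
      _ = 12 * (Real.sqrt k * Real.sqrt k) * lam := by ring
      _ = 12 * k * lam := by rw [hkk]
      _ ≤ 64 * k * lam := by nlinarith [hk1, hlam0]
  · rw [le_div_iff₀ hγ]
    have : (0:ℝ) ≤ Real.sqrt k * lam := mul_nonneg hsqrtk0 hlam0.le
    nlinarith [hsγ]
  · rw [le_div_iff₀ hγ]
    calc sqnorm (Z.mulVec h) / n * γ ≤ 3 * lam / 2 * (Real.sqrt k * s) * γ :=
          mul_le_mul_of_nonneg_right hAa hγ.le
      _ = 3 * lam / 2 * Real.sqrt k * (s * γ) := by ring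
      _ ≤ 3 * lam / 2 * Real.sqrt k * (3 * Real.sqrt k * lam) :=
          mul_le_mul_of_nonneg_left hsγ (by positivity)
      _ = 9 / 2 * (Real.sqrt k * Real.sqrt k) * lam ^ 2 := by ring
      _ = 9 / 2 * k * lam ^ 2 := by rw [hkk]
      _ ≤ 128 * k * lam ^ 2 := by nlinarith [hk1, hlam0]

end Statement14
end

section
/- Let Z ∈ ℝ^{N×D}, β* ∈ ℝ^D, ε ∈ ℝ^N, y = Zβ* + ε, and n > 0. Let J := { j : β*_j ≠ 0 } be the support of β*, and let β̂ be any minimizer over ℝ^D of (1/n)‖y − Zβ‖² + λ‖β‖₁ with λ ≥ 4‖Zᵀε/n‖_∞ and λ > 0. Then the error vector v := β̂ − β* satisfies the cone condition ‖v_{J^c}‖₁ ≤ 3‖v_J‖₁, where v_J and v_{J^c} denote the restrictions of v to the coordinates in J and its complement. -/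
namespace Statement15

/-- The ℓ₁-norm of a vector. -/
noncomputable def l1norm {m : ℕ} (v : Fin m → ℝ) : ℝ := ∑ i, |v i|

/-- The squared Euclidean norm of a vector. -/
def sqnorm {m : ℕ} (v : Fin m → ℝ) : ℝ := ∑ i, (v i) ^ 2

/-- Cone condition for the lasso error vector: with `λ ≥ 4‖Zᵀε/n‖_∞`, `λ > 0`,
the error `v = β̂ − β*` satisfies `‖v_{Jᶜ}‖₁ ≤ 3‖v_J‖₁`, where `J` is the support of `β*`. -/
theorem statement15 (D N : ℕ)
    (Z : Matrix (Fin N) (Fin D) ℝ) (βstar : Fin D → ℝ) (ε : Fin N → ℝ) (y : Fin N → ℝ)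
    (hy : y = Z.mulVec βstar + ε)
    (n : ℝ) (hn : 0 < n)
    (lam : ℝ) (hlam0 : 0 < lam)
    (hlam : ∀ j, 4 * |Z.transpose.mulVec ε j / n| ≤ lam)
    (βhat : Fin D → ℝ)
    (hβhatMin : ∀ β : Fin D → ℝ,
      sqnorm (y - Z.mulVec βhat) / n + lam * l1norm βhat
        ≤ sqnorm (y - Z.mulVec β) / n + lam * l1norm β) :
    ∑ j ∈ Finset.univ.filter (fun j => βstar j = 0), |βhat j - βstar j|
      ≤ 3 * ∑ j ∈ Finset.univ.filter (fun j => βstar j ≠ 0), |βhat j - βstar j| := by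
  set v : Fin D → ℝ := fun j => βhat j - βstar j with hv
  have h1 : y - Z.mulVec βhat = ε - Z.mulVec v := by
    funext i
    have : Z.mulVec βhat i = Z.mulVec βstar i + Z.mulVec v i := by
      have hβ : βstar + v = βhat := by funext j; simp [hv]
      rw [← hβ, Matrix.mulVec_add]; rfl
    simp [hy, this, Pi.sub_apply, Pi.add_apply]
  have h2 : y - Z.mulVec βstar = ε := by rw [hy]; funext i; simp
  set T : ℝ := ∑ j, Z.transpose.mulVec ε j * v j with hT
  have hexp : sqnorm (ε - Z.mulVec v) = sqnorm ε - 2 * T + sqnorm (Z.mulVec v) := by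
    have hTi : T = ∑ i, ε i * Z.mulVec v i := by
      rw [hT]
      simp only [Matrix.mulVec, dotProduct, Matrix.transpose_apply,
        Finset.sum_mul, Finset.mul_sum]
      rw [Finset.sum_comm]
      congr 1; funext i; congr 1; funext j; ring
    rw [hTi]
    simp only [sqnorm, Pi.sub_apply, Finset.mul_sum, ← Finset.sum_add_distrib,
      ← Finset.sum_sub_distrib]
    congr 1; funext i; ring
  have key := hβhatMin βstar
  rw [h1, h2, hexp] at key
  have hzv : 0 ≤ sqnorm (Z.mulVec v) := Finset.sum_nonneg fun i _ => sq_nonneg _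
  -- bound T/n
  have hTbound : T / n ≤ (lam / 4) * l1norm v := by
    have : T / n = ∑ j, (Z.transpose.mulVec ε j / n) * v j := by
      rw [hT, Finset.sum_div]; congr 1; funext j; ring
    rw [this, l1norm, Finset.mul_sum]
    apply Finset.sum_le_sum
    intro j _
    calc (Z.transpose.mulVec ε j / n) * v j ≤ |Z.transpose.mulVec ε j / n| * |v j| := by
          calc _ ≤ |(Z.transpose.mulVec ε j / n) * v j| := le_abs_self _
          _ = _ := abs_mul _ _
      _ ≤ (lam / 4) * |v j| := by
          apply mul_le_mul_of_nonneg_right _ (abs_nonneg _)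
          linarith [hlam j]
  -- from key: lam * l1norm βhat ≤ 2*(T/n) + lam * l1norm βstar
  have hmain : lam * l1norm βhat ≤ (lam / 2) * l1norm v + lam * l1norm βstar := by
    have h3 : (sqnorm ε - 2 * T + sqnorm (Z.mulVec v)) / n
        = sqnorm ε / n - 2 * (T / n) + sqnorm (Z.mulVec v) / n := by ring
    rw [h3] at key
    have h4 : 0 ≤ sqnorm (Z.mulVec v) / n := div_nonneg hzv hn.le
    linarith
  -- split sums
  set S := Finset.univ.filter (fun j => βstar j ≠ 0) with hS
  set Sc := Finset.univ.filter (fun j => βstar j = 0) with hSc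
  set a := ∑ j ∈ S, |v j| with ha
  set b := ∑ j ∈ Sc, |v j| with hb
  set c := ∑ j ∈ S, |βstar j| with hc
  have hsplit : ∀ f : Fin D → ℝ, ∑ j, f j = (∑ j ∈ Sc, f j) + (∑ j ∈ S, f j) := by
    intro f
    rw [hSc, hS, Finset.sum_filter_add_sum_filter_not]
  have hlv : l1norm v = b + a := hsplit _
  have hlbs : l1norm βstar = c := by
    rw [l1norm, hsplit, hc]
    have : ∑ j ∈ Sc, |βstar j| = 0 := by
      apply Finset.sum_eq_zero
      intro j hj
      simp only [hSc, Finset.mem_filter] at hj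
      simp [hj.2]
    rw [this, zero_add]
  have hlbh : l1norm βhat = (∑ j ∈ S, |βhat j|) + b := by
    rw [l1norm, hsplit, hb]
    have : ∑ j ∈ Sc, |βhat j| = ∑ j ∈ Sc, |v j| := by
      apply Finset.sum_congr rfl
      intro j hj
      simp only [hSc, Finset.mem_filter] at hj
      simp [hv, hj.2]
    rw [this]; ring
  have htri : c ≤ (∑ j ∈ S, |βhat j|) + a := by
    rw [hc, ha, ← Finset.sum_add_distrib]
    apply Finset.sum_le_sum
    intro j _
    have := abs_sub_abs_le_abs_sub (βstar j) (βhat j)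
    have h5 : |βstar j - βhat j| = |v j| := by rw [hv]; rw [abs_sub_comm]
    linarith
  rw [hlv, hlbs, hlbh] at hmain
  -- conclude
  have : lam * (b - 3 * a) / 2 ≤ 0 := by nlinarith
  have hba : b ≤ 3 * a := by nlinarith
  exact hba
end Statement15
end
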